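/- arXiv:math/0511081 — 5 statements merged into one kernel-verified Lean document; each statement's English description precedes it below -/
import Mathlib

section
/- Let E be a Lie algebroid over M and π : M' → M a fibration. The set T^E M' = {(b, v') ∈ E × TM' : ρ_E(b) = Tπ(v')} is a vector bundle over M' of rank n + dim M' − dim M (where n = rank E), and it carries a Lie algebroid structure with anchor ρ_E^π(X∘π, U') = U' and bracket [[(X∘π, U'), (Y∘π, V')]]_E^π = ([[X,Y]]_E ∘ π, [U', V']) for sections X, Y of E and π-projectable vector fields U', V' projecting onto ρ_E(X), ρ_E(Y). -/
noncomputable section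

/-- Partial derivative in the `j`-th coordinate direction of a function on `ℝ^m`. -/
def pd {m : ℕ} (j : Fin m) (f : (Fin m → ℝ) → ℝ) (x : Fin m → ℝ) : ℝ :=
  fderiv ℝ f x (Pi.single j 1)

/-- A Lie algebroid of rank `k` over `M = ℝ^m` in coordinates (trivialized by a basis
`{e_a}` of sections): structure functions `ρ_a^i` (anchor) and `C_{ab}^g` (bracket),
smooth, antisymmetric, satisfying the structure equations expressing that the anchor
is bracket-compatible and that the Jacobi identity holds. -/
structure CoordLieAlgebroid (m k : ℕ) where
  ρ : (Fin m → ℝ) → Fin k → Fin m → ℝ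
  c : (Fin m → ℝ) → Fin k → Fin k → Fin k → ℝ
  smooth_ρ : ∀ a i, ContDiff ℝ (⊤ : ℕ∞) fun x => ρ x a i
  smooth_c : ∀ a b g, ContDiff ℝ (⊤ : ℕ∞) fun x => c x a b g
  c_antisymm : ∀ x a b g, c x a b g = - c x b a g
  anchor_compat : ∀ x a b i,
    (∑ j, (ρ x a j * pd j (fun x' => ρ x' b i) x - ρ x b j * pd j (fun x' => ρ x' a i) x))
      = ∑ g, c x a b g * ρ x g i
  jacobi : ∀ x a b g ν,
    ((∑ i, ρ x a i * pd i (fun x' => c x' b g ν) x) + ∑ μ', c x b g μ' * c x a μ' ν)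
      + ((∑ i, ρ x b i * pd i (fun x' => c x' g a ν) x) + ∑ μ', c x g a μ' * c x b μ' ν)
      + ((∑ i, ρ x g i * pd i (fun x' => c x' a b ν) x) + ∑ μ', c x a b μ' * c x g μ' ν)
      = 0

namespace Prolongation

variable {m s k : ℕ}

/-- Local model of a fibration `π : M' → M`: `M' = ℝ^m × ℝ^s`, `π = pr₁`. -/
abbrev MSpace (m : ℕ) := Fin m → ℝ
abbrev M'Space (m s : ℕ) := (Fin m → ℝ) × (Fin s → ℝ)

/-- The fibre of `T^E M' = {(b, v') ∈ E × TM' : ρ_E(b) = Tπ(v')}` over `p ∈ M'`: since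
`Tπ(v')` is forced to be `ρ_E(b)`, an element is determined by the coordinates `z^a` of
`b` and the vertical part `w` of `v'`. -/
abbrev ProFib' (k s : ℕ) := (Fin k → ℝ) × (Fin s → ℝ)

/-- Sections of `T^E M' → M'`. -/
abbrev Sec (m s k : ℕ) := M'Space m s → ProFib' k s

/-- The anchor `ρ_E^π(b, v') = v'` of the prolongation, as a tangent vector to `M'`. -/
def anchorVec' (L : CoordLieAlgebroid m k) (p : M'Space m s) (w : ProFib' k s) :
    (Fin m → ℝ) × (Fin s → ℝ) :=
  (fun i => ∑ a, w.1 a * L.ρ p.1 a i, w.2)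

/-- The anchor of a section applied, as a vector field on `M'`, to a function. -/
def secD' (L : CoordLieAlgebroid m k) (ξ : Sec m s k) (F : M'Space m s → ℝ)
    (p : M'Space m s) : ℝ :=
  fderiv ℝ F p (anchorVec' L p (ξ p))

/-- The bracket `[[X,Y]]_E` of two sections of `E` in coordinates. -/
def bracketE (L : CoordLieAlgebroid m k) (X Y : MSpace m → Fin k → ℝ) :
    MSpace m → Fin k → ℝ := fun x g =>
  (∑ a, ∑ i, (X x a * L.ρ x a i * pd i (fun x' => Y x' g) x
      - Y x a * L.ρ x a i * pd i (fun x' => X x' g) x))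
    + ∑ a, ∑ b, L.c x a b g * X x a * Y x b

end Prolongation

open Prolongation

namespace Prolongation

variable {m s k : ℕ}

/-- The anchor vector field of a section. -/
def av (L : CoordLieAlgebroid m k) (ξ : Sec m s k) : M'Space m s → M'Space m s :=
  fun p => anchorVec' L p (ξ p)

/-- The action of (the anchor of) a section on a function. -/
def Lop (L : CoordLieAlgebroid m k) (ξ : Sec m s k) (F : M'Space m s → ℝ) :
    M'Space m s → ℝ := fun p => fderiv ℝ F p (av L ξ p)

/-- Structure-function term of the bracket. -/
def Ct (L : CoordLieAlgebroid m k) (ξ ζ : Sec m s k) (g : Fin k) : M'Space m s → ℝ :=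
  fun p => ∑ a, ∑ b, L.c p.1 a b g * (ξ p).1 a * (ζ p).1 b

/-- The bracket on sections of the prolongation. -/
def sbr (L : CoordLieAlgebroid m k) (ξ ζ : Sec m s k) : Sec m s k := fun p =>
  (fun g => Lop L ξ (fun q => (ζ q).1 g) p - Lop L ζ (fun q => (ξ q).1 g) p + Ct L ξ ζ g p,
   fun σ => Lop L ξ (fun q => (ζ q).2 σ) p - Lop L ζ (fun q => (ξ q).2 σ) p)

variable {L : CoordLieAlgebroid m k}

lemma av_fst (ξ : Sec m s k) (p : M'Space m s) (j : Fin m) :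
    (av L ξ p).1 j = ∑ e, (ξ p).1 e * L.ρ p.1 e j := rfl

lemma av_snd (ξ : Sec m s k) (p : M'Space m s) : (av L ξ p).2 = (ξ p).2 := rfl

-- smoothness of section components
lemma sec1_smooth {ξ : Sec m s k} (hξ : ContDiff ℝ (⊤:ℕ∞) ξ) (a : Fin k) :
    ContDiff ℝ (⊤:ℕ∞) fun p => (ξ p).1 a := (contDiff_pi.mp hξ.fst) a

lemma sec2_smooth {ξ : Sec m s k} (hξ : ContDiff ℝ (⊤:ℕ∞) ξ) (σ : Fin s) :
    ContDiff ℝ (⊤:ℕ∞) fun p => (ξ p).2 σ := (contDiff_pi.mp hξ.snd) σ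

lemma rho_smooth' (a : Fin k) (i : Fin m) :
    ContDiff ℝ (⊤:ℕ∞) fun p : M'Space m s => L.ρ p.1 a i :=
  ((L.smooth_ρ a i).of_le (by simp)).comp contDiff_fst

lemma c_smooth' (a b g : Fin k) :
    ContDiff ℝ (⊤:ℕ∞) fun p : M'Space m s => L.c p.1 a b g :=
  ((L.smooth_c a b g).of_le (by simp)).comp contDiff_fst

lemma av_smooth {ξ : Sec m s k} (hξ : ContDiff ℝ (⊤:ℕ∞) ξ) :
    ContDiff ℝ (⊤:ℕ∞) (av L ξ) := by
  apply ContDiff.prodMk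
  · exact contDiff_pi.mpr fun i => ContDiff.sum fun e _ =>
      (sec1_smooth hξ e).mul (rho_smooth' e i)
  · exact hξ.snd

lemma Lop_smooth {ξ : Sec m s k} {F : M'Space m s → ℝ}
    (hξ : ContDiff ℝ (⊤:ℕ∞) ξ) (hF : ContDiff ℝ (⊤:ℕ∞) F) :
    ContDiff ℝ (⊤:ℕ∞) (Lop L ξ F) :=
  (hF.fderiv_right (m := (⊤:ℕ∞)) (by norm_cast)).clm_apply (av_smooth hξ)

lemma Ct_smooth {ξ ζ : Sec m s k} (hξ : ContDiff ℝ (⊤:ℕ∞) ξ) (hζ : ContDiff ℝ (⊤:ℕ∞) ζ)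
    (g : Fin k) : ContDiff ℝ (⊤:ℕ∞) (Ct L ξ ζ g) := by
  exact ContDiff.sum fun a _ => ContDiff.sum fun b _ =>
    ((c_smooth' a b g).mul (sec1_smooth hξ a)).mul (sec1_smooth hζ b)

end Prolongation
namespace Prolongation
variable {m s k : ℕ} {L : CoordLieAlgebroid m k}

/-- Expansion of a directional derivative on `ℝ^m` in terms of partials. -/
lemma fd_expand {g : MSpace m → ℝ} {x : MSpace m} (v : MSpace m) :
    fderiv ℝ g x v = ∑ j, v j * pd j g x := by
  have hv : v = ∑ j, v j • (Pi.single j (1:ℝ) : MSpace m) := by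
    funext i
    simp [Pi.single_apply, Finset.sum_apply, smul_eq_mul, mul_comm]
  conv_lhs => rw [hv]
  rw [map_sum]
  exact Finset.sum_congr rfl fun j _ => by rw [map_smul]; simp [pd, smul_eq_mul]

/-- Composition with the projection `π = pr₁`. -/
lemma fd_base {g : MSpace m → ℝ} {p : M'Space m s} (hg : DifferentiableAt ℝ g p.1)
    (V : M'Space m s) :
    fderiv ℝ (fun q : M'Space m s => g q.1) p V = ∑ j, V.1 j * pd j g p.1 := by
  have h : fderiv ℝ (fun q : M'Space m s => g q.1) p V = fderiv ℝ g p.1 V.1 := by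
    have := (hg.hasFDerivAt.comp p (hasFDerivAt_fst (p := p))).fderiv
    rw [show (fun q : M'Space m s => g q.1) = g ∘ Prod.fst from rfl, this]
    rfl
  rw [h, fd_expand]

lemma Lop_base {g : MSpace m → ℝ} (ξ : Sec m s k) {p : M'Space m s}
    (hg : DifferentiableAt ℝ g p.1) :
    Lop L ξ (fun q => g q.1) p = ∑ j, (∑ e, (ξ p).1 e * L.ρ p.1 e j) * pd j g p.1 :=
  fd_base hg _

lemma Lop_add {ξ : Sec m s k} {F G : M'Space m s → ℝ} {p : M'Space m s}
    (hF : DifferentiableAt ℝ F p) (hG : DifferentiableAt ℝ G p) :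
    Lop L ξ (fun q => F q + G q) p = Lop L ξ F p + Lop L ξ G p := by
  unfold Lop; rw [fderiv_fun_add hF hG]; rfl

lemma Lop_sub {ξ : Sec m s k} {F G : M'Space m s → ℝ} {p : M'Space m s}
    (hF : DifferentiableAt ℝ F p) (hG : DifferentiableAt ℝ G p) :
    Lop L ξ (fun q => F q - G q) p = Lop L ξ F p - Lop L ξ G p := by
  unfold Lop; rw [fderiv_fun_sub hF hG]; rfl

lemma Lop_mul {ξ : Sec m s k} {F G : M'Space m s → ℝ} {p : M'Space m s}
    (hF : DifferentiableAt ℝ F p) (hG : DifferentiableAt ℝ G p) :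
    Lop L ξ (fun q => F q * G q) p = F p * Lop L ξ G p + G p * Lop L ξ F p := by
  unfold Lop; rw [fderiv_fun_mul hF hG]; simp [smul_eq_mul]

lemma Lop_sum {ι : Type*} (t : Finset ι) {ξ : Sec m s k} {F : ι → M'Space m s → ℝ}
    {p : M'Space m s} (hF : ∀ i ∈ t, DifferentiableAt ℝ (F i) p) :
    Lop L ξ (fun q => ∑ i ∈ t, F i q) p = ∑ i ∈ t, Lop L ξ (F i) p := by
  unfold Lop; rw [fderiv_fun_sum hF, ContinuousLinearMap.sum_apply]

end Prolongation
namespace Prolongation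
variable {m s k : ℕ} {L : CoordLieAlgebroid m k}

lemma anchor_add (p : M'Space m s) (w w' : ProFib' k s) :
    anchorVec' L p (w + w') = anchorVec' L p w + anchorVec' L p w' := by
  unfold anchorVec'
  refine Prod.ext ?_ rfl
  funext i
  simp [Finset.sum_add_distrib, add_mul]

lemma anchor_smul (p : M'Space m s) (c : ℝ) (w : ProFib' k s) :
    anchorVec' L p (c • w) = c • anchorVec' L p w := by
  unfold anchorVec'
  refine Prod.ext ?_ rfl
  funext i
  simp [Finset.mul_sum, smul_eq_mul, mul_assoc]

lemma Lop_sec_add (ξ ζ : Sec m s k) (F : M'Space m s → ℝ) (p : M'Space m s) :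
    Lop L (ξ + ζ) F p = Lop L ξ F p + Lop L ζ F p := by
  unfold Lop av
  rw [show (ξ + ζ) p = ξ p + ζ p from rfl, anchor_add, map_add]

lemma Lop_sec_smul (ξ : Sec m s k) (G : M'Space m s → ℝ) (F : M'Space m s → ℝ)
    (p : M'Space m s) :
    Lop L (fun q => G q • ξ q) F p = G p * Lop L ξ F p := by
  unfold Lop av
  rw [anchor_smul, map_smul]; rfl

/-- second-derivative symmetry -/
lemma sderiv_symm {F : M'Space m s → ℝ} (hF : ContDiff ℝ (⊤:ℕ∞) F) (p : M'Space m s)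
    (v w : M'Space m s) :
    fderiv ℝ (fderiv ℝ F) p v w = fderiv ℝ (fderiv ℝ F) p w v :=
  second_derivative_symmetric (fun y => (hF.differentiable (by simp) y).hasFDerivAt)
    (((hF.fderiv_right (m := (⊤:ℕ∞)) (by norm_cast)).differentiable (by simp) p).hasFDerivAt) v w

lemma Lop_Lop {ξ ζ : Sec m s k} {F : M'Space m s → ℝ} (hξ : ContDiff ℝ (⊤:ℕ∞) ξ)
    (hζ : ContDiff ℝ (⊤:ℕ∞) ζ) (hF : ContDiff ℝ (⊤:ℕ∞) F) (p : M'Space m s) :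
    Lop L ξ (Lop L ζ F) p
      = fderiv ℝ (fderiv ℝ F) p (av L ξ p) (av L ζ p)
        + fderiv ℝ F p (fderiv ℝ (av L ζ) p (av L ξ p)) := by
  have h1 : DifferentiableAt ℝ (fderiv ℝ F) p :=
    ((hF.fderiv_right (m := (⊤:ℕ∞)) (by norm_cast)).differentiable (by simp) p)
  have h2 : DifferentiableAt ℝ (av L ζ) p := ((av_smooth hζ).differentiable (by simp) p)
  show fderiv ℝ (fun q => (fderiv ℝ F q) (av L ζ q)) p (av L ξ p) = _
  rw [fderiv_clm_apply h1 h2]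
  simp only [ContinuousLinearMap.add_apply, ContinuousLinearMap.coe_comp',
    Function.comp_apply, ContinuousLinearMap.flip_apply]
  ring

lemma fderiv_apply_snd {f : M'Space m s → M'Space m s} {p : M'Space m s}
    (hf : DifferentiableAt ℝ f p) (V : M'Space m s) (σ : Fin s) :
    (fderiv ℝ f p V).2 σ = fderiv ℝ (fun q => (f q).2 σ) p V := by
  have l : M'Space m s →L[ℝ] ℝ :=
    (ContinuousLinearMap.proj σ).comp (ContinuousLinearMap.snd ℝ (MSpace m) (Fin s → ℝ))
  have h : fderiv ℝ (fun q => (f q).2 σ) p =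
      (((ContinuousLinearMap.proj σ).comp
        (ContinuousLinearMap.snd ℝ (MSpace m) (Fin s → ℝ))).comp (fderiv ℝ f p)) := by
    have := (((ContinuousLinearMap.proj (R := ℝ) (φ := fun _ : Fin s => ℝ) σ).comp
        (ContinuousLinearMap.snd ℝ (MSpace m) (Fin s → ℝ))).hasFDerivAt.comp p
        hf.hasFDerivAt).fderiv
    exact this
  rw [h]; rfl

lemma fderiv_apply_fst {f : M'Space m s → M'Space m s} {p : M'Space m s}
    (hf : DifferentiableAt ℝ f p) (V : M'Space m s) (i : Fin m) :
    (fderiv ℝ f p V).1 i = fderiv ℝ (fun q => (f q).1 i) p V := by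
  have h : fderiv ℝ (fun q => (f q).1 i) p =
      (((ContinuousLinearMap.proj i).comp
        (ContinuousLinearMap.fst ℝ (MSpace m) (Fin s → ℝ))).comp (fderiv ℝ f p)) := by
    have := (((ContinuousLinearMap.proj (R := ℝ) (φ := fun _ : Fin m => ℝ) i).comp
        (ContinuousLinearMap.fst ℝ (MSpace m) (Fin s → ℝ))).hasFDerivAt.comp p
        hf.hasFDerivAt).fderiv
    exact this
  rw [h]; rfl

end Prolongation
namespace Prolongation
variable {m s k : ℕ} {L : CoordLieAlgebroid m k}

lemma swap_factor {m k : ℕ} (u : Fin k → ℝ) (ρr : Fin k → Fin m → ℝ) (d : Fin m → ℝ) :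
    ∑ j, (∑ e, u e * ρr e j) * d j = ∑ e, u e * ∑ j, ρr e j * d j := by
  simp only [Finset.sum_mul, Finset.mul_sum]
  rw [Finset.sum_comm]
  exact Finset.sum_congr rfl fun e _ => Finset.sum_congr rfl fun j _ => by ring

lemma alg1 {k : ℕ} (u v r : Fin k → ℝ) (A : Fin k → Fin k → ℝ)
    (c : Fin k → Fin k → Fin k → ℝ)
    (h : ∀ e a, A e a - A a e = ∑ g, c e a g * r g) :
    (∑ a, v a * ∑ e, u e * A e a) - (∑ a, u a * ∑ e, v e * A e a)
      = ∑ g, (∑ e, ∑ a, c e a g * u e * v a) * r g := by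
  have expand : ∀ w z : Fin k → ℝ,
      (∑ a, z a * ∑ e, w e * A e a) = ∑ e, ∑ a, w e * z a * A e a := by
    intro w z
    rw [Finset.sum_comm]
    exact Finset.sum_congr rfl fun a _ => by
      rw [Finset.mul_sum]
      exact Finset.sum_congr rfl fun e _ => by ring
  rw [expand u v, expand v u,
    show (∑ e, ∑ a, v e * u a * A e a) = ∑ e, ∑ a, v a * u e * A a e from Finset.sum_comm,
    ← Finset.sum_sub_distrib]
  simp only [← Finset.sum_sub_distrib]
  rw [show (∑ g, (∑ e, ∑ a, c e a g * u e * v a) * r g)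
      = ∑ e, ∑ a, ∑ g, c e a g * u e * v a * r g by
    simp only [Finset.sum_mul]
    rw [Finset.sum_comm]
    exact Finset.sum_congr rfl fun e _ => Finset.sum_comm]
  refine Finset.sum_congr rfl fun e _ => Finset.sum_congr rfl fun a _ => ?_
  rw [show u e * v a * A e a - v a * u e * A a e = u e * v a * (A e a - A a e) by ring,
    h e a, Finset.mul_sum]
  exact Finset.sum_congr rfl fun g _ => by ring

lemma av_sbr {ξ ζ : Sec m s k} (hξ : ContDiff ℝ (⊤:ℕ∞) ξ) (hζ : ContDiff ℝ (⊤:ℕ∞) ζ)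
    (p : M'Space m s) :
    av L (sbr L ξ ζ) p
      = fderiv ℝ (av L ζ) p (av L ξ p) - fderiv ℝ (av L ξ) p (av L ζ p) := by
  have dρ : ∀ (a : Fin k) (i : Fin m),
      DifferentiableAt ℝ (fun q : M'Space m s => L.ρ q.1 a i) p :=
    fun a i => ((rho_smooth' a i).differentiable (by simp)) p
  have dρM : ∀ (a : Fin k) (i : Fin m), DifferentiableAt ℝ (fun x => L.ρ x a i) p.1 :=
    fun a i => (((L.smooth_ρ a i).of_le (by simp)).differentiable (n := 1) (by simp)) p.1
  have d1 : ∀ (η : Sec m s k), ContDiff ℝ (⊤:ℕ∞) η → ∀ a : Fin k,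
      DifferentiableAt ℝ (fun q => (η q).1 a) p :=
    fun η hη a => ((sec1_smooth hη a).differentiable (by simp)) p
  have davξ : DifferentiableAt ℝ (av L ξ) p :=
    ((av_smooth hξ).differentiable (by simp)) p
  have davζ : DifferentiableAt ℝ (av L ζ) p :=
    ((av_smooth hζ).differentiable (by simp)) p
  have key : ∀ (η θ : Sec m s k), ContDiff ℝ (⊤:ℕ∞) η → ContDiff ℝ (⊤:ℕ∞) θ →
      ∀ i : Fin m,
      fderiv ℝ (fun q => (av L θ q).1 i) p (av L η p)
        = ∑ a, ((θ p).1 a *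
              (∑ e, (η p).1 e * ∑ j, L.ρ p.1 e j * pd j (fun x => L.ρ x a i) p.1)
            + L.ρ p.1 a i * Lop L η (fun q => (θ q).1 a) p) := by
    intro η θ hη hθ i
    have h0 : fderiv ℝ (fun q => (av L θ q).1 i) p (av L η p)
        = Lop L η (fun q => ∑ a, (θ q).1 a * L.ρ q.1 a i) p := rfl
    rw [h0, Lop_sum Finset.univ (fun a _ => ((d1 θ hθ a).fun_mul (dρ a i)))]
    refine Finset.sum_congr rfl fun a _ => ?_
    rw [Lop_mul (d1 θ hθ a) (dρ a i),
      Lop_base (L := L) (g := fun x => L.ρ x a i) η (dρM a i), swap_factor]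
  refine Prod.ext ?_ ?_
  · funext i
    rw [Prod.fst_sub, Pi.sub_apply, fderiv_apply_fst davζ _ i, fderiv_apply_fst davξ _ i,
      key ξ ζ hξ hζ i, key ζ ξ hζ hξ i]
    have hAC : ∀ e a : Fin k,
        (∑ j, L.ρ p.1 e j * pd j (fun x => L.ρ x a i) p.1)
          - (∑ j, L.ρ p.1 a j * pd j (fun x => L.ρ x e i) p.1)
        = ∑ g, L.c p.1 e a g * L.ρ p.1 g i := by
      intro e a
      rw [← Finset.sum_sub_distrib]
      exact L.anchor_compat p.1 e a i
    have halg := alg1 ((ξ p).1) ((ζ p).1) (fun g => L.ρ p.1 g i)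
      (fun e a => ∑ j, L.ρ p.1 e j * pd j (fun x => L.ρ x a i) p.1)
      (fun e a g => L.c p.1 e a g) hAC
    have hsplit : (av L (sbr L ξ ζ) p).1 i
        = ((∑ g, L.ρ p.1 g i * Lop L ξ (fun q => (ζ q).1 g) p)
            - ∑ g, L.ρ p.1 g i * Lop L ζ (fun q => (ξ q).1 g) p)
          + ∑ g, Ct L ξ ζ g p * L.ρ p.1 g i := by
      rw [av_fst, ← Finset.sum_sub_distrib, ← Finset.sum_add_distrib]
      refine Finset.sum_congr rfl fun g _ => ?_
      show (Lop L ξ (fun q => (ζ q).1 g) p - Lop L ζ (fun q => (ξ q).1 g) p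
          + Ct L ξ ζ g p) * L.ρ p.1 g i = _
      ring
    rw [hsplit]
    simp only [Ct]
    rw [← halg]
    simp only [Finset.sum_add_distrib]
    ring
  · funext σ
    rw [Prod.snd_sub, Pi.sub_apply, fderiv_apply_snd davζ _ σ, fderiv_apply_snd davξ _ σ]
    rfl

lemma Lop_comm {ξ ζ : Sec m s k} {F : M'Space m s → ℝ} (hξ : ContDiff ℝ (⊤:ℕ∞) ξ)
    (hζ : ContDiff ℝ (⊤:ℕ∞) ζ) (hF : ContDiff ℝ (⊤:ℕ∞) F) (p : M'Space m s) :
    Lop L (sbr L ξ ζ) F p = Lop L ξ (Lop L ζ F) p - Lop L ζ (Lop L ξ F) p := by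
  rw [Lop_Lop hξ hζ hF p, Lop_Lop hζ hξ hF p, sderiv_symm hF p (av L ζ p) (av L ξ p),
    show Lop L (sbr L ξ ζ) F p = fderiv ℝ F p (av L (sbr L ξ ζ) p) from rfl,
    av_sbr hξ hζ p, map_sub]
  ring

end Prolongation
namespace Prolongation

lemma sum_rot {k : ℕ} (F : Fin k → Fin k → Fin k → ℝ) :
    ∑ x, ∑ y, ∑ z, F x y z = ∑ y, ∑ z, ∑ x, F x y z := by
  rw [Finset.sum_comm]
  exact Finset.sum_congr rfl fun _ _ => Finset.sum_comm

lemma sum_swap12 {k : ℕ} (F : Fin k → Fin k → Fin k → ℝ) :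
    ∑ x, ∑ y, ∑ z, F x y z = ∑ y, ∑ x, ∑ z, F x y z := Finset.sum_comm

lemma tri1 {k : ℕ} (u v w : Fin k → ℝ) (R : Fin k → Fin k → Fin k → ℝ) :
    ∑ a, ∑ b, v a * w b * (∑ e, u e * R e a b)
      = ∑ e, ∑ a, ∑ b, R e a b * u e * v a * w b := by
  rw [show (∑ e, ∑ a, ∑ b, R e a b * u e * v a * w b)
      = ∑ a, ∑ b, ∑ e, R e a b * u e * v a * w b by rw [sum_rot]]
  refine Finset.sum_congr rfl fun a _ => Finset.sum_congr rfl fun b _ => ?_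
  rw [Finset.mul_sum]
  exact Finset.sum_congr rfl fun e _ => by ring

lemma tri2 {k : ℕ} (u v w : Fin k → ℝ) (γ : Fin k → Fin k → ℝ)
    (δ : Fin k → Fin k → Fin k → ℝ) :
    ∑ a, ∑ b, γ a b * u a * (∑ x, ∑ y, δ x y b * v x * w y)
      = ∑ e, ∑ a, ∑ b, (∑ μ, γ e μ * δ a b μ) * u e * v a * w b := by
  -- LHS = ∑ e, ∑ μ, γ e μ * u e * (∑ a, ∑ b, δ a b μ * v a * w b)
  -- RHS = ∑ e, ∑ a, ∑ b, ∑ μ, γ e μ * δ a b μ * u e * v a * w b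
  refine Finset.sum_congr rfl fun e _ => ?_
  calc ∑ μ, γ e μ * u e * (∑ x, ∑ y, δ x y μ * v x * w y)
      = ∑ μ, ∑ a, ∑ b, γ e μ * δ a b μ * u e * v a * w b := by
        refine Finset.sum_congr rfl fun μ _ => ?_
        rw [Finset.mul_sum]
        refine Finset.sum_congr rfl fun a _ => ?_
        rw [Finset.mul_sum]
        exact Finset.sum_congr rfl fun b _ => by ring
    _ = ∑ a, ∑ b, ∑ μ, γ e μ * δ a b μ * u e * v a * w b := by rw [sum_rot]
    _ = ∑ a, ∑ b, (∑ μ, γ e μ * δ a b μ) * u e * v a * w b := by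
        refine Finset.sum_congr rfl fun a _ => Finset.sum_congr rfl fun b _ => ?_
        simp only [Finset.sum_mul]

end Prolongation
namespace Prolongation
variable {m s k : ℕ} {L : CoordLieAlgebroid m k}

lemma sbr_fst (ξ ζ : Sec m s k) (p : M'Space m s) (g : Fin k) :
    (sbr L ξ ζ p).1 g
      = Lop L ξ (fun q => (ζ q).1 g) p - Lop L ζ (fun q => (ξ q).1 g) p + Ct L ξ ζ g p := rfl

lemma sbr_snd (ξ ζ : Sec m s k) (p : M'Space m s) (σ : Fin s) :
    (sbr L ξ ζ p).2 σ
      = Lop L ξ (fun q => (ζ q).2 σ) p - Lop L ζ (fun q => (ξ q).2 σ) p := rfl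

lemma Lop_Ct {α β γ : Sec m s k} (hα : ContDiff ℝ (⊤:ℕ∞) α) (hβ : ContDiff ℝ (⊤:ℕ∞) β)
    (hγ : ContDiff ℝ (⊤:ℕ∞) γ) (g : Fin k) (p : M'Space m s) :
    Lop L α (Ct L β γ g) p
      = (∑ a, ∑ b, L.c p.1 a b g * (β p).1 a * Lop L α (fun q => (γ q).1 b) p)
        + (∑ a, ∑ b, L.c p.1 a b g * (γ p).1 b * Lop L α (fun q => (β q).1 a) p)
        + ∑ e, ∑ a, ∑ b, (∑ j, L.ρ p.1 e j * pd j (fun x => L.c x a b g) p.1)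
            * (α p).1 e * (β p).1 a * (γ p).1 b := by
  have dc : ∀ a b : Fin k, DifferentiableAt ℝ (fun q : M'Space m s => L.c q.1 a b g) p :=
    fun a b => ((c_smooth' a b g).differentiable (by simp)) p
  have dcM : ∀ a b : Fin k, DifferentiableAt ℝ (fun x => L.c x a b g) p.1 :=
    fun a b => (((L.smooth_c a b g).of_le (by simp)).differentiable (n := 1) (by simp)) p.1
  have d1 : ∀ (η : Sec m s k), ContDiff ℝ (⊤:ℕ∞) η → ∀ a : Fin k,
      DifferentiableAt ℝ (fun q => (η q).1 a) p :=
    fun η hη a => ((sec1_smooth hη a).differentiable (by simp)) p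
  have step : Lop L α (Ct L β γ g) p
      = ∑ a, ∑ b, ((L.c p.1 a b g * (β p).1 a) * Lop L α (fun q => (γ q).1 b) p
          + (γ p).1 b * (L.c p.1 a b g * Lop L α (fun q => (β q).1 a) p
            + (β p).1 a * ∑ e, (α p).1 e
                * ∑ j, L.ρ p.1 e j * pd j (fun x => L.c x a b g) p.1)) := by
    have e0 : Ct L β γ g
        = fun q => ∑ a, ∑ b, (L.c q.1 a b g * (β q).1 a) * (γ q).1 b := rfl
    rw [e0, Lop_sum Finset.univ (fun a _ => DifferentiableAt.fun_sum
      (fun b _ => ((dc a b).fun_mul (d1 β hβ a)).fun_mul (d1 γ hγ b)))]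
    refine Finset.sum_congr rfl fun a _ => ?_
    rw [Lop_sum Finset.univ (fun b _ => ((dc a b).fun_mul (d1 β hβ a)).fun_mul (d1 γ hγ b))]
    refine Finset.sum_congr rfl fun b _ => ?_
    rw [Lop_mul ((dc a b).fun_mul (d1 β hβ a)) (d1 γ hγ b),
      Lop_mul (dc a b) (d1 β hβ a),
      Lop_base (L := L) (g := fun x => L.c x a b g) α (dcM a b), swap_factor]
  rw [step]
  have split : (∑ a, ∑ b, (L.c p.1 a b g * (β p).1 a * Lop L α (fun q => (γ q).1 b) p
        + (γ p).1 b * (L.c p.1 a b g * Lop L α (fun q => (β q).1 a) p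
          + (β p).1 a * ∑ e, (α p).1 e
              * ∑ j, L.ρ p.1 e j * pd j (fun x => L.c x a b g) p.1)))
      = (∑ a, ∑ b, L.c p.1 a b g * (β p).1 a * Lop L α (fun q => (γ q).1 b) p)
        + ((∑ a, ∑ b, L.c p.1 a b g * (γ p).1 b * Lop L α (fun q => (β q).1 a) p)
          + ∑ a, ∑ b, (β p).1 a * (γ p).1 b
              * ∑ e, (α p).1 e * ∑ j, L.ρ p.1 e j * pd j (fun x => L.c x a b g) p.1) := by
    simp only [← Finset.sum_add_distrib]
    exact Finset.sum_congr rfl fun a _ => Finset.sum_congr rfl fun b _ => by ring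
  rw [split, tri1]
  ring

lemma Ct_sbr_right (ξ ζ χ : Sec m s k) (g : Fin k) (p : M'Space m s) :
    Ct L ξ (sbr L ζ χ) g p
      = (∑ a, ∑ b, L.c p.1 a b g * (ξ p).1 a * Lop L ζ (fun q => (χ q).1 b) p)
        - (∑ a, ∑ b, L.c p.1 a b g * (ξ p).1 a * Lop L χ (fun q => (ζ q).1 b) p)
        + ∑ e, ∑ a, ∑ b, (∑ μ, L.c p.1 e μ g * L.c p.1 a b μ)
            * (ξ p).1 e * (ζ p).1 a * (χ p).1 b := by
  have e0 : Ct L ξ (sbr L ζ χ) g p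
      = ∑ a, ∑ b, L.c p.1 a b g * (ξ p).1 a
          * (Lop L ζ (fun q => (χ q).1 b) p - Lop L χ (fun q => (ζ q).1 b) p
            + Ct L ζ χ b p) := rfl
  rw [e0]
  have e1 : ∀ a b : Fin k, L.c p.1 a b g * (ξ p).1 a
        * (Lop L ζ (fun q => (χ q).1 b) p - Lop L χ (fun q => (ζ q).1 b) p + Ct L ζ χ b p)
      = (L.c p.1 a b g * (ξ p).1 a * Lop L ζ (fun q => (χ q).1 b) p
          - L.c p.1 a b g * (ξ p).1 a * Lop L χ (fun q => (ζ q).1 b) p)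
        + L.c p.1 a b g * (ξ p).1 a * Ct L ζ χ b p := fun a b => by ring
  simp only [e1, Finset.sum_add_distrib, Finset.sum_sub_distrib]
  congr 1
  rw [← tri2 (fun e => (ξ p).1 e) (fun a => (ζ p).1 a) (fun b => (χ p).1 b)
    (fun a b => L.c p.1 a b g) (fun x y μ => L.c p.1 x y μ)]
  rfl

lemma tri3 {k : ℕ} (u v w : Fin k → ℝ) (γ : Fin k → Fin k → ℝ)
    (δ : Fin k → Fin k → Fin k → ℝ) :
    ∑ a, ∑ b, γ a b * (∑ x, ∑ y, δ x y a * u x * v y) * w b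
      = ∑ e, ∑ a, ∑ b, (∑ μ, γ μ b * δ e a μ) * u e * v a * w b := by
  calc ∑ a, ∑ b, γ a b * (∑ x, ∑ y, δ x y a * u x * v y) * w b
      = ∑ a, ∑ x, ∑ y, ∑ b, γ a b * δ x y a * u x * v y * w b := by
        refine Finset.sum_congr rfl fun a _ => ?_
        have hb : ∀ b : Fin k, γ a b * (∑ x, ∑ y, δ x y a * u x * v y) * w b
            = ∑ x, ∑ y, γ a b * δ x y a * u x * v y * w b := by
          intro b
          calc γ a b * (∑ x, ∑ y, δ x y a * u x * v y) * w b
              = (∑ x, ∑ y, δ x y a * u x * v y) * (γ a b * w b) := by ring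
            _ = ∑ x, ∑ y, δ x y a * u x * v y * (γ a b * w b) := by
                simp only [Finset.sum_mul]
            _ = ∑ x, ∑ y, γ a b * δ x y a * u x * v y * w b :=
                Finset.sum_congr rfl fun x _ => Finset.sum_congr rfl fun y _ => by ring
        simp only [hb]
        rw [Finset.sum_comm]
        exact Finset.sum_congr rfl fun x _ => Finset.sum_comm
    _ = ∑ x, ∑ y, ∑ a, ∑ b, γ a b * δ x y a * u x * v y * w b := by
        rw [Finset.sum_comm]
        exact Finset.sum_congr rfl fun x _ => Finset.sum_comm
    _ = ∑ e, ∑ a, ∑ b, (∑ μ, γ μ b * δ e a μ) * u e * v a * w b := by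
        refine Finset.sum_congr rfl fun x _ => Finset.sum_congr rfl fun y _ => ?_
        rw [Finset.sum_comm]
        refine Finset.sum_congr rfl fun b _ => ?_
        calc ∑ a, γ a b * δ x y a * u x * v y * w b
            = ∑ a, γ a b * δ x y a * (u x * v y * w b) :=
              Finset.sum_congr rfl fun a _ => by ring
          _ = (∑ μ, γ μ b * δ x y μ) * (u x * v y * w b) := by
              rw [Finset.sum_mul]
          _ = (∑ μ, γ μ b * δ x y μ) * u x * v y * w b := by ring

lemma Ct_sbr_left (ξ ζ χ : Sec m s k) (g : Fin k) (p : M'Space m s) :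
    Ct L (sbr L ξ ζ) χ g p
      = (∑ a, ∑ b, L.c p.1 a b g * (χ p).1 b * Lop L ξ (fun q => (ζ q).1 a) p)
        - (∑ a, ∑ b, L.c p.1 a b g * (χ p).1 b * Lop L ζ (fun q => (ξ q).1 a) p)
        + ∑ e, ∑ a, ∑ b, (∑ μ, L.c p.1 μ b g * L.c p.1 e a μ)
            * (ξ p).1 e * (ζ p).1 a * (χ p).1 b := by
  have e0 : Ct L (sbr L ξ ζ) χ g p
      = ∑ a, ∑ b, L.c p.1 a b g
          * (Lop L ξ (fun q => (ζ q).1 a) p - Lop L ζ (fun q => (ξ q).1 a) p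
            + Ct L ξ ζ a p) * (χ p).1 b := rfl
  rw [e0]
  have e1 : ∀ a b : Fin k, L.c p.1 a b g
        * (Lop L ξ (fun q => (ζ q).1 a) p - Lop L ζ (fun q => (ξ q).1 a) p + Ct L ξ ζ a p)
        * (χ p).1 b
      = (L.c p.1 a b g * (χ p).1 b * Lop L ξ (fun q => (ζ q).1 a) p
          - L.c p.1 a b g * (χ p).1 b * Lop L ζ (fun q => (ξ q).1 a) p)
        + L.c p.1 a b g * Ct L ξ ζ a p * (χ p).1 b := fun a b => by ring
  simp only [e1, Finset.sum_add_distrib, Finset.sum_sub_distrib]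
  congr 1
  rw [← tri3 (fun e => (ξ p).1 e) (fun a => (ζ p).1 a) (fun b => (χ p).1 b)
    (fun a b => L.c p.1 a b g) (fun x y μ => L.c p.1 x y μ)]
  rfl

end Prolongation
namespace Prolongation
variable {m s k : ℕ} {L : CoordLieAlgebroid m k}

lemma perm_rot {k : ℕ} (D : Fin k → Fin k → Fin k → ℝ) (u v w : Fin k → ℝ) :
    ∑ e, ∑ a, ∑ b, D e a b * w e * u a * v b
      = ∑ e, ∑ a, ∑ b, D b e a * u e * v a * w b := by
  rw [sum_rot (F := fun x y z => D x y z * w x * u y * v z)]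
  exact Finset.sum_congr rfl fun e _ => Finset.sum_congr rfl fun a _ =>
    Finset.sum_congr rfl fun b _ => by ring

lemma perm_swap {k : ℕ} (D : Fin k → Fin k → Fin k → ℝ) (u v w : Fin k → ℝ) :
    ∑ e, ∑ a, ∑ b, D e a b * v e * u a * w b
      = ∑ e, ∑ a, ∑ b, D a e b * u e * v a * w b := by
  rw [sum_swap12 (F := fun x y z => D x y z * v x * u y * w z)]
  exact Finset.sum_congr rfl fun e _ => Finset.sum_congr rfl fun a _ =>
    Finset.sum_congr rfl fun b _ => by ring

lemma pd_anti (p : M'Space m s) (e b g : Fin k) (j : Fin m) :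
    pd j (fun x => L.c x e b g) p.1 = - pd j (fun x => L.c x b e g) p.1 := by
  have : (fun x => L.c x e b g) = fun x => -(L.c x b e g) := funext fun x => L.c_antisymm x e b g
  rw [this]
  simp [pd, fderiv_neg]

lemma conv_anti (p : M'Space m s) (f h : Fin k → ℝ) (g : Fin k) :
    ∑ a, ∑ b, L.c p.1 a b g * f b * h a = -∑ a, ∑ b, L.c p.1 a b g * f a * h b := by
  rw [Finset.sum_comm, ← Finset.sum_neg_distrib]
  refine Finset.sum_congr rfl fun a _ => ?_
  rw [← Finset.sum_neg_distrib]
  refine Finset.sum_congr rfl fun b _ => ?_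
  rw [L.c_antisymm p.1 b a g]
  ring

lemma key_jacobi (p : M'Space m s) (u v w : Fin k → ℝ) (g : Fin k) :
    (∑ e, ∑ a, ∑ b, (∑ j, L.ρ p.1 e j * pd j (fun x => L.c x a b g) p.1) * u e * v a * w b)
    + (∑ e, ∑ a, ∑ b, (∑ μ, L.c p.1 e μ g * L.c p.1 a b μ) * u e * v a * w b)
    + (∑ e, ∑ a, ∑ b, (∑ j, L.ρ p.1 b j * pd j (fun x => L.c x e a g) p.1) * u e * v a * w b)
    - (∑ e, ∑ a, ∑ b, (∑ j, L.ρ p.1 a j * pd j (fun x => L.c x e b g) p.1) * u e * v a * w b)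
    - (∑ e, ∑ a, ∑ b, (∑ μ, L.c p.1 μ b g * L.c p.1 e a μ) * u e * v a * w b)
    - (∑ e, ∑ a, ∑ b, (∑ μ, L.c p.1 a μ g * L.c p.1 e b μ) * u e * v a * w b) = 0 := by
  simp only [← Finset.sum_add_distrib, ← Finset.sum_sub_distrib]
  refine Finset.sum_eq_zero fun e _ => ?_
  refine Finset.sum_eq_zero fun a _ => ?_
  refine Finset.sum_eq_zero fun b _ => ?_
  have cB : (∑ μ, L.c p.1 e μ g * L.c p.1 a b μ) = ∑ μ, L.c p.1 a b μ * L.c p.1 e μ g :=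
    Finset.sum_congr rfl fun μ _ => by ring
  have hD : (∑ j, L.ρ p.1 a j * pd j (fun x => L.c x e b g) p.1)
      = -∑ i, L.ρ p.1 a i * pd i (fun x => L.c x b e g) p.1 := by
    rw [← Finset.sum_neg_distrib]
    exact Finset.sum_congr rfl fun j _ => by rw [pd_anti p e b g j]; ring
  have hE : (∑ μ, L.c p.1 μ b g * L.c p.1 e a μ)
      = -∑ μ, L.c p.1 e a μ * L.c p.1 b μ g := by
    rw [← Finset.sum_neg_distrib]
    exact Finset.sum_congr rfl fun μ _ => by rw [L.c_antisymm p.1 μ b g]; ring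
  have hF : (∑ μ, L.c p.1 a μ g * L.c p.1 e b μ)
      = -∑ μ, L.c p.1 b e μ * L.c p.1 a μ g := by
    rw [← Finset.sum_neg_distrib]
    exact Finset.sum_congr rfl fun μ _ => by rw [L.c_antisymm p.1 e b μ]; ring
  rw [cB, hD, hE, hF]
  linear_combination (u e * v a * w b) * L.jacobi p.1 e a b g

lemma jacobi_snd {ξ ζ χ : Sec m s k} (hξ : ContDiff ℝ (⊤:ℕ∞) ξ) (hζ : ContDiff ℝ (⊤:ℕ∞) ζ)
    (hχ : ContDiff ℝ (⊤:ℕ∞) χ) (p : M'Space m s) (σ : Fin s) :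
    (sbr L ξ (sbr L ζ χ) p).2 σ
      = (sbr L (sbr L ξ ζ) χ p).2 σ + (sbr L ζ (sbr L ξ χ) p).2 σ := by
  have dd : ∀ (α β : Sec m s k), ContDiff ℝ (⊤:ℕ∞) α → ContDiff ℝ (⊤:ℕ∞) β →
      DifferentiableAt ℝ (Lop L α (fun q => (β q).2 σ)) p :=
    fun α β hα hβ => ((Lop_smooth hα (sec2_smooth hβ σ)).differentiable
      (by simp)) p
  simp only [sbr_snd]
  rw [Lop_comm hζ hχ (sec2_smooth hξ σ), Lop_comm hξ hζ (sec2_smooth hχ σ),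
    Lop_comm hξ hχ (sec2_smooth hζ σ),
    Lop_sub (ξ := ξ) (dd ζ χ hζ hχ) (dd χ ζ hχ hζ),
    Lop_sub (ξ := χ) (dd ξ ζ hξ hζ) (dd ζ ξ hζ hξ),
    Lop_sub (ξ := ζ) (dd ξ χ hξ hχ) (dd χ ξ hχ hξ)]
  ring

end Prolongation
namespace Prolongation
variable {m s k : ℕ} {L : CoordLieAlgebroid m k}

lemma jacobi_fst {ξ ζ χ : Sec m s k} (hξ : ContDiff ℝ (⊤:ℕ∞) ξ) (hζ : ContDiff ℝ (⊤:ℕ∞) ζ)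
    (hχ : ContDiff ℝ (⊤:ℕ∞) χ) (p : M'Space m s) (g : Fin k) :
    (sbr L ξ (sbr L ζ χ) p).1 g
      = (sbr L (sbr L ξ ζ) χ p).1 g + (sbr L ζ (sbr L ξ χ) p).1 g := by
  have dL : ∀ (α β : Sec m s k), ContDiff ℝ (⊤:ℕ∞) α → ContDiff ℝ (⊤:ℕ∞) β →
      ∀ g' : Fin k, DifferentiableAt ℝ (Lop L α (fun q => (β q).1 g')) p :=
    fun α β hα hβ g' => ((Lop_smooth hα (sec1_smooth hβ g')).differentiable
      (by simp)) p
  have dCt : ∀ (α β : Sec m s k), ContDiff ℝ (⊤:ℕ∞) α → ContDiff ℝ (⊤:ℕ∞) β →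
      ∀ g' : Fin k, DifferentiableAt ℝ (Ct L α β g') p :=
    fun α β hα hβ g' => ((Ct_smooth hα hβ g').differentiable (by simp)) p
  simp only [sbr_fst]
  rw [Lop_comm hζ hχ (sec1_smooth hξ g), Lop_comm hξ hζ (sec1_smooth hχ g),
    Lop_comm hξ hχ (sec1_smooth hζ g)]
  rw [Lop_add (ξ := ξ)
      (F := fun q => Lop L ζ (fun r => (χ r).1 g) q - Lop L χ (fun r => (ζ r).1 g) q)
      (G := Ct L ζ χ g) ((dL ζ χ hζ hχ g).sub (dL χ ζ hχ hζ g)) (dCt ζ χ hζ hχ g),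
    Lop_sub (ξ := ξ) (dL ζ χ hζ hχ g) (dL χ ζ hχ hζ g)]
  rw [Lop_add (ξ := χ)
      (F := fun q => Lop L ξ (fun r => (ζ r).1 g) q - Lop L ζ (fun r => (ξ r).1 g) q)
      (G := Ct L ξ ζ g) ((dL ξ ζ hξ hζ g).sub (dL ζ ξ hζ hξ g)) (dCt ξ ζ hξ hζ g),
    Lop_sub (ξ := χ) (dL ξ ζ hξ hζ g) (dL ζ ξ hζ hξ g)]
  rw [Lop_add (ξ := ζ)
      (F := fun q => Lop L ξ (fun r => (χ r).1 g) q - Lop L χ (fun r => (ξ r).1 g) q)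
      (G := Ct L ξ χ g) ((dL ξ χ hξ hχ g).sub (dL χ ξ hχ hξ g)) (dCt ξ χ hξ hχ g),
    Lop_sub (ξ := ζ) (dL ξ χ hξ hχ g) (dL χ ξ hχ hξ g)]
  rw [Lop_Ct hξ hζ hχ g p, Lop_Ct hχ hξ hζ g p, Lop_Ct hζ hξ hχ g p,
    Ct_sbr_right ξ ζ χ g p, Ct_sbr_left ξ ζ χ g p, Ct_sbr_right ζ ξ χ g p]
  have perm1 : (∑ e, ∑ a, ∑ b, (∑ j, L.ρ p.1 e j * pd j (fun x => L.c x a b g) p.1)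
        * (χ p).1 e * (ξ p).1 a * (ζ p).1 b)
      = ∑ e, ∑ a, ∑ b, (∑ j, L.ρ p.1 b j * pd j (fun x => L.c x e a g) p.1)
          * (ξ p).1 e * (ζ p).1 a * (χ p).1 b := perm_rot _ _ _ _
  have perm2 : (∑ e, ∑ a, ∑ b, (∑ j, L.ρ p.1 e j * pd j (fun x => L.c x a b g) p.1)
        * (ζ p).1 e * (ξ p).1 a * (χ p).1 b)
      = ∑ e, ∑ a, ∑ b, (∑ j, L.ρ p.1 a j * pd j (fun x => L.c x e b g) p.1)
          * (ξ p).1 e * (ζ p).1 a * (χ p).1 b := perm_swap _ _ _ _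
  have perm3 : (∑ e, ∑ a, ∑ b, (∑ μ, L.c p.1 e μ g * L.c p.1 a b μ)
        * (ζ p).1 e * (ξ p).1 a * (χ p).1 b)
      = ∑ e, ∑ a, ∑ b, (∑ μ, L.c p.1 a μ g * L.c p.1 e b μ)
          * (ξ p).1 e * (ζ p).1 a * (χ p).1 b := perm_swap _ _ _ _
  have conv1 : (∑ a, ∑ b, L.c p.1 a b g * (ζ p).1 b * Lop L χ (fun q => (ξ q).1 a) p)
      = -∑ a, ∑ b, L.c p.1 a b g * (ζ p).1 a * Lop L χ (fun q => (ξ q).1 b) p :=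
    conv_anti p _ _ g
  rw [perm1, perm2, perm3, conv1]
  linarith [key_jacobi (L := L) p ((ξ p).1) ((ζ p).1) ((χ p).1) g]

end Prolongation
namespace Prolongation
variable {m s k : ℕ} {L : CoordLieAlgebroid m k}

lemma Ct_anti (ξ ζ : Sec m s k) (g : Fin k) (p : M'Space m s) :
    Ct L ξ ζ g p = - Ct L ζ ξ g p := by
  show (∑ a, ∑ b, L.c p.1 a b g * (ξ p).1 a * (ζ p).1 b)
    = -∑ a, ∑ b, L.c p.1 a b g * (ζ p).1 a * (ξ p).1 b
  rw [Finset.sum_comm, ← Finset.sum_neg_distrib]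
  refine Finset.sum_congr rfl fun a _ => ?_
  rw [← Finset.sum_neg_distrib]
  refine Finset.sum_congr rfl fun b _ => ?_
  rw [L.c_antisymm p.1 b a g]
  ring

lemma Ct_add_left (ξ ζ χ : Sec m s k) (g : Fin k) (p : M'Space m s) :
    Ct L (ξ + ζ) χ g p = Ct L ξ χ g p + Ct L ζ χ g p := by
  show (∑ a, ∑ b, L.c p.1 a b g * ((ξ p).1 a + (ζ p).1 a) * (χ p).1 b)
    = (∑ a, ∑ b, L.c p.1 a b g * (ξ p).1 a * (χ p).1 b)
      + ∑ a, ∑ b, L.c p.1 a b g * (ζ p).1 a * (χ p).1 b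
  rw [← Finset.sum_add_distrib]
  refine Finset.sum_congr rfl fun a _ => ?_
  rw [← Finset.sum_add_distrib]
  exact Finset.sum_congr rfl fun b _ => by ring

lemma Ct_smul_right (ξ ζ : Sec m s k) (F : M'Space m s → ℝ) (g : Fin k) (p : M'Space m s) :
    Ct L ξ (fun q => F q • ζ q) g p = F p * Ct L ξ ζ g p := by
  show (∑ a, ∑ b, L.c p.1 a b g * (ξ p).1 a * (F p * (ζ p).1 b))
    = F p * ∑ a, ∑ b, L.c p.1 a b g * (ξ p).1 a * (ζ p).1 b
  rw [Finset.mul_sum]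
  refine Finset.sum_congr rfl fun a _ => ?_
  rw [Finset.mul_sum]
  exact Finset.sum_congr rfl fun b _ => by ring

end Prolongation

/-- let `E` be a Lie algebroid of rank `k` over `M` and `π : M' → M` a
fibration (local model: `M = ℝ^m`, `M' = ℝ^m × ℝ^s`, `π = pr₁`). Then
`T^E M' = {(b,v') ∈ E × TM' : ρ_E(b) = Tπ(v')}` is a vector bundle over `M'` of rank
`k + dim M' − dim M`, and it carries a Lie algebroid structure whose anchor is
`ρ_E^π(X∘π, U') = U'` and whose bracket satisfies
`[[(X∘π, U'), (Y∘π, V')]]_E^π = ([[X,Y]]_E ∘ π, [U',V'])` on sections of the form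
`(X∘π, U')` with `U'` π-projectable onto `ρ_E(X)`. -/
theorem prolongation_lie_algebroid {m s k : ℕ} (L : CoordLieAlgebroid m k) :
    -- rank statement: the fibre has dimension `k + dim M' − dim M`
    Module.finrank ℝ (ProFib' k s)
        = k + Module.finrank ℝ (M'Space m s) - Module.finrank ℝ (MSpace m)
    -- Lie algebroid structure on (smooth) sections of `T^E M' → M'`
    ∧ ∃ br : Sec m s k → Sec m s k → Sec m s k,
      -- antisymmetry
      (∀ ξ ζ : Sec m s k, ContDiff ℝ (⊤ : ℕ∞) ξ → ContDiff ℝ (⊤ : ℕ∞) ζ → br ξ ζ = - br ζ ξ)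
      -- additivity
      ∧ (∀ ξ ζ χ : Sec m s k, ContDiff ℝ (⊤ : ℕ∞) ξ → ContDiff ℝ (⊤ : ℕ∞) ζ → ContDiff ℝ (⊤ : ℕ∞) χ →
          br (ξ + ζ) χ = br ξ χ + br ζ χ)
      -- Jacobi identity
      ∧ (∀ ξ ζ χ : Sec m s k, ContDiff ℝ (⊤ : ℕ∞) ξ → ContDiff ℝ (⊤ : ℕ∞) ζ → ContDiff ℝ (⊤ : ℕ∞) χ →
          br ξ (br ζ χ) = br (br ξ ζ) χ + br ζ (br ξ χ))
      -- Leibniz rule with respect to the anchor `ρ_E^π = pr₂`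
      ∧ (∀ (ξ ζ : Sec m s k) (F : M'Space m s → ℝ),
          ContDiff ℝ (⊤ : ℕ∞) ξ → ContDiff ℝ (⊤ : ℕ∞) ζ → ContDiff ℝ (⊤ : ℕ∞) F →
          br ξ (fun p => F p • ζ p)
            = fun p => F p • br ξ ζ p + secD' L ξ F p • ζ p)
      -- characterization on sections of the form `(X∘π, U')`, `U'` projectable to `ρ_E(X)`
      ∧ (∀ (X Y : MSpace m → Fin k → ℝ) (u v : M'Space m s → Fin s → ℝ),
          ContDiff ℝ (⊤ : ℕ∞) (fun x => X x) → ContDiff ℝ (⊤ : ℕ∞) (fun x => Y x) →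
          ContDiff ℝ (⊤ : ℕ∞) u → ContDiff ℝ (⊤ : ℕ∞) v →
          br (fun p => (X p.1, u p)) (fun p => (Y p.1, v p))
            = fun p => (bracketE L X Y p.1,
                fun σ => fderiv ℝ (fun q => v q σ) p
                    (anchorVec' L p (X p.1, u p))
                  - fderiv ℝ (fun q => u q σ) p (anchorVec' L p (Y p.1, v p)))) := by
  constructor
  · -- rank statement
    have h1 : Module.finrank ℝ (ProFib' k s) = k + s := by
      simp [ProFib', Module.finrank_prod, Module.finrank_fintype_fun_eq_card]
    have h2 : Module.finrank ℝ (M'Space m s) = m + s := by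
      simp [M'Space, Module.finrank_prod, Module.finrank_fintype_fun_eq_card]
    have h3 : Module.finrank ℝ (MSpace m) = m := by
      simp [MSpace, Module.finrank_fintype_fun_eq_card]
    rw [h1, h2, h3]; omega
  refine ⟨sbr L, ?_, ?_, ?_, ?_, ?_⟩
  · -- antisymmetry
    intro ξ ζ _ _
    funext p
    refine Prod.ext ?_ ?_
    · funext g
      show (sbr L ξ ζ p).1 g = -((sbr L ζ ξ p).1 g)
      rw [sbr_fst, sbr_fst, Ct_anti ξ ζ g p]
      ring
    · funext σ
      show (sbr L ξ ζ p).2 σ = -((sbr L ζ ξ p).2 σ)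
      rw [sbr_snd, sbr_snd]
      ring
  · -- additivity
    intro ξ ζ χ hξ' hζ' hχ'
    have hξ : ContDiff ℝ (⊤:ℕ∞) ξ := hξ'.of_le (by simp)
    have hζ : ContDiff ℝ (⊤:ℕ∞) ζ := hζ'.of_le (by simp)
    have d1 : ∀ (η : Sec m s k), ContDiff ℝ (⊤:ℕ∞) η → ∀ (a : Fin k) (p : M'Space m s),
        DifferentiableAt ℝ (fun q => (η q).1 a) p :=
      fun η hη a p => ((sec1_smooth hη a).differentiable (by simp)) p
    have d2 : ∀ (η : Sec m s k), ContDiff ℝ (⊤:ℕ∞) η → ∀ (σ : Fin s) (p : M'Space m s),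
        DifferentiableAt ℝ (fun q => (η q).2 σ) p :=
      fun η hη σ p => ((sec2_smooth hη σ).differentiable (by simp)) p
    funext p
    refine Prod.ext ?_ ?_
    · funext g
      show (sbr L (ξ + ζ) χ p).1 g = (sbr L ξ χ p).1 g + (sbr L ζ χ p).1 g
      rw [sbr_fst, sbr_fst, sbr_fst, Lop_sec_add, Ct_add_left]
      have e : (fun q => ((ξ + ζ) q).1 g) = fun q => (ξ q).1 g + (ζ q).1 g := rfl
      rw [e, Lop_add (d1 ξ hξ g p) (d1 ζ hζ g p)]
      ring
    · funext σ
      show (sbr L (ξ + ζ) χ p).2 σ = (sbr L ξ χ p).2 σ + (sbr L ζ χ p).2 σ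
      rw [sbr_snd, sbr_snd, sbr_snd, Lop_sec_add]
      have e : (fun q => ((ξ + ζ) q).2 σ) = fun q => (ξ q).2 σ + (ζ q).2 σ := rfl
      rw [e, Lop_add (d2 ξ hξ σ p) (d2 ζ hζ σ p)]
      ring
  · -- Jacobi identity
    intro ξ ζ χ hξ' hζ' hχ'
    funext p
    refine Prod.ext ?_ ?_
    · funext g
      exact jacobi_fst (hξ'.of_le (by simp)) (hζ'.of_le (by simp)) (hχ'.of_le (by simp)) p g
    · funext σ
      exact jacobi_snd (hξ'.of_le (by simp)) (hζ'.of_le (by simp)) (hχ'.of_le (by simp)) p σ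
  · -- Leibniz rule
    intro ξ ζ F hξ' hζ' hF'
    have hζ : ContDiff ℝ (⊤:ℕ∞) ζ := hζ'.of_le (by simp)
    have dF : ∀ p : M'Space m s, DifferentiableAt ℝ F p :=
      fun p => ((hF'.of_le (by simp)).differentiable (n := 1) (by simp)) p
    have d1 : ∀ (a : Fin k) (p : M'Space m s), DifferentiableAt ℝ (fun q => (ζ q).1 a) p :=
      fun a p => ((sec1_smooth hζ a).differentiable (by simp)) p
    have d2 : ∀ (σ : Fin s) (p : M'Space m s), DifferentiableAt ℝ (fun q => (ζ q).2 σ) p :=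
      fun σ p => ((sec2_smooth hζ σ).differentiable (by simp)) p
    funext p
    refine Prod.ext ?_ ?_
    · funext g
      show Lop L ξ (fun q => F q * (ζ q).1 g) p
          - Lop L (fun q => F q • ζ q) (fun q => (ξ q).1 g) p
          + Ct L ξ (fun q => F q • ζ q) g p
        = F p * (sbr L ξ ζ p).1 g + Lop L ξ F p * (ζ p).1 g
      rw [sbr_fst, Lop_mul (dF p) (d1 g p), Lop_sec_smul, Ct_smul_right]
      ring
    · funext σ
      show Lop L ξ (fun q => F q * (ζ q).2 σ) p
          - Lop L (fun q => F q • ζ q) (fun q => (ξ q).2 σ) p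
        = F p * (sbr L ξ ζ p).2 σ + Lop L ξ F p * (ζ p).2 σ
      rw [sbr_snd, Lop_mul (dF p) (d2 σ p), Lop_sec_smul]
      ring
  · -- characterization on projectable sections
    intro X Y u v hX hY hu hv
    have dY : ∀ (g : Fin k) (x : MSpace m), DifferentiableAt ℝ (fun x' => Y x' g) x :=
      fun g x => (((contDiff_pi.mp (hY.of_le (by simp))) g).differentiable (n := 1)
        (by simp)) x
    have dX : ∀ (g : Fin k) (x : MSpace m), DifferentiableAt ℝ (fun x' => X x' g) x :=
      fun g x => (((contDiff_pi.mp (hX.of_le (by simp))) g).differentiable (n := 1)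
        (by simp)) x
    funext p
    refine Prod.ext ?_ ?_
    · funext g
      show Lop L (fun p' => (X p'.1, u p')) (fun q => Y q.1 g) p
          - Lop L (fun p' => (Y p'.1, v p')) (fun q => X q.1 g) p
          + Ct L (fun p' => (X p'.1, u p')) (fun p' => (Y p'.1, v p')) g p
        = bracketE L X Y p.1 g
      rw [Lop_base (L := L) (g := fun x' => Y x' g) _ (dY g p.1),
        Lop_base (L := L) (g := fun x' => X x' g) _ (dX g p.1)]
      show (∑ j, (∑ e, X p.1 e * L.ρ p.1 e j) * pd j (fun x' => Y x' g) p.1)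
          - (∑ j, (∑ e, Y p.1 e * L.ρ p.1 e j) * pd j (fun x' => X x' g) p.1)
          + (∑ a, ∑ b, L.c p.1 a b g * X p.1 a * Y p.1 b)
        = bracketE L X Y p.1 g
      rw [swap_factor, swap_factor]
      have eB : bracketE L X Y p.1 g
          = (∑ a, ∑ i, (X p.1 a * L.ρ p.1 a i * pd i (fun x' => Y x' g) p.1
              - Y p.1 a * L.ρ p.1 a i * pd i (fun x' => X x' g) p.1))
            + ∑ a, ∑ b, L.c p.1 a b g * X p.1 a * Y p.1 b := rfl
      rw [eB]
      have hsplit : (∑ a, ∑ i, (X p.1 a * L.ρ p.1 a i * pd i (fun x' => Y x' g) p.1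
            - Y p.1 a * L.ρ p.1 a i * pd i (fun x' => X x' g) p.1))
          = (∑ a, X p.1 a * ∑ i, L.ρ p.1 a i * pd i (fun x' => Y x' g) p.1)
            - ∑ a, Y p.1 a * ∑ i, L.ρ p.1 a i * pd i (fun x' => X x' g) p.1 := by
        rw [← Finset.sum_sub_distrib]
        refine Finset.sum_congr rfl fun a _ => ?_
        rw [Finset.mul_sum, Finset.mul_sum, ← Finset.sum_sub_distrib]
        exact Finset.sum_congr rfl fun i _ => by ring
      rw [hsplit]
    · funext σ
      rfl
end
end

section
/- Let E be a Lie algebroid over M and T^E E* the prolongation of E over τ_E^* : E* → M. The Liouville section λ_E of (T^E E*)* defined by λ_E(a^*)(b, v) = a^*(b) for a^* ∈ E* and (b,v) ∈ (T^E E*)_{a^*}, gives rise to a 2-section Ω_E = −d^{T^E E*} λ_E which is nondegenerate and closed (d^{T^E E*} Ω_E = 0), i.e., Ω_E is a symplectic section of the Lie algebroid T^E E* → E*. -/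
noncomputable section

namespace CoordLieAlgebroid

variable {m k : ℕ} (L : CoordLieAlgebroid m k)

/-- The total space of `E*`, with coordinates `(x^i, y_a)`. -/
abbrev EStar (m k : ℕ) := (Fin m → ℝ) × (Fin k → ℝ)

/-- The fibre of the prolongation `T^E E* = {(b,v) ∈ E × TE* : ρ(b) = Tτ*(v)}` over a
point of `E*`: coordinates `(z^a, w_a)` w.r.t. the basis `{ẽ_a, ē_a}`; the element
is `(b, v)` with `b = z^a e_a` and `v = (ρ_a^i z^a ∂/∂x^i, w_a ∂/∂y_a)`. -/
abbrev ProFib (k : ℕ) := (Fin k → ℝ) × (Fin k → ℝ)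

/-- A section of the prolongation `T^E E* → E*`. -/
abbrev ProSec (m k : ℕ) := EStar m k → ProFib k

/-- The tangent vector to `E*` determined by an element of the prolongation fibre
(this is the anchor `ρ^{τ*} = pr_2` of the prolongation Lie algebroid). -/
def anchorVec (p : EStar m k) (w : ProFib k) : (Fin m → ℝ) × (Fin k → ℝ) :=
  (fun i => ∑ a, w.1 a * L.ρ p.1 a i, w.2)

/-- The anchor of a section of the prolongation applied, as a vector field on `E*`,
to a function on `E*`. -/
def secD (ξ : ProSec m k) (F : EStar m k → ℝ) (p : EStar m k) : ℝ :=
  fderiv ℝ F p (L.anchorVec p (ξ p))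

/-- The Lie bracket of the prolongation Lie algebroid `T^E E*`, in the basis
`{ẽ_a, ē_a}` (it is characterized by `[[ẽ_a, ẽ_b]] = C_{ab}^g ẽ_g`,
`[[ẽ_a, ē_b]] = [[ē_a, ē_b]] = 0` together with the Leibniz rule). -/
def proBracket (ξ ζ : ProSec m k) : ProSec m k := fun p =>
  ( fun g => L.secD ξ (fun q => (ζ q).1 g) p - L.secD ζ (fun q => (ξ q).1 g) p
      + ∑ a, ∑ b, L.c p.1 a b g * (ξ p).1 a * (ζ p).1 b,
    fun g => L.secD ξ (fun q => (ζ q).2 g) p - L.secD ζ (fun q => (ξ q).2 g) p )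

/-- The Liouville section `λ_E` of `(T^E E*)* → E*`, `λ_E(a^*)(b,v) = a^*(b)`,
evaluated on a section of the prolongation. -/
def liouville (ξ : ProSec m k) : EStar m k → ℝ := fun p => ∑ a, p.2 a * (ξ p).1 a

/-- The canonical 2-section `Ω_E = −d^{T^E E*} λ_E`, evaluated on two sections via the
Koszul formula `dθ(ξ,ζ) = ρ(ξ)θ(ζ) − ρ(ζ)θ(ξ) − θ([[ξ,ζ]])`. -/
def Omega (ξ ζ : ProSec m k) : EStar m k → ℝ := fun p =>
  -(L.secD ξ (liouville ζ) p - L.secD ζ (liouville ξ) p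
      - liouville (L.proBracket ξ ζ) p)

/-- Pointwise value of `Ω_E` on the prolongation fibre (via constant sections; the
Koszul formula is tensorial). -/
def OmegaPt (p : EStar m k) (w w' : ProFib k) : ℝ :=
  L.Omega (fun _ => w) (fun _ => w') p

/-- The exterior differential `d^{T^E E*}` of a 2-section, on sections. -/
def dOmega (ξ ζ χ : ProSec m k) : EStar m k → ℝ := fun p =>
  L.secD ξ (L.Omega ζ χ) p - L.secD ζ (L.Omega ξ χ) p + L.secD χ (L.Omega ξ ζ) p
    - L.Omega (L.proBracket ξ ζ) χ p + L.Omega (L.proBracket ξ χ) ζ p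
    - L.Omega (L.proBracket ζ χ) ξ p

end CoordLieAlgebroid

open CoordLieAlgebroid

namespace CoordLieAlgebroid

section Aux

variable {m k : ℕ} (L : CoordLieAlgebroid m k)

/-- Apply a continuous linear functional on `ℝ^n` to a vector, coordinatewise. -/
lemma clm_pi_apply {n : ℕ} (T : (Fin n → ℝ) →L[ℝ] ℝ) (v : Fin n → ℝ) :
    T v = ∑ i, v i * T (Pi.single i 1) := by
  have hv : v = ∑ i, v i • (Pi.single i 1 : Fin n → ℝ) := by
    have h1 : ∀ i, v i • (Pi.single i 1 : Fin n → ℝ) = Pi.single i (v i) := by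
      intro i; funext j
      rcases eq_or_ne i j with h | h <;> simp [Pi.single_apply, h]
    simp only [h1]
    exact (Finset.univ_sum_single v).symm
  conv_lhs => rw [hv]
  rw [map_sum]
  refine Finset.sum_congr rfl fun i _ => ?_
  rw [map_smul]; simp [smul_eq_mul]

lemma secD_sum {ι : Type*} (s : Finset ι) (F : ι → EStar m k → ℝ) (ξ : ProSec m k)
    (p : EStar m k) (hF : ∀ i ∈ s, DifferentiableAt ℝ (F i) p) :
    L.secD ξ (fun q => ∑ i ∈ s, F i q) p = ∑ i ∈ s, L.secD ξ (F i) p := by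
  unfold secD
  rw [fderiv_fun_sum hF]
  simp

lemma secD_add (F G : EStar m k → ℝ) (ξ : ProSec m k) (p : EStar m k)
    (hF : DifferentiableAt ℝ F p) (hG : DifferentiableAt ℝ G p) :
    L.secD ξ (fun q => F q + G q) p = L.secD ξ F p + L.secD ξ G p := by
  unfold secD
  rw [fderiv_fun_add hF hG]; simp

lemma secD_sub (F G : EStar m k → ℝ) (ξ : ProSec m k) (p : EStar m k)
    (hF : DifferentiableAt ℝ F p) (hG : DifferentiableAt ℝ G p) :
    L.secD ξ (fun q => F q - G q) p = L.secD ξ F p - L.secD ξ G p := by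
  unfold secD
  rw [fderiv_fun_sub hF hG]; simp

lemma secD_mul (F G : EStar m k → ℝ) (ξ : ProSec m k) (p : EStar m k)
    (hF : DifferentiableAt ℝ F p) (hG : DifferentiableAt ℝ G p) :
    L.secD ξ (fun q => F q * G q) p = L.secD ξ F p * G p + F p * L.secD ξ G p := by
  unfold secD
  rw [fderiv_fun_mul hF hG]
  simp only [ContinuousLinearMap.add_apply, ContinuousLinearMap.coe_smul',
    Pi.smul_apply, smul_eq_mul]
  ring

lemma secD_snd (a : Fin k) (ξ : ProSec m k) (p : EStar m k) :
    L.secD ξ (fun q => q.2 a) p = (ξ p).2 a := by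
  unfold secD
  have h : (fun q : EStar m k => q.2 a)
      = (ContinuousLinearMap.proj a).comp (ContinuousLinearMap.snd ℝ (Fin m → ℝ) (Fin k → ℝ)) := rfl
  rw [h, ContinuousLinearMap.fderiv]
  rfl

lemma secD_fst (g : (Fin m → ℝ) → ℝ) (ξ : ProSec m k) (p : EStar m k)
    (hg : DifferentiableAt ℝ g p.1) :
    L.secD ξ (fun q => g q.1) p
      = ∑ i, (∑ a, (ξ p).1 a * L.ρ p.1 a i) * pd i g p.1 := by
  unfold secD
  have h : (fun q : EStar m k => g q.1) = g ∘ Prod.fst := rfl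
  rw [h, fderiv_comp p hg differentiableAt_fst, fderiv_fst]
  show fderiv ℝ g p.1 ((L.anchorVec p (ξ p)).1) = _
  rw [clm_pi_apply (fderiv ℝ g p.1)]
  rfl

lemma contDiff_comp1 {ξ : ProSec m k} (hξ : ContDiff ℝ (⊤ : ℕ∞) ξ) (a : Fin k) :
    ContDiff ℝ (⊤ : ℕ∞) fun q => (ξ q).1 a := (contDiff_pi.1 hξ.fst) a

lemma contDiff_comp2 {ξ : ProSec m k} (hξ : ContDiff ℝ (⊤ : ℕ∞) ξ) (a : Fin k) :
    ContDiff ℝ (⊤ : ℕ∞) fun q => (ξ q).2 a := (contDiff_pi.1 hξ.snd) a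

lemma diffAt_comp1 {ξ : ProSec m k} (hξ : ContDiff ℝ (⊤ : ℕ∞) ξ) (a : Fin k) (p : EStar m k) :
    DifferentiableAt ℝ (fun q => (ξ q).1 a) p :=
  ((contDiff_comp1 hξ a).differentiable (by simp)).differentiableAt

lemma diffAt_comp2 {ξ : ProSec m k} (hξ : ContDiff ℝ (⊤ : ℕ∞) ξ) (a : Fin k) (p : EStar m k) :
    DifferentiableAt ℝ (fun q => (ξ q).2 a) p :=
  ((contDiff_comp2 hξ a).differentiable (by simp)).differentiableAt

lemma diffAt_snd (a : Fin k) (p : EStar m k) :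
    DifferentiableAt ℝ (fun q : EStar m k => q.2 a) p := by
  have h : (fun q : EStar m k => q.2 a)
      = (ContinuousLinearMap.proj a).comp (ContinuousLinearMap.snd ℝ (Fin m → ℝ) (Fin k → ℝ)) := rfl
  rw [h]
  exact (ContinuousLinearMap.differentiable _).differentiableAt

lemma diffAt_c (a b g : Fin k) (p : EStar m k) :
    DifferentiableAt ℝ (fun q : EStar m k => L.c q.1 a b g) p :=
  (((L.smooth_c a b g).comp contDiff_fst).differentiable (by simp)).differentiableAt

lemma contDiff_anchorField {ξ : ProSec m k} (hξ : ContDiff ℝ (⊤ : ℕ∞) ξ) :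
    ContDiff ℝ (⊤ : ℕ∞) fun q => L.anchorVec q (ξ q) := by
  refine ContDiff.prodMk (contDiff_pi.2 fun i => ?_) hξ.snd
  exact ContDiff.sum fun a _ => (contDiff_comp1 hξ a).mul ((L.smooth_ρ a i).comp contDiff_fst)

lemma contDiff_secD {ξ : ProSec m k} {F : EStar m k → ℝ}
    (hξ : ContDiff ℝ (⊤ : ℕ∞) ξ) (hF : ContDiff ℝ (⊤ : ℕ∞) F) :
    ContDiff ℝ (⊤ : ℕ∞) (L.secD ξ F) := by
  have h1 : ContDiff ℝ (⊤ : ℕ∞) (fderiv ℝ F) := hF.fderiv_right (by simp)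
  exact h1.clm_apply (L.contDiff_anchorField hξ)

lemma contDiff_proBracket {ξ ζ : ProSec m k} (hξ : ContDiff ℝ (⊤ : ℕ∞) ξ) (hζ : ContDiff ℝ (⊤ : ℕ∞) ζ) :
    ContDiff ℝ (⊤ : ℕ∞) (L.proBracket ξ ζ) := by
  unfold proBracket
  refine ContDiff.prodMk (contDiff_pi.2 fun g => ?_) (contDiff_pi.2 fun g => ?_)
  · refine ((L.contDiff_secD hξ (contDiff_comp1 hζ g)).sub
      (L.contDiff_secD hζ (contDiff_comp1 hξ g))).add ?_
    exact ContDiff.sum fun a _ => ContDiff.sum fun b _ =>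
      (((L.smooth_c a b g).comp contDiff_fst).mul (contDiff_comp1 hξ a)).mul (contDiff_comp1 hζ b)
  · exact (L.contDiff_secD hξ (contDiff_comp2 hζ g)).sub
      (L.contDiff_secD hζ (contDiff_comp2 hξ g))

lemma Omega_eq {ξ ζ : ProSec m k} (p : EStar m k)
    (hξ : ∀ a, DifferentiableAt ℝ (fun q => (ξ q).1 a) p)
    (hζ : ∀ a, DifferentiableAt ℝ (fun q => (ζ q).1 a) p) :
    L.Omega ξ ζ p = (∑ a, (ζ p).2 a * (ξ p).1 a) - (∑ a, (ξ p).2 a * (ζ p).1 a)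
      + ∑ g, p.2 g * ∑ a, ∑ b, L.c p.1 a b g * (ξ p).1 a * (ζ p).1 b := by
  have e1 : L.secD ξ (liouville ζ) p
      = ∑ a, ((ξ p).2 a * (ζ p).1 a + p.2 a * L.secD ξ (fun q => (ζ q).1 a) p) := by
    unfold liouville
    rw [L.secD_sum Finset.univ _ ξ p (fun a _ => (diffAt_snd a p).fun_mul (hζ a))]
    exact Finset.sum_congr rfl fun a _ => by
      rw [L.secD_mul _ _ ξ p (diffAt_snd a p) (hζ a), L.secD_snd]
  have e2 : L.secD ζ (liouville ξ) p
      = ∑ a, ((ζ p).2 a * (ξ p).1 a + p.2 a * L.secD ζ (fun q => (ξ q).1 a) p) := by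
    unfold liouville
    rw [L.secD_sum Finset.univ _ ζ p (fun a _ => (diffAt_snd a p).fun_mul (hξ a))]
    exact Finset.sum_congr rfl fun a _ => by
      rw [L.secD_mul _ _ ζ p (diffAt_snd a p) (hξ a), L.secD_snd]
  have e3 : liouville (L.proBracket ξ ζ) p
      = ∑ a, p.2 a * (L.secD ξ (fun q => (ζ q).1 a) p - L.secD ζ (fun q => (ξ q).1 a) p
          + ∑ a', ∑ b', L.c p.1 a' b' a * (ξ p).1 a' * (ζ p).1 b') := rfl
  unfold Omega
  rw [e1, e2, e3]
  simp only [mul_add, mul_sub, Finset.sum_add_distrib, Finset.sum_sub_distrib]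
  ring

lemma OmegaPt_eq (p : EStar m k) (w w' : ProFib k) :
    L.OmegaPt p w w' = (∑ a, w'.2 a * w.1 a) - (∑ a, w.2 a * w'.1 a)
      + ∑ g, p.2 g * ∑ a, ∑ b, L.c p.1 a b g * w.1 a * w'.1 b := by
  unfold OmegaPt
  exact L.Omega_eq p (fun a => differentiableAt_const _) (fun a => differentiableAt_const _)

lemma diffAt_OmegaInner {α β : ProSec m k} (hα : ContDiff ℝ (⊤ : ℕ∞) α) (hβ : ContDiff ℝ (⊤ : ℕ∞) β)
    (L : CoordLieAlgebroid m k) (p : EStar m k) (g : Fin k) :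
    DifferentiableAt ℝ (fun q => ∑ a, ∑ b, L.c q.1 a b g * (α q).1 a * (β q).1 b) p :=
  DifferentiableAt.fun_sum fun a _ => DifferentiableAt.fun_sum fun b _ =>
    ((L.diffAt_c a b g p).fun_mul (diffAt_comp1 hα a p)).fun_mul (diffAt_comp1 hβ b p)

lemma secD_Omega_eq {ξ α β : ProSec m k} (hξ : ContDiff ℝ (⊤ : ℕ∞) ξ)
    (hα : ContDiff ℝ (⊤ : ℕ∞) α) (hβ : ContDiff ℝ (⊤ : ℕ∞) β) (p : EStar m k) :
    L.secD ξ (L.Omega α β) p =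
      ((∑ a, (L.secD ξ (fun q => (β q).2 a) p * (α p).1 a
            + (β p).2 a * L.secD ξ (fun q => (α q).1 a) p))
      - ∑ a, (L.secD ξ (fun q => (α q).2 a) p * (β p).1 a
            + (α p).2 a * L.secD ξ (fun q => (β q).1 a) p))
      + ∑ g, ((ξ p).2 g * ∑ a, ∑ b, L.c p.1 a b g * (α p).1 a * (β p).1 b
          + p.2 g * ∑ a, ∑ b,
            (((∑ i, (∑ u, (ξ p).1 u * L.ρ p.1 u i) * pd i (fun x => L.c x a b g) p.1)
                  * (α p).1 a
                + L.c p.1 a b g * L.secD ξ (fun q => (α q).1 a) p) * (β p).1 b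
              + L.c p.1 a b g * (α p).1 a * L.secD ξ (fun q => (β q).1 b) p)) := by
  have hfun : L.Omega α β = fun q =>
      (∑ a, (β q).2 a * (α q).1 a) - (∑ a, (α q).2 a * (β q).1 a)
        + ∑ g, q.2 g * ∑ a, ∑ b, L.c q.1 a b g * (α q).1 a * (β q).1 b :=
    funext fun q => L.Omega_eq q (fun a => diffAt_comp1 hα a q) (fun a => diffAt_comp1 hβ a q)
  have hd1 : DifferentiableAt ℝ (fun q => ∑ a, (β q).2 a * (α q).1 a) p :=
    DifferentiableAt.fun_sum fun a _ => (diffAt_comp2 hβ a p).fun_mul (diffAt_comp1 hα a p)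
  have hd2 : DifferentiableAt ℝ (fun q => ∑ a, (α q).2 a * (β q).1 a) p :=
    DifferentiableAt.fun_sum fun a _ => (diffAt_comp2 hα a p).fun_mul (diffAt_comp1 hβ a p)
  have hd3 : DifferentiableAt ℝ
      (fun q : EStar m k => ∑ g, q.2 g * ∑ a, ∑ b, L.c q.1 a b g * (α q).1 a * (β q).1 b) p :=
    DifferentiableAt.fun_sum fun g _ => (diffAt_snd g p).fun_mul (diffAt_OmegaInner hα hβ L p g)
  rw [hfun, L.secD_add _ _ ξ p (hd1.fun_sub hd2) hd3, L.secD_sub _ _ ξ p hd1 hd2]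
  congr 1
  · congr 1
    · rw [L.secD_sum Finset.univ _ ξ p
        (fun a _ => (diffAt_comp2 hβ a p).fun_mul (diffAt_comp1 hα a p))]
      exact Finset.sum_congr rfl fun a _ => by
        rw [L.secD_mul _ _ ξ p (diffAt_comp2 hβ a p) (diffAt_comp1 hα a p)]
    · rw [L.secD_sum Finset.univ _ ξ p
        (fun a _ => (diffAt_comp2 hα a p).fun_mul (diffAt_comp1 hβ a p))]
      exact Finset.sum_congr rfl fun a _ => by
        rw [L.secD_mul _ _ ξ p (diffAt_comp2 hα a p) (diffAt_comp1 hβ a p)]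
  · rw [L.secD_sum Finset.univ _ ξ p
      (fun g _ => (diffAt_snd g p).fun_mul (diffAt_OmegaInner hα hβ L p g))]
    refine Finset.sum_congr rfl fun g _ => ?_
    rw [L.secD_mul _ _ ξ p (diffAt_snd g p) (diffAt_OmegaInner hα hβ L p g), L.secD_snd]
    congr 1
    congr 1
    rw [L.secD_sum Finset.univ
      (fun (a : Fin k) (q : EStar m k) => ∑ b, L.c q.1 a b g * (α q).1 a * (β q).1 b) ξ p
      (fun a _ => DifferentiableAt.fun_sum fun b _ =>
      ((L.diffAt_c a b g p).fun_mul (diffAt_comp1 hα a p)).fun_mul (diffAt_comp1 hβ b p))]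
    refine Finset.sum_congr rfl fun a _ => ?_
    rw [L.secD_sum Finset.univ
      (fun (b : Fin k) (q : EStar m k) => L.c q.1 a b g * (α q).1 a * (β q).1 b) ξ p
      (fun b _ =>
      ((L.diffAt_c a b g p).fun_mul (diffAt_comp1 hα a p)).fun_mul (diffAt_comp1 hβ b p))]
    refine Finset.sum_congr rfl fun b _ => ?_
    rw [L.secD_mul _ _ ξ p ((L.diffAt_c a b g p).fun_mul (diffAt_comp1 hα a p))
      (diffAt_comp1 hβ b p)]
    rw [L.secD_mul _ _ ξ p (L.diffAt_c a b g p) (diffAt_comp1 hα a p)]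
    rw [L.secD_fst _ ξ p (((L.smooth_c a b g).differentiable (by simp)).differentiableAt)]

/-- The core algebraic identity behind closedness of `Ω_E`, in abstract atoms. -/
lemma core_algebra {m k : ℕ}
    (y X1 X2 Z1 Z2 W1 W2 : Fin k → ℝ)
    (DXZ1 DZX1 DXW1 DWX1 DZW1 DWZ1 DXZ2 DZX2 DXW2 DWX2 DZW2 DWZ2 : Fin k → ℝ)
    (C : Fin k → Fin k → Fin k → ℝ)
    (R : Fin k → Fin m → ℝ)
    (pdc : Fin m → Fin k → Fin k → Fin k → ℝ)
    (hC : ∀ a b g, C a b g = - C b a g)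
    (hpdc : ∀ i a b g, pdc i a b g = - pdc i b a g)
    (hjac : ∀ a b g ν, ((∑ i, R a i * pdc i b g ν) + ∑ μ, C b g μ * C a μ ν)
        + ((∑ i, R b i * pdc i g a ν) + ∑ μ, C g a μ * C b μ ν)
        + ((∑ i, R g i * pdc i a b ν) + ∑ μ, C a b μ * C g μ ν) = 0) :
    (((∑ a, (DXW2 a * Z1 a + W2 a * DXZ1 a)) - ∑ a, (DXZ2 a * W1 a + Z2 a * DXW1 a))
      + ∑ g, (X2 g * ∑ a, ∑ b, C a b g * Z1 a * W1 b
          + y g * ∑ a, ∑ b,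
            (((∑ i, (∑ u, X1 u * R u i) * pdc i a b g) * Z1 a + C a b g * DXZ1 a) * W1 b
              + C a b g * Z1 a * DXW1 b)))
    - (((∑ a, (DZW2 a * X1 a + W2 a * DZX1 a)) - ∑ a, (DZX2 a * W1 a + X2 a * DZW1 a))
      + ∑ g, (Z2 g * ∑ a, ∑ b, C a b g * X1 a * W1 b
          + y g * ∑ a, ∑ b,
            (((∑ i, (∑ u, Z1 u * R u i) * pdc i a b g) * X1 a + C a b g * DZX1 a) * W1 b
              + C a b g * X1 a * DZW1 b)))
    + (((∑ a, (DWZ2 a * X1 a + Z2 a * DWX1 a)) - ∑ a, (DWX2 a * Z1 a + X2 a * DWZ1 a))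
      + ∑ g, (W2 g * ∑ a, ∑ b, C a b g * X1 a * Z1 b
          + y g * ∑ a, ∑ b,
            (((∑ i, (∑ u, W1 u * R u i) * pdc i a b g) * X1 a + C a b g * DWX1 a) * Z1 b
              + C a b g * X1 a * DWZ1 b)))
    - ((∑ a, W2 a * (DXZ1 a - DZX1 a + ∑ a', ∑ b', C a' b' a * X1 a' * Z1 b'))
      - (∑ a, (DXZ2 a - DZX2 a) * W1 a)
      + ∑ g, y g * ∑ a, ∑ b,
          C a b g * (DXZ1 a - DZX1 a + ∑ a', ∑ b', C a' b' a * X1 a' * Z1 b') * W1 b)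
    + ((∑ a, Z2 a * (DXW1 a - DWX1 a + ∑ a', ∑ b', C a' b' a * X1 a' * W1 b'))
      - (∑ a, (DXW2 a - DWX2 a) * Z1 a)
      + ∑ g, y g * ∑ a, ∑ b,
          C a b g * (DXW1 a - DWX1 a + ∑ a', ∑ b', C a' b' a * X1 a' * W1 b') * Z1 b)
    - ((∑ a, X2 a * (DZW1 a - DWZ1 a + ∑ a', ∑ b', C a' b' a * Z1 a' * W1 b'))
      - (∑ a, (DZW2 a - DWZ2 a) * X1 a)
      + ∑ g, y g * ∑ a, ∑ b,
          C a b g * (DZW1 a - DWZ1 a + ∑ a', ∑ b', C a' b' a * Z1 a' * W1 b') * X1 b)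
    = 0 := by
  have hconv : ∀ (V : Fin k → ℝ) (a b g : Fin k),
      (∑ i, (∑ u, V u * R u i) * pdc i a b g) = ∑ u, V u * ∑ i, R u i * pdc i a b g := by
    intro V a b g
    simp only [Finset.sum_mul]
    rw [Finset.sum_comm]
    refine Finset.sum_congr rfl fun u _ => ?_
    rw [Finset.mul_sum]
    exact Finset.sum_congr rfl fun i _ => by ring
  simp only [hconv]
  have hJ : (∑ ν, ∑ a, ∑ b, ∑ g, y ν * (X1 a * (Z1 b * (W1 g *
      (((∑ i, R a i * pdc i b g ν) + ∑ μ, C b g μ * C a μ ν)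
        + ((∑ i, R b i * pdc i g a ν) + ∑ μ, C g a μ * C b μ ν)
        + ((∑ i, R g i * pdc i a b ν) + ∑ μ, C a b μ * C g μ ν)))))) = 0 := by
    refine Finset.sum_eq_zero fun ν _ => Finset.sum_eq_zero fun a _ =>
      Finset.sum_eq_zero fun b _ => Finset.sum_eq_zero fun g _ => ?_
    rw [hjac]
    ring
  simp only [mul_add, add_mul, mul_sub, sub_mul, Finset.mul_sum, Finset.sum_mul,
    Finset.sum_add_distrib, Finset.sum_sub_distrib, mul_assoc] at hJ ⊢
  have eS1 : (∑ x : Fin k, ∑ x1 : Fin k, ∑ i : Fin k, y x * (C x1 i x * (Z1 x1 * DXW1 i)))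
      = -∑ x : Fin k, ∑ x1 : Fin k, ∑ i : Fin k, y x * (C x1 i x * (DXW1 x1 * Z1 i)) := by
    simp only [← Finset.sum_neg_distrib]
    refine Finset.sum_congr rfl fun x _ => ?_
    refine Eq.trans Finset.sum_comm ?_
    refine Finset.sum_congr rfl fun v1 _ => Finset.sum_congr rfl fun v2 _ => ?_
    rw [hC v2 v1 x]; ring
  have eS2 : (∑ x : Fin k, ∑ x1 : Fin k, ∑ i : Fin k, y x * (C x1 i x * (X1 x1 * DZW1 i)))
      = -∑ x : Fin k, ∑ x1 : Fin k, ∑ i : Fin k, y x * (C x1 i x * (DZW1 x1 * X1 i)) := by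
    simp only [← Finset.sum_neg_distrib]
    refine Finset.sum_congr rfl fun x _ => ?_
    refine Eq.trans Finset.sum_comm ?_
    refine Finset.sum_congr rfl fun v1 _ => Finset.sum_congr rfl fun v2 _ => ?_
    rw [hC v2 v1 x]; ring
  have eS3 : (∑ x : Fin k, ∑ x1 : Fin k, ∑ i : Fin k, y x * (C x1 i x * (X1 x1 * DWZ1 i)))
      = -∑ x : Fin k, ∑ x1 : Fin k, ∑ i : Fin k, y x * (C x1 i x * (DWZ1 x1 * X1 i)) := by
    simp only [← Finset.sum_neg_distrib]
    refine Finset.sum_congr rfl fun x _ => ?_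
    refine Eq.trans Finset.sum_comm ?_
    refine Finset.sum_congr rfl fun v1 _ => Finset.sum_congr rfl fun v2 _ => ?_
    rw [hC v2 v1 x]; ring
  have eP1 : (∑ x : Fin k, ∑ x1 : Fin k, ∑ x2 : Fin k, ∑ x3 : Fin k, ∑ i : Fin m,
        y x * (X1 x3 * (R x3 i * (pdc i x1 x2 x * (Z1 x1 * W1 x2)))))
      = ∑ x : Fin k, ∑ x1 : Fin k, ∑ x2 : Fin k, ∑ x3 : Fin k, ∑ i : Fin m,
        y x * (X1 x1 * (Z1 x2 * (W1 x3 * (R x1 i * pdc i x2 x3 x)))) := by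
    refine Finset.sum_congr rfl fun x _ => ?_
    refine Eq.trans (Finset.sum_congr rfl fun a _ => Finset.sum_comm) ?_
    refine Eq.trans Finset.sum_comm ?_
    refine Finset.sum_congr rfl fun v1 _ => Finset.sum_congr rfl fun v2 _ =>
      Finset.sum_congr rfl fun v3 _ => Finset.sum_congr rfl fun v4 _ => ?_
    ring
  have eP2 : (∑ x : Fin k, ∑ x1 : Fin k, ∑ x2 : Fin k, ∑ x3 : Fin k, ∑ i : Fin m,
        y x * (Z1 x3 * (R x3 i * (pdc i x1 x2 x * (X1 x1 * W1 x2)))))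
      = -∑ x : Fin k, ∑ x1 : Fin k, ∑ x2 : Fin k, ∑ x3 : Fin k, ∑ i : Fin m,
        y x * (X1 x1 * (Z1 x2 * (W1 x3 * (R x2 i * pdc i x3 x1 x)))) := by
    simp only [← Finset.sum_neg_distrib]
    refine Finset.sum_congr rfl fun x _ => ?_
    refine Eq.trans (Finset.sum_congr rfl fun a _ => Finset.sum_comm) ?_
    refine Finset.sum_congr rfl fun v1 _ => Finset.sum_congr rfl fun v2 _ =>
      Finset.sum_congr rfl fun v3 _ => Finset.sum_congr rfl fun v4 _ => ?_
    rw [hpdc v4 v1 v3 x]; ring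
  have eP3 : (∑ x : Fin k, ∑ x1 : Fin k, ∑ x2 : Fin k, ∑ x3 : Fin k, ∑ i : Fin m,
        y x * (W1 x3 * (R x3 i * (pdc i x1 x2 x * (X1 x1 * Z1 x2)))))
      = ∑ x : Fin k, ∑ x1 : Fin k, ∑ x2 : Fin k, ∑ x3 : Fin k, ∑ i : Fin m,
        y x * (X1 x1 * (Z1 x2 * (W1 x3 * (R x3 i * pdc i x1 x2 x)))) := by
    refine Finset.sum_congr rfl fun x _ => Finset.sum_congr rfl fun v1 _ =>
      Finset.sum_congr rfl fun v2 _ => Finset.sum_congr rfl fun v3 _ =>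
      Finset.sum_congr rfl fun v4 _ => ?_
    ring
  have eC1 : (∑ x : Fin k, ∑ x1 : Fin k, ∑ x2 : Fin k, ∑ x3 : Fin k, ∑ i : Fin k,
        y x * (C x1 x2 x * (C x3 i x1 * (X1 x3 * (Z1 i * W1 x2)))))
      = -∑ x : Fin k, ∑ x1 : Fin k, ∑ x2 : Fin k, ∑ x3 : Fin k, ∑ i : Fin k,
        y x * (X1 x1 * (Z1 x2 * (W1 x3 * (C x1 x2 i * C x3 i x)))) := by
    simp only [← Finset.sum_neg_distrib]
    refine Finset.sum_congr rfl fun x _ => ?_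
    refine Eq.trans (Finset.sum_congr rfl fun a _ => Finset.sum_comm) ?_
    refine Eq.trans Finset.sum_comm ?_
    refine Eq.trans (Finset.sum_congr rfl fun a _ => Finset.sum_congr rfl fun b _ => Finset.sum_comm) ?_
    refine Eq.trans (Finset.sum_congr rfl fun a _ => Finset.sum_comm) ?_
    refine Eq.trans (Finset.sum_congr rfl fun a _ => Finset.sum_congr rfl fun b _ => Finset.sum_comm) ?_
    refine Finset.sum_congr rfl fun v1 _ => Finset.sum_congr rfl fun v2 _ =>
      Finset.sum_congr rfl fun v3 _ => Finset.sum_congr rfl fun v4 _ => ?_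
    rw [hC v4 v3 x]; ring
  have eC2 : (∑ x : Fin k, ∑ x1 : Fin k, ∑ x2 : Fin k, ∑ x3 : Fin k, ∑ i : Fin k,
        y x * (C x1 x2 x * (C x3 i x1 * (X1 x3 * (W1 i * Z1 x2)))))
      = ∑ x : Fin k, ∑ x1 : Fin k, ∑ x2 : Fin k, ∑ x3 : Fin k, ∑ i : Fin k,
        y x * (X1 x1 * (Z1 x2 * (W1 x3 * (C x3 x1 i * C x2 i x)))) := by
    refine Finset.sum_congr rfl fun x _ => ?_
    refine Eq.trans (Finset.sum_congr rfl fun a _ => Finset.sum_comm) ?_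
    refine Eq.trans Finset.sum_comm ?_
    refine Eq.trans (Finset.sum_congr rfl fun a _ => Finset.sum_comm) ?_
    refine Eq.trans (Finset.sum_congr rfl fun a _ => Finset.sum_congr rfl fun b _ => Finset.sum_comm) ?_
    refine Finset.sum_congr rfl fun v1 _ => Finset.sum_congr rfl fun v2 _ =>
      Finset.sum_congr rfl fun v3 _ => Finset.sum_congr rfl fun v4 _ => ?_
    rw [hC v4 v2 x, hC v1 v3 v4]; ring
  have eC3 : (∑ x : Fin k, ∑ x1 : Fin k, ∑ x2 : Fin k, ∑ x3 : Fin k, ∑ i : Fin k,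
        y x * (C x1 x2 x * (C x3 i x1 * (Z1 x3 * (W1 i * X1 x2)))))
      = -∑ x : Fin k, ∑ x1 : Fin k, ∑ x2 : Fin k, ∑ x3 : Fin k, ∑ i : Fin k,
        y x * (X1 x1 * (Z1 x2 * (W1 x3 * (C x2 x3 i * C x1 i x)))) := by
    simp only [← Finset.sum_neg_distrib]
    refine Finset.sum_congr rfl fun x _ => ?_
    refine Eq.trans Finset.sum_comm ?_
    refine Eq.trans (Finset.sum_congr rfl fun a _ => Finset.sum_comm) ?_
    refine Eq.trans (Finset.sum_congr rfl fun a _ => Finset.sum_congr rfl fun b _ => Finset.sum_comm) ?_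
    refine Finset.sum_congr rfl fun v1 _ => Finset.sum_congr rfl fun v2 _ =>
      Finset.sum_congr rfl fun v3 _ => Finset.sum_congr rfl fun v4 _ => ?_
    rw [hC v4 v1 x]; ring
  rw [eS1, eS2, eS3, eP1, eP2, eP3, eC1, eC2, eC3]
  linear_combination hJ


end Aux

end CoordLieAlgebroid
/-- for a Lie algebroid `E` over `M`, the 2-section
`Ω_E = −d^{T^E E*} λ_E` of the prolongation `T^E E* → E*` defined from the Liouville
section `λ_E(a^*)(b,v) = a^*(b)` is nondegenerate (at each point of `E*` the map
`z ↦ i_z Ω_E` from the fibre to its dual is a linear isomorphism, equivalently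
injective since the fibres are finite dimensional) and closed, `d^{T^E E*} Ω_E = 0`;
i.e. `Ω_E` is a symplectic section of `T^E E* → E*`. -/
theorem canonical_symplectic_section {m k : ℕ} (L : CoordLieAlgebroid m k) :
    (∀ p : EStar m k, ∀ w : ProFib k,
        (∀ w' : ProFib k, L.OmegaPt p w w' = 0) → w = 0)
    ∧ (∀ ξ ζ χ : ProSec m k, ContDiff ℝ (⊤ : ℕ∞) ξ → ContDiff ℝ (⊤ : ℕ∞) ζ → ContDiff ℝ (⊤ : ℕ∞) χ →
        ∀ p : EStar m k, L.dOmega ξ ζ χ p = 0) := by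
  constructor
  · intro p w h
    have h1 : ∀ b, w.1 b = 0 := by
      intro b
      have hb := h ((0 : Fin k → ℝ), (Pi.single b 1 : Fin k → ℝ))
      rw [L.OmegaPt_eq] at hb
      simpa [Pi.single_apply] using hb
    have h2 : ∀ b, w.2 b = 0 := by
      intro b
      have hb := h ((Pi.single b 1 : Fin k → ℝ), (0 : Fin k → ℝ))
      rw [L.OmegaPt_eq] at hb
      simp [Pi.single_apply, h1] at hb
      exact hb
    ext b
    · exact h1 b
    · exact h2 b
  · intro ξ ζ χ hξ hζ hχ p
    have hbrXZ := L.contDiff_proBracket hξ hζ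
    have hbrXW := L.contDiff_proBracket hξ hχ
    have hbrZW := L.contDiff_proBracket hζ hχ
    have E1 := L.secD_Omega_eq hξ hζ hχ p
    have E2 := L.secD_Omega_eq hζ hξ hχ p
    have E3 := L.secD_Omega_eq hχ hξ hζ p
    have E4 := L.Omega_eq (ξ := L.proBracket ξ ζ) (ζ := χ) p
      (fun a => diffAt_comp1 hbrXZ a p) (fun a => diffAt_comp1 hχ a p)
    have E5 := L.Omega_eq (ξ := L.proBracket ξ χ) (ζ := ζ) p
      (fun a => diffAt_comp1 hbrXW a p) (fun a => diffAt_comp1 hζ a p)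
    have E6 := L.Omega_eq (ξ := L.proBracket ζ χ) (ζ := ξ) p
      (fun a => diffAt_comp1 hbrZW a p) (fun a => diffAt_comp1 hξ a p)
    unfold dOmega
    rw [E1, E2, E3, E4, E5, E6]
    simp only [proBracket]
    have hpdc : ∀ (i : Fin m) (a b g : Fin k),
        pd i (fun x => L.c x a b g) p.1 = - pd i (fun x => L.c x b a g) p.1 := by
      intro i a b g
      have hc : (fun x => L.c x a b g) = fun x => -(L.c x b a g) :=
        funext fun x => L.c_antisymm x a b g
      rw [hc]
      unfold pd
      rw [fderiv_fun_neg]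
      simp
    exact core_algebra p.2 (ξ p).1 (ξ p).2 (ζ p).1 (ζ p).2 (χ p).1 (χ p).2
      (fun a => L.secD ξ (fun q => (ζ q).1 a) p) (fun a => L.secD ζ (fun q => (ξ q).1 a) p)
      (fun a => L.secD ξ (fun q => (χ q).1 a) p) (fun a => L.secD χ (fun q => (ξ q).1 a) p)
      (fun a => L.secD ζ (fun q => (χ q).1 a) p) (fun a => L.secD χ (fun q => (ζ q).1 a) p)
      (fun a => L.secD ξ (fun q => (ζ q).2 a) p) (fun a => L.secD ζ (fun q => (ξ q).2 a) p)
      (fun a => L.secD ξ (fun q => (χ q).2 a) p) (fun a => L.secD χ (fun q => (ξ q).2 a) p)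
      (fun a => L.secD ζ (fun q => (χ q).2 a) p) (fun a => L.secD χ (fun q => (ζ q).2 a) p)
      (fun a b g => L.c p.1 a b g) (fun u i => L.ρ p.1 u i)
      (fun i a b g => pd i (fun x => L.c x a b g) p.1)
      (fun a b g => L.c_antisymm p.1 a b g) hpdc
      (fun a b g ν => L.jacobi p.1 a b g ν)
end
end

section
/- In the local basis {ẽ_α, ē_α} of sections of the prolongation T^E E* → E* induced by local coordinates (x^i) on M and a local basis {e_α} of Γ(E), the Liouville section and the canonical symplectic section are given by λ_E = y_α ẽ^α and Ω_E = ẽ^α ∧ ē^α + (1/2) C^γ_{αβ} y_γ ẽ^α ∧ ẽ^β, where C^γ_{αβ} are the structure functions defined by [[e_α, e_β]]_E = C^γ_{αβ} e_γ and (x^i, y_α) are induced coordinates on E*. -/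
noncomputable section

open CoordLieAlgebroid
section Aux
variable {m k : ℕ}

lemma comp_diffAt {f : EStar m k → ProFib k} (hf : ContDiff ℝ (⊤ : ℕ∞) f) (a : Fin k)
    (p : EStar m k) : DifferentiableAt ℝ (fun q => (f q).1 a) p := by
  have h1 : DifferentiableAt ℝ f p := hf.differentiable (by simp) p
  exact (((ContinuousLinearMap.proj a).comp
    (ContinuousLinearMap.fst ℝ (Fin k → ℝ) (Fin k → ℝ))).differentiableAt).comp p h1

lemma snd_eval_fderiv (a : Fin k) (p u : EStar m k) :
    fderiv ℝ (fun q : EStar m k => q.2 a) p u = u.2 a := by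
  have : (fun q : EStar m k => q.2 a)
      = ((ContinuousLinearMap.proj a).comp (ContinuousLinearMap.snd ℝ (Fin m → ℝ) (Fin k → ℝ))) := rfl
  rw [this, ContinuousLinearMap.fderiv]
  rfl

lemma liouville_fderiv (f : EStar m k → ProFib k) (hf : ContDiff ℝ (⊤ : ℕ∞) f)
    (p u : EStar m k) :
    fderiv ℝ (fun q : EStar m k => ∑ a, q.2 a * (f q).1 a) p u
      = ∑ a, (u.2 a * (f p).1 a + p.2 a * fderiv ℝ (fun q => (f q).1 a) p u) := by
  have hdy : ∀ a : Fin k, DifferentiableAt ℝ (fun q : EStar m k => q.2 a) p := fun a =>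
    ((ContinuousLinearMap.proj a).comp
      (ContinuousLinearMap.snd ℝ (Fin m → ℝ) (Fin k → ℝ))).differentiableAt
  have hterm : ∀ a ∈ (Finset.univ : Finset (Fin k)),
      DifferentiableAt ℝ (fun q : EStar m k => q.2 a * (f q).1 a) p := fun a _ =>
    (hdy a).mul (comp_diffAt hf a p)
  rw [fderiv_fun_sum hterm]
  simp only [ContinuousLinearMap.coe_sum', Finset.sum_apply]
  refine Finset.sum_congr rfl fun a _ => ?_
  rw [fderiv_fun_mul (hdy a) (comp_diffAt hf a p)]
  simp only [ContinuousLinearMap.add_apply, ContinuousLinearMap.coe_smul',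
    Pi.smul_apply, smul_eq_mul, snd_eval_fderiv]
  ring

end Aux


/-- in the local basis `{ẽ_a, ē_a}` of sections of the prolongation
`T^E E* → E*` induced by coordinates `(x^i)` on `M` and a basis `{e_a}` of `Γ(E)`
(with induced coordinates `(x^i, y_a)` on `E*`), the Liouville section and the
canonical symplectic section are `λ_E = y_a ẽ^a` and
`Ω_E = ẽ^a ∧ ē^a + (1/2) C_{ab}^g y_g ẽ^a ∧ ẽ^b`; i.e. evaluated on (smooth) sections
`ξ, ζ` with components `(ξ^a, ξ̄_a)`, `(ζ^a, ζ̄_a)`: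
`λ_E(ξ) = Σ_a y_a ξ^a` and
`Ω_E(ξ,ζ) = Σ_a (ξ^a ζ̄_a − ζ^a ξ̄_a) + (1/2) Σ_{a,b,g} C_{ab}^g y_g (ξ^a ζ^b − ξ^b ζ^a)`. -/
theorem liouville_Omega_local_formulas {m k : ℕ} (L : CoordLieAlgebroid m k)
    (ξ ζ : ProSec m k) (hξ : ContDiff ℝ (⊤ : ℕ∞) ξ) (hζ : ContDiff ℝ (⊤ : ℕ∞) ζ) :
    (∀ p : EStar m k, liouville ξ p = ∑ a, p.2 a * (ξ p).1 a)
    ∧ (∀ p : EStar m k,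
        L.Omega ξ ζ p
          = (∑ a, ((ξ p).1 a * (ζ p).2 a - (ζ p).1 a * (ξ p).2 a))
            + (1/2) * ∑ a, ∑ b, ∑ g,
                L.c p.1 a b g * p.2 g * ((ξ p).1 a * (ζ p).1 b - (ξ p).1 b * (ζ p).1 a)) := by
  refine ⟨fun p => rfl, fun p => ?_⟩
  have key : ∀ (f g : ProSec m k), ContDiff ℝ (⊤ : ℕ∞) f → ContDiff ℝ (⊤ : ℕ∞) g →
      L.secD f (liouville g) p
        = (∑ a, ((f p).2 a * (g p).1 a))
          + ∑ a, p.2 a * L.secD f (fun q => (g q).1 a) p := by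
    intro f g hf hg
    unfold CoordLieAlgebroid.secD CoordLieAlgebroid.liouville
    rw [liouville_fderiv g hg]
    simp [Finset.sum_add_distrib, CoordLieAlgebroid.anchorVec, CoordLieAlgebroid.secD]
  have hsum : (1/2 : ℝ) * (∑ a, ∑ b, ∑ g,
      L.c p.1 a b g * p.2 g * ((ξ p).1 a * (ζ p).1 b - (ξ p).1 b * (ζ p).1 a))
      = ∑ g, p.2 g * ∑ a, ∑ b, L.c p.1 a b g * (ξ p).1 a * (ζ p).1 b := by
    have swap : (∑ a, ∑ b, ∑ g, L.c p.1 a b g * p.2 g * ((ξ p).1 b * (ζ p).1 a))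
        = - ∑ a, ∑ b, ∑ g, L.c p.1 a b g * p.2 g * ((ξ p).1 a * (ζ p).1 b) := by
      rw [Finset.sum_comm, ← Finset.sum_neg_distrib]
      refine Finset.sum_congr rfl fun a _ => ?_
      rw [← Finset.sum_neg_distrib]
      refine Finset.sum_congr rfl fun b _ => ?_
      rw [← Finset.sum_neg_distrib]
      refine Finset.sum_congr rfl fun g _ => ?_
      rw [L.c_antisymm p.1 b a g]; ring
    have h2 : (∑ a, ∑ b, ∑ g, L.c p.1 a b g * p.2 g * ((ξ p).1 a * (ζ p).1 b))
        = ∑ g, p.2 g * ∑ a, ∑ b, L.c p.1 a b g * (ξ p).1 a * (ζ p).1 b := by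
      have step1 : ∀ a : Fin k, (∑ b, ∑ g, L.c p.1 a b g * p.2 g * ((ξ p).1 a * (ζ p).1 b))
          = ∑ g, ∑ b, p.2 g * (L.c p.1 a b g * (ξ p).1 a * (ζ p).1 b) := by
        intro a
        rw [Finset.sum_comm]
        exact Finset.sum_congr rfl fun g _ => Finset.sum_congr rfl fun b _ => by ring
      simp only [step1]
      rw [Finset.sum_comm]
      refine Finset.sum_congr rfl fun g _ => ?_
      rw [Finset.mul_sum]
      exact Finset.sum_congr rfl fun a _ => by rw [Finset.mul_sum]
    simp only [mul_sub, Finset.sum_sub_distrib, swap]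
    rw [h2]; ring
  rw [hsum]
  unfold CoordLieAlgebroid.Omega
  rw [key ξ ζ hξ hζ, key ζ ξ hζ hξ]
  unfold CoordLieAlgebroid.liouville CoordLieAlgebroid.proBracket
  simp only [mul_add, mul_sub, Finset.sum_add_distrib, Finset.sum_sub_distrib]
  have e1 : (∑ x, (ξ p).2 x * (ζ p).1 x) = ∑ x, (ζ p).1 x * (ξ p).2 x :=
    Finset.sum_congr rfl fun _ _ => mul_comm _ _
  have e2 : (∑ x, (ζ p).2 x * (ξ p).1 x) = ∑ x, (ξ p).1 x * (ζ p).2 x :=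
    Finset.sum_congr rfl fun _ _ => mul_comm _ _
  rw [e1, e2]; ring
end
end

section
/- Let h : V* → A^+ be a Hamiltonian section (μ ∘ h = Id, where μ : A^+ → V* is the canonical projection). Then the map Th : T^Ã V* → T^Ã A^+, Th(ã, X_α) = (ã, (T_α h)(X_α)), together with h, is a Lie algebroid morphism from the prolongation T^Ã V* → V* to the prolongation T^Ã A^+ → A^+. -/
noncomputable section

/- Setup for Lie affgebroids in local coordinates. A Lie affgebroid `A` over `M = ℝ^m`
modelled on a rank-`n` vector bundle `V` is encoded through its bidual Lie algebroid
`Ã` of rank `n+1`, trivialized by a local basis `{e_0, e_α}` adapted to the 1-cocycle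
`1_A` (`1_A(e_0) = 1`, `1_A(e_α) = 0`); the cocycle condition `d^Ã 1_A = 0` reads
`C_{ab}^0 = 0`. Indices `a : Fin (n+1)`, `0 = e_0`, `α.succ = e_α`. -/
namespace Aff

variable {m n : ℕ}

/-- The dual `V*` of the model vector bundle, with coordinates `(x^i, y_α)`. -/
abbrev VStar (m n : ℕ) := (Fin m → ℝ) × (Fin n → ℝ)

/-- The fibre of the prolongation `T^Ã V* = {(ã,v) : ρ_Ã(ã) = Tτ_V^*(v)}`:
coordinates `(z^0, z^α, v_α)` w.r.t. the adapted basis `{ẽ_0, ẽ_α, ē_α}`. -/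
abbrev AFib (n : ℕ) := (Fin (n + 1) → ℝ) × (Fin n → ℝ)

/-- Sections of the prolongation `T^Ã V* → V*`. -/
abbrev ASec (m n : ℕ) := VStar m n → AFib n

/-- The anchor `ρ_Ã^{τ_V^*}` of the prolongation, as a tangent vector to `V*`. -/
def avec (L : CoordLieAlgebroid m (n + 1)) (p : VStar m n) (w : AFib n) :
    (Fin m → ℝ) × (Fin n → ℝ) :=
  (fun i => ∑ a, w.1 a * L.ρ p.1 a i, w.2)

/-- The anchor of a prolongation section applied, as a vector field on `V*`, to a
function on `V*`. -/
def aD (L : CoordLieAlgebroid m (n + 1)) (ξ : ASec m n) (F : VStar m n → ℝ)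
    (p : VStar m n) : ℝ :=
  fderiv ℝ F p (avec L p (ξ p))

/-- The Lie bracket of the prolongation Lie algebroid `T^Ã V*` in the adapted basis. -/
def aBracket (L : CoordLieAlgebroid m (n + 1)) (ξ ζ : ASec m n) : ASec m n := fun p =>
  ( fun g => aD L ξ (fun q => (ζ q).1 g) p - aD L ζ (fun q => (ξ q).1 g) p
      + ∑ a, ∑ b, L.c p.1 a b g * (ξ p).1 a * (ζ p).1 b,
    fun g => aD L ξ (fun q => (ζ q).2 g) p - aD L ζ (fun q => (ξ q).2 g) p )

/-- The 1-cocycle `η = (pr_1, τ_V^*)^*(1_A)` of `T^Ã V*`: `η(ã, X) = 1_A(ã)`. -/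
def etaSec (ξ : ASec m n) : VStar m n → ℝ := fun p => (ξ p).1 0

/-- The section `λ_h = (Th, h)^*(λ_Ã)` of `(T^Ã V*)*` associated with the Hamiltonian
section `h(x^i, y_α) = (x^i, −H(x,y), y_α)`: `λ_h(p)(ã, X) = h(p)(ã)`, i.e.
`λ_h = −H ẽ^0 + y_α ẽ^α`. -/
def lambdah (H : VStar m n → ℝ) (ξ : ASec m n) : VStar m n → ℝ := fun p =>
  -H p * (ξ p).1 0 + ∑ β, p.2 β * (ξ p).1 β.succ

/-- The 2-section `Ω_h = (Th, h)^*(Ω_Ã) = −d^{T^Ã V*} λ_h`, on sections, via the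
Koszul formula. -/
def Omegah (L : CoordLieAlgebroid m (n + 1)) (H : VStar m n → ℝ) (ξ ζ : ASec m n) :
    VStar m n → ℝ := fun p =>
  -(aD L ξ (lambdah H ζ) p - aD L ζ (lambdah H ξ) p
      - lambdah H (aBracket L ξ ζ) p)

/-- Pointwise value of `Ω_h` on the fibre (via constant sections). -/
def OmegahPt (L : CoordLieAlgebroid m (n + 1)) (H : VStar m n → ℝ) (p : VStar m n)
    (w w' : AFib n) : ℝ :=
  Omegah L H (fun _ => w) (fun _ => w') p

/-- `∂H/∂x^i`. -/
def Hx (H : VStar m n → ℝ) (p : VStar m n) (i : Fin m) : ℝ :=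
  fderiv ℝ H p (Pi.single i 1, 0)

/-- `∂H/∂y_β`. -/
def Hy (H : VStar m n → ℝ) (p : VStar m n) (β : Fin n) : ℝ :=
  fderiv ℝ H p (0, Pi.single β 1)

end Aff

open Aff

namespace Aff

variable {m n : ℕ}

/-- The affine dual `A⁺`, with coordinates `(x^i, y_0, y_α)`. -/
abbrev APlus (m n : ℕ) := (Fin m → ℝ) × (Fin (n + 1) → ℝ)

/-- The fibre of the prolongation `T^Ã A⁺ → A⁺`. -/
abbrev AFibPlus (n : ℕ) := (Fin (n + 1) → ℝ) × (Fin (n + 1) → ℝ)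

/-- The anchor of the prolongation `T^Ã A⁺`, as a tangent vector to `A⁺`. -/
def avecPlus (L : CoordLieAlgebroid m (n + 1)) (q : APlus m n) (w : AFibPlus n) :
    (Fin m → ℝ) × (Fin (n + 1) → ℝ) :=
  (fun i => ∑ a, w.1 a * L.ρ q.1 a i, w.2)

/-- Pointwise bracket of constant sections of `T^Ã V*` (the Koszul formula is
tensorial, so this computes `d` of 1-forms pointwise). -/
def cbr (L : CoordLieAlgebroid m (n + 1)) (p : VStar m n) (w w' : AFib n) : AFib n :=
  (fun g => ∑ a, ∑ b, L.c p.1 a b g * w.1 a * w'.1 b, 0)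

/-- Pointwise bracket of constant sections of `T^Ã A⁺`. -/
def cbrPlus (L : CoordLieAlgebroid m (n + 1)) (q : APlus m n) (w w' : AFibPlus n) :
    AFibPlus n :=
  (fun g => ∑ a, ∑ b, L.c q.1 a b g * w.1 a * w'.1 b, 0)

/-- The pointwise differential of a 1-form on the Lie algebroid `T^Ã V* → V*`. -/
def dptV (L : CoordLieAlgebroid m (n + 1)) (θ : VStar m n → AFib n → ℝ)
    (p : VStar m n) (w w' : AFib n) : ℝ :=
  fderiv ℝ (fun q => θ q w') p (avec L p w) - fderiv ℝ (fun q => θ q w) p (avec L p w')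
    - θ p (cbr L p w w')

/-- The pointwise differential of a 1-form on the Lie algebroid `T^Ã A⁺ → A⁺`. -/
def dptPlus (L : CoordLieAlgebroid m (n + 1)) (θ : APlus m n → AFibPlus n → ℝ)
    (q : APlus m n) (w w' : AFibPlus n) : ℝ :=
  fderiv ℝ (fun q' => θ q' w') q (avecPlus L q w)
    - fderiv ℝ (fun q' => θ q' w) q (avecPlus L q w')
    - θ q (cbrPlus L q w w')

/-- The Hamiltonian section `h : V* → A⁺`, `h(x,y) = (x, −H(x,y), y)`. -/
def hmap (H : VStar m n → ℝ) (p : VStar m n) : APlus m n :=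
  (p.1, Fin.cons (-H p) p.2)

/-- The map `Th : T^Ã V* → T^Ã A⁺`, `Th(ã, X) = (ã, (Th)(X))`, in coordinates. -/
def Th (L : CoordLieAlgebroid m (n + 1)) (H : VStar m n → ℝ) (p : VStar m n)
    (w : AFib n) : AFibPlus n :=
  (w.1, Fin.cons (-(fderiv ℝ H p (avec L p w))) w.2)

end Aff

/-! ### Auxiliary lemmas -/

variable {m n : ℕ}

/-- `Fin.cons` as a continuous linear map. -/
def consL (n : ℕ) : ℝ × (Fin n → ℝ) →L[ℝ] (Fin (n + 1) → ℝ) :=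
  LinearMap.toContinuousLinearMap
    { toFun := fun q => Fin.cons q.1 q.2
      map_add' := by
        intro a b; funext j
        induction j using Fin.cases <;> simp
      map_smul' := by
        intro c a; funext j
        induction j using Fin.cases <;> simp }

lemma contDiff_hmap (H : VStar m n → ℝ) (hH : ContDiff ℝ (⊤ : ℕ∞) H) :
    ContDiff ℝ (⊤ : ℕ∞) (hmap H) := by
  have : hmap H = fun p => (p.1, consL n (-H p, p.2)) := rfl
  rw [this]
  exact contDiff_fst.prodMk ((consL n).contDiff.comp ((hH.neg).prodMk contDiff_snd))

/-- The derivative of the Hamiltonian section `hmap H` at `p`. -/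
def Dh (H : VStar m n → ℝ) (p : VStar m n) :
    VStar m n →L[ℝ] (Fin m → ℝ) × (Fin (n + 1) → ℝ) :=
  (ContinuousLinearMap.fst ℝ (Fin m → ℝ) (Fin n → ℝ)).prod
    ((consL n).comp ((-(fderiv ℝ H p)).prod
      (ContinuousLinearMap.snd ℝ (Fin m → ℝ) (Fin n → ℝ))))

lemma hasFDerivAt_hmap (H : VStar m n → ℝ) (hH : ContDiff ℝ (⊤ : ℕ∞) H) (p : VStar m n) :
    HasFDerivAt (hmap H) (Dh H p) p := by
  have h1 : HasFDerivAt (fun p' : VStar m n => (-H p', p'.2))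
      ((-(fderiv ℝ H p)).prod (ContinuousLinearMap.snd ℝ (Fin m → ℝ) (Fin n → ℝ))) p :=
    (((hH.differentiable (by simp) p).hasFDerivAt).neg).prodMk (hasFDerivAt_snd)
  exact (hasFDerivAt_fst).prodMk (((consL n).hasFDerivAt).comp p h1)

lemma Dh_avec (L : CoordLieAlgebroid m (n + 1)) (H : VStar m n → ℝ) (p : VStar m n)
    (w : AFib n) :
    Dh H p (avec L p w) = avecPlus L (hmap H p) (Th L H p w) := rfl
lemma fderiv_linear_expand {m : ℕ} (ℓ : (Fin m → ℝ) →L[ℝ] ℝ) (v : Fin m → ℝ) :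
    ℓ v = ∑ j, v j * ℓ (Pi.single j 1) := by
  conv_lhs => rw [← Finset.univ_sum_single v]
  rw [map_sum]
  refine Finset.sum_congr rfl fun j _ => ?_
  have h : Pi.single j (v j) = v j • (Pi.single j 1 : Fin m → ℝ) := by
    funext i
    by_cases hij : i = j <;> simp [Pi.single_apply, hij]
  rw [h, map_smul, smul_eq_mul]

lemma fderiv_expand {m : ℕ} (g : (Fin m → ℝ) → ℝ) (x v : Fin m → ℝ) :
    fderiv ℝ g x v = ∑ j, v j * pd j g x :=
  fderiv_linear_expand _ v

lemma contDiff_sumrho (L : CoordLieAlgebroid m (n + 1)) (u : AFib n) (i : Fin m) :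
    ContDiff ℝ (⊤ : ℕ∞) (fun p' : VStar m n => ∑ a, u.1 a * L.ρ p'.1 a i) := by
  apply ContDiff.sum
  intro a _
  exact contDiff_const.mul ((L.smooth_ρ a i).comp contDiff_fst)

lemma contDiff_avec (L : CoordLieAlgebroid m (n + 1)) (u : AFib n) :
    ContDiff ℝ (⊤ : ℕ∞) (fun p' : VStar m n => avec L p' u) := by
  refine ContDiff.prodMk ?_ contDiff_const
  exact contDiff_pi.2 fun i => contDiff_sumrho L u i

/-- The derivative of `p' ↦ avec L p' u` at `p`. -/
def DavecL (L : CoordLieAlgebroid m (n + 1)) (u : AFib n) (p : VStar m n) :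
    VStar m n →L[ℝ] VStar m n :=
  (ContinuousLinearMap.pi
      (fun i => fderiv ℝ (fun p' : VStar m n => ∑ a, u.1 a * L.ρ p'.1 a i) p)).prod 0

lemma hasFDerivAt_avec (L : CoordLieAlgebroid m (n + 1)) (u : AFib n) (p : VStar m n) :
    HasFDerivAt (fun p' => avec L p' u) (DavecL L u p) p := by
  refine HasFDerivAt.prodMk ?_ (hasFDerivAt_const _ _)
  exact hasFDerivAt_pi.2 fun i =>
    ((contDiff_sumrho L u i).differentiable (by simp) p).hasFDerivAt

lemma fderiv_sumrho (L : CoordLieAlgebroid m (n + 1)) (u : AFib n) (i : Fin m)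
    (p : VStar m n) (v : VStar m n) :
    fderiv ℝ (fun p' : VStar m n => ∑ a, u.1 a * L.ρ p'.1 a i) p v
      = ∑ a, u.1 a * fderiv ℝ (fun x => L.ρ x a i) p.1 v.1 := by
  have h : ∀ a : Fin (n + 1), HasFDerivAt (fun p' : VStar m n => u.1 a * L.ρ p'.1 a i)
      (u.1 a • ((fderiv ℝ (fun x => L.ρ x a i) p.1).comp
        (ContinuousLinearMap.fst ℝ (Fin m → ℝ) (Fin n → ℝ)))) p := by
    intro a
    exact ((((L.smooth_ρ a i).differentiable (by simp) p.1).hasFDerivAt).comp p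
      hasFDerivAt_fst).const_mul (u.1 a)
  have hs : HasFDerivAt (fun p' : VStar m n => ∑ a, u.1 a * L.ρ p'.1 a i)
      (∑ a, u.1 a • ((fderiv ℝ (fun x => L.ρ x a i) p.1).comp
        (ContinuousLinearMap.fst ℝ (Fin m → ℝ) (Fin n → ℝ)))) p :=
    HasFDerivAt.fun_sum fun a _ => h a
  rw [hs.fderiv]
  simp

/-- The scalar sum identity expressing anchor compatibility. -/
lemma sum_identity (L : CoordLieAlgebroid m (n + 1)) (x : Fin m → ℝ) (i : Fin m)
    (u u' : Fin (n + 1) → ℝ) :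
    (∑ a, u' a * ∑ j, (∑ b, u b * L.ρ x b j) * pd j (fun x' => L.ρ x' a i) x)
      - (∑ a, u a * ∑ j, (∑ b, u' b * L.ρ x b j) * pd j (fun x' => L.ρ x' a i) x)
      = ∑ g, (∑ a, ∑ b, L.c x a b g * u a * u' b) * L.ρ x g i := by
  have hA : (∑ a, u' a * ∑ j, (∑ b, u b * L.ρ x b j) * pd j (fun x' => L.ρ x' a i) x)
      = ∑ a, ∑ b, u a * u' b * ∑ j, L.ρ x a j * pd j (fun x' => L.ρ x' b i) x := by
    rw [Finset.sum_comm]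
    refine Finset.sum_congr rfl fun a _ => ?_
    simp only [Finset.mul_sum, Finset.sum_mul]
    rw [Finset.sum_comm]
    exact Finset.sum_congr rfl fun b _ => Finset.sum_congr rfl fun j _ => by ring
  have hB : (∑ a, u a * ∑ j, (∑ b, u' b * L.ρ x b j) * pd j (fun x' => L.ρ x' a i) x)
      = ∑ a, ∑ b, u a * u' b * ∑ j, L.ρ x b j * pd j (fun x' => L.ρ x' a i) x := by
    refine Finset.sum_congr rfl fun a _ => ?_
    simp only [Finset.mul_sum, Finset.sum_mul]
    rw [Finset.sum_comm]
    exact Finset.sum_congr rfl fun b _ => Finset.sum_congr rfl fun j _ => by ring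
  rw [hA, hB]
  have hsub : (∑ a, ∑ b, u a * u' b * ∑ j, L.ρ x a j * pd j (fun x' => L.ρ x' b i) x)
      - (∑ a, ∑ b, u a * u' b * ∑ j, L.ρ x b j * pd j (fun x' => L.ρ x' a i) x)
      = ∑ a, ∑ b, u a * u' b * ∑ g, L.c x a b g * L.ρ x g i := by
    rw [← Finset.sum_sub_distrib]
    refine Finset.sum_congr rfl fun a _ => ?_
    rw [← Finset.sum_sub_distrib]
    refine Finset.sum_congr rfl fun b _ => ?_
    rw [← mul_sub, ← Finset.sum_sub_distrib, L.anchor_compat x a b i]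
  rw [hsub]
  have s1 : (∑ a, ∑ b, ∑ g, u a * u' b * (L.c x a b g * L.ρ x g i))
      = ∑ a, ∑ g, ∑ b, u a * u' b * (L.c x a b g * L.ρ x g i) :=
    Finset.sum_congr rfl fun a _ => Finset.sum_comm
  have s2 : (∑ a, ∑ g, ∑ b, u a * u' b * (L.c x a b g * L.ρ x g i))
      = ∑ g, ∑ a, ∑ b, u a * u' b * (L.c x a b g * L.ρ x g i) := Finset.sum_comm
  simp only [Finset.sum_mul, Finset.mul_sum]
  rw [s1, s2]
  exact Finset.sum_congr rfl fun g _ => Finset.sum_congr rfl fun a _ =>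
    Finset.sum_congr rfl fun b _ => by ring

/-- The core identity coming from `anchor_compat`. -/
lemma Davec_anti (L : CoordLieAlgebroid m (n + 1)) (p : VStar m n) (w w' : AFib n) :
    DavecL L w' p (avec L p w) - DavecL L w p (avec L p w')
      = avec L p (cbr L p w w') := by
  have h2 : (DavecL L w' p (avec L p w) - DavecL L w p (avec L p w')).2
      = (avec L p (cbr L p w w')).2 := by
    simp [DavecL, avec, cbr]
  have h1 : (DavecL L w' p (avec L p w) - DavecL L w p (avec L p w')).1
      = (avec L p (cbr L p w w')).1 := by
    funext i
    have e1 : (DavecL L w' p (avec L p w)).1 i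
        = ∑ a, w'.1 a * ∑ j, (∑ b, w.1 b * L.ρ p.1 b j) * pd j (fun x => L.ρ x a i) p.1 := by
      show fderiv ℝ (fun p' : VStar m n => ∑ a, w'.1 a * L.ρ p'.1 a i) p (avec L p w) = _
      rw [fderiv_sumrho]
      refine Finset.sum_congr rfl fun a _ => ?_
      rw [fderiv_expand]
      rfl
    have e2 : (DavecL L w p (avec L p w')).1 i
        = ∑ a, w.1 a * ∑ j, (∑ b, w'.1 b * L.ρ p.1 b j) * pd j (fun x => L.ρ x a i) p.1 := by
      show fderiv ℝ (fun p' : VStar m n => ∑ a, w.1 a * L.ρ p'.1 a i) p (avec L p w') = _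
      rw [fderiv_sumrho]
      refine Finset.sum_congr rfl fun a _ => ?_
      rw [fderiv_expand]
      rfl
    show (DavecL L w' p (avec L p w)).1 i - (DavecL L w p (avec L p w')).1 i = _
    rw [e1, e2]
    exact sum_identity L p.1 i w.1 w'.1
  exact Prod.ext h1 h2

/-- `G u = fderiv H · (avec · u)` is smooth. -/
lemma contDiff_G (L : CoordLieAlgebroid m (n + 1)) (H : VStar m n → ℝ)
    (hH : ContDiff ℝ (⊤ : ℕ∞) H) (u : AFib n) :
    ContDiff ℝ (⊤ : ℕ∞) (fun p' : VStar m n => fderiv ℝ H p' (avec L p' u)) :=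
  (hH.fderiv_right (by simp)).clm_apply (contDiff_avec L u)

lemma hasFDerivAt_G (L : CoordLieAlgebroid m (n + 1)) (H : VStar m n → ℝ)
    (hH : ContDiff ℝ (⊤ : ℕ∞) H) (u : AFib n) (p : VStar m n) :
    HasFDerivAt (fun p' : VStar m n => fderiv ℝ H p' (avec L p' u))
      ((fderiv ℝ H p).comp (DavecL L u p)
        + (fderiv ℝ (fderiv ℝ H) p).flip (avec L p u)) p := by
  have hfd : HasFDerivAt (fderiv ℝ H) (fderiv ℝ (fderiv ℝ H) p) p :=
    (((hH.fderiv_right (m := 1) (by exact WithTop.coe_le_coe.2 le_top)).differentiable one_ne_zero) p).hasFDerivAt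
  exact hfd.clm_apply (hasFDerivAt_avec L u p)

/-- The key antisymmetry: `D_{ρw}G_{w'} − D_{ρw'}G_w = dH(ρ(cbr w w'))`. -/
lemma star_identity (L : CoordLieAlgebroid m (n + 1)) (H : VStar m n → ℝ)
    (hH : ContDiff ℝ (⊤ : ℕ∞) H) (p : VStar m n) (w w' : AFib n) :
    fderiv ℝ (fun p' : VStar m n => fderiv ℝ H p' (avec L p' w')) p (avec L p w)
      - fderiv ℝ (fun p' : VStar m n => fderiv ℝ H p' (avec L p' w)) p (avec L p w')
      = fderiv ℝ H p (avec L p (cbr L p w w')) := by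
  have hfd : HasFDerivAt (fderiv ℝ H) (fderiv ℝ (fderiv ℝ H) p) p :=
    (((hH.fderiv_right (m := 1) (by exact WithTop.coe_le_coe.2 le_top)).differentiable one_ne_zero) p).hasFDerivAt
  have hsymm := second_derivative_symmetric
    (fun y => ((hH.differentiable (by simp)) y).hasFDerivAt) hfd
    (avec L p w) (avec L p w')
  rw [(hasFDerivAt_G L H hH w' p).fderiv, (hasFDerivAt_G L H hH w p).fderiv]
  simp only [ContinuousLinearMap.add_apply, ContinuousLinearMap.coe_comp',
    Function.comp_apply, ContinuousLinearMap.flip_apply]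
  have hmain : fderiv ℝ H p (DavecL L w' p (avec L p w))
      - fderiv ℝ H p (DavecL L w p (avec L p w'))
      = fderiv ℝ H p (avec L p (cbr L p w w')) := by
    rw [← map_sub, Davec_anti]
  linarith [hsymm, hmain]

/-- First pieces of the pulled-back 1-form. -/
def Tfun (θ' : APlus m n → AFibPlus n → ℝ) (H : VStar m n → ℝ) (u : AFib n) :
    VStar m n → ℝ := fun p' => θ' (hmap H p') (u.1, Fin.cons 0 u.2)

def efun (θ' : APlus m n → AFibPlus n → ℝ) (H : VStar m n → ℝ) :
    VStar m n → ℝ := fun p' => θ' (hmap H p') (0, Fin.cons 1 0)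

def Gfun (L : CoordLieAlgebroid m (n + 1)) (H : VStar m n → ℝ) (u : AFib n) :
    VStar m n → ℝ := fun p' => fderiv ℝ H p' (avec L p' u)

lemma split_lemma (θ' : APlus m n → AFibPlus n → ℝ) (hlin : ∀ q, IsLinearMap ℝ (θ' q))
    (q' : APlus m n) (z : Fin (n + 1) → ℝ) (a : ℝ) (v : Fin n → ℝ) :
    θ' q' (z, Fin.cons a v)
      = θ' q' (z, Fin.cons 0 v) + a * θ' q' (0, Fin.cons 1 0) := by
  have hvec : ((z, Fin.cons a v) : AFibPlus n)
      = (z, Fin.cons 0 v) + a • (((0 : Fin (n + 1) → ℝ), Fin.cons 1 0) : AFibPlus n) := by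
    refine Prod.ext ?_ ?_
    · simp
    · funext j
      induction j using Fin.cases <;> simp
  rw [hvec, (hlin q').map_add, (hlin q').map_smul, smul_eq_mul]

lemma pullback_eq (θ' : APlus m n → AFibPlus n → ℝ) (hlin : ∀ q, IsLinearMap ℝ (θ' q))
    (L : CoordLieAlgebroid m (n + 1)) (H : VStar m n → ℝ) (u : AFib n) (p' : VStar m n) :
    θ' (hmap H p') (Th L H p' u)
      = Tfun θ' H u p' + (-(Gfun L H u p')) * efun θ' H p' := by
  show θ' (hmap H p') (u.1, Fin.cons (-(fderiv ℝ H p' (avec L p' u))) u.2) = _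
  rw [split_lemma θ' hlin]
  rfl

lemma fderiv_combo (f g h : VStar m n → ℝ) (p : VStar m n)
    (hf : DifferentiableAt ℝ f p) (hg : DifferentiableAt ℝ g p)
    (hh : DifferentiableAt ℝ h p) (v : VStar m n) :
    fderiv ℝ (fun p' => f p' + (-(g p')) * h p') p v
      = fderiv ℝ f p v + (-(fderiv ℝ g p v)) * h p + (-(g p)) * fderiv ℝ h p v := by
  have hd := (hf.hasFDerivAt.add ((hg.hasFDerivAt.neg).mul hh.hasFDerivAt)).fderiv
  rw [show (fun p' => f p' + (-(g p')) * h p') = f + -g * h from rfl, hd]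
  simp only [ContinuousLinearMap.add_apply, ContinuousLinearMap.smul_apply,
    ContinuousLinearMap.neg_apply, smul_eq_mul, Pi.neg_apply]
  ring

lemma fderiv_combo_const (f h : VStar m n → ℝ) (k : ℝ) (p : VStar m n)
    (hf : DifferentiableAt ℝ f p) (hh : DifferentiableAt ℝ h p) (v : VStar m n) :
    fderiv ℝ (fun p' => f p' + k * h p') p v
      = fderiv ℝ f p v + k * fderiv ℝ h p v := by
  have hd := (hf.hasFDerivAt.add (hh.hasFDerivAt.const_mul k)).fderiv
  rw [show (fun p' => f p' + k * h p') = f + fun y => k * h y from rfl, hd]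
  simp

/-- let `h : V* → A⁺` be a Hamiltonian section (`μ ∘ h = Id`). Then the
map `Th : T^Ã V* → T^Ã A⁺`, `Th(ã, X_α) = (ã, (T_α h)(X_α))`, together with `h`, is a
Lie algebroid morphism from the prolongation `T^Ã V* → V*` to the prolongation
`T^Ã A⁺ → A⁺`: pullback along `(Th, h)` commutes with the differentials,
`d^{T^Ã V*}((Th,h)^* φ') = (Th,h)^*(d^{T^Ã A⁺} φ')`, on functions (`k = 0`) and on
1-forms (`k = 1`) — which, the differentials being derivations of the exterior
algebras, characterizes the morphism property for all `k`. -/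
theorem Th_lie_algebroid_morphism {m n : ℕ} (L : CoordLieAlgebroid m (n + 1))
    (hc0 : ∀ x a b, L.c x a b 0 = 0)
    (H : VStar m n → ℝ) (hH : ContDiff ℝ (⊤ : ℕ∞) H) :
    -- degree 0: for every function `F'` on `A⁺`
    (∀ F' : APlus m n → ℝ, ContDiff ℝ (⊤ : ℕ∞) F' →
      ∀ (p : VStar m n) (w : AFib n),
        fderiv ℝ (fun p' => F' (hmap H p')) p (avec L p w)
          = fderiv ℝ F' (hmap H p) (avecPlus L (hmap H p) (Th L H p w)))
    -- degree 1: for every 1-form `θ'` on the Lie algebroid `T^Ã A⁺ → A⁺`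
    ∧ (∀ θ' : APlus m n → AFibPlus n → ℝ,
        (∀ q, IsLinearMap ℝ (θ' q)) → (∀ w, ContDiff ℝ (⊤ : ℕ∞) (fun q => θ' q w)) →
        ∀ (p : VStar m n) (w w' : AFib n),
          dptV L (fun p' w₀ => θ' (hmap H p') (Th L H p' w₀)) p w w'
            = dptPlus L θ' (hmap H p) (Th L H p w) (Th L H p w')) := by
  have deg0 : ∀ F' : APlus m n → ℝ, ContDiff ℝ (⊤ : ℕ∞) F' →
      ∀ (p : VStar m n) (w : AFib n),
        fderiv ℝ (fun p' => F' (hmap H p')) p (avec L p w)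
          = fderiv ℝ F' (hmap H p) (avecPlus L (hmap H p) (Th L H p w)) := by
    intro F' hF' p w
    have hcomp : HasFDerivAt (fun p' => F' (hmap H p'))
        ((fderiv ℝ F' (hmap H p)).comp (Dh H p)) p :=
      ((hF'.differentiable (by simp) _).hasFDerivAt).comp p (hasFDerivAt_hmap H hH p)
    rw [hcomp.fderiv]
    show fderiv ℝ F' (hmap H p) (Dh H p (avec L p w)) = _
    rw [Dh_avec]
  refine ⟨deg0, ?_⟩
  intro θ' hlin hsm p w w'
  have hTd : ∀ u : AFib n, DifferentiableAt ℝ (Tfun θ' H u) p := fun u =>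
    ((hsm _).comp (contDiff_hmap H hH)).differentiable (by simp) p
  have hed : DifferentiableAt ℝ (efun θ' H) p :=
    ((hsm _).comp (contDiff_hmap H hH)).differentiable (by simp) p
  have hGd : ∀ u : AFib n, DifferentiableAt ℝ (Gfun L H u) p := fun u =>
    (contDiff_G L H hH u).differentiable (by simp) p
  have hcons0 : (Fin.cons 0 (0 : Fin n → ℝ)) = (0 : Fin (n + 1) → ℝ) := by
    funext j; induction j using Fin.cases <;> simp
  have hfun : ∀ u : AFib n, (fun p' => θ' (hmap H p') (Th L H p' u))
      = fun p' => Tfun θ' H u p' + (-(Gfun L H u p')) * efun θ' H p' :=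
    fun u => funext fun p' => pullback_eq θ' hlin L H u p'
  have lhs_eq : dptV L (fun p' w₀ => θ' (hmap H p') (Th L H p' w₀)) p w w'
      = (fderiv ℝ (Tfun θ' H w') p (avec L p w)
          + (-(fderiv ℝ (Gfun L H w') p (avec L p w))) * efun θ' H p
          + (-(Gfun L H w' p)) * fderiv ℝ (efun θ' H) p (avec L p w))
        - (fderiv ℝ (Tfun θ' H w) p (avec L p w')
          + (-(fderiv ℝ (Gfun L H w) p (avec L p w'))) * efun θ' H p
          + (-(Gfun L H w p)) * fderiv ℝ (efun θ' H) p (avec L p w'))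
        - (θ' (hmap H p) ((cbr L p w w').1, 0)
          + (-(Gfun L H (cbr L p w w') p)) * efun θ' H p) := by
    show fderiv ℝ (fun p' => θ' (hmap H p') (Th L H p' w')) p (avec L p w)
        - fderiv ℝ (fun p' => θ' (hmap H p') (Th L H p' w)) p (avec L p w')
        - θ' (hmap H p) (Th L H p (cbr L p w w')) = _
    rw [hfun w', hfun w, fderiv_combo _ _ _ p (hTd w') (hGd w') hed,
      fderiv_combo _ _ _ p (hTd w) (hGd w) hed,
      pullback_eq θ' hlin L H (cbr L p w w') p]
    have hT0 : Tfun θ' H (cbr L p w w') p = θ' (hmap H p) ((cbr L p w w').1, 0) := by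
      show θ' (hmap H p) ((cbr L p w w').1, Fin.cons 0 (cbr L p w w').2) = _
      rw [show (cbr L p w w').2 = (0 : Fin n → ℝ) from rfl, hcons0]
    rw [hT0]
  have rhs_eq : dptPlus L θ' (hmap H p) (Th L H p w) (Th L H p w')
      = (fderiv ℝ (Tfun θ' H w') p (avec L p w)
          + (-(Gfun L H w' p)) * fderiv ℝ (efun θ' H) p (avec L p w))
        - (fderiv ℝ (Tfun θ' H w) p (avec L p w')
          + (-(Gfun L H w p)) * fderiv ℝ (efun θ' H) p (avec L p w'))
        - θ' (hmap H p) ((cbr L p w w').1, 0) := by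
    show fderiv ℝ (fun q' => θ' q' (Th L H p w')) (hmap H p)
          (avecPlus L (hmap H p) (Th L H p w))
        - fderiv ℝ (fun q' => θ' q' (Th L H p w)) (hmap H p)
          (avecPlus L (hmap H p) (Th L H p w'))
        - θ' (hmap H p) (cbrPlus L (hmap H p) (Th L H p w) (Th L H p w')) = _
    rw [← deg0 (fun q' => θ' q' (Th L H p w')) (hsm _) p w,
        ← deg0 (fun q' => θ' q' (Th L H p w)) (hsm _) p w']
    have h1 : (fun p' => θ' (hmap H p') (Th L H p w'))
        = fun p' => Tfun θ' H w' p' + (-(Gfun L H w' p)) * efun θ' H p' := by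
      funext p'
      show θ' (hmap H p') (w'.1, Fin.cons (-(fderiv ℝ H p (avec L p w'))) w'.2) = _
      rw [split_lemma θ' hlin]
      rfl
    have h2 : (fun p' => θ' (hmap H p') (Th L H p w))
        = fun p' => Tfun θ' H w p' + (-(Gfun L H w p)) * efun θ' H p' := by
      funext p'
      show θ' (hmap H p') (w.1, Fin.cons (-(fderiv ℝ H p (avec L p w))) w.2) = _
      rw [split_lemma θ' hlin]
      rfl
    have hcbr : θ' (hmap H p) (cbrPlus L (hmap H p) (Th L H p w) (Th L H p w'))
        = θ' (hmap H p) ((cbr L p w w').1, 0) := rfl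
    rw [h1, h2, fderiv_combo_const _ _ _ p (hTd w') hed,
      fderiv_combo_const _ _ _ p (hTd w) hed, hcbr]
  rw [lhs_eq, rhs_eq]
  have hstar : fderiv ℝ (Gfun L H w') p (avec L p w)
      - fderiv ℝ (Gfun L H w) p (avec L p w')
      = Gfun L H (cbr L p w w') p := star_identity L H hH p w w'
  linear_combination (-(efun θ' H p)) * hstar
end
end

section
/- Let h : V* → A^+ be a Hamiltonian section and set λ_h = (Th, h)^*(λ_Ã) and Ω_h = (Th, h)^*(Ω_Ã) on the prolongation T^Ã V* → V*, and let η be the 1-cocycle η(ã, X_α) = 1_A(ã). Then the pair (Ω_h, η) is a cosymplectic structure on T^Ã V*, i.e., (η ∧ Ω_h^n)(α) ≠ 0 for all α ∈ V* (where n = rank V), d^{T^Ã V*} η = 0 and d^{T^Ã V*} Ω_h = 0. -/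
noncomputable section

open Aff


section Tools

lemma fderiv_pi_expand {k : ℕ} (f : (Fin k → ℝ) → ℝ) (x v : Fin k → ℝ) :
    fderiv ℝ f x v = ∑ j, v j * pd j f x := by
  have hv : v = ∑ j, v j • (Pi.single j 1 : Fin k → ℝ) := by
    funext j'
    simp [Finset.sum_apply, Pi.single_apply]
  conv_lhs => rw [hv]
  rw [map_sum]
  refine Finset.sum_congr rfl fun j _ => ?_
  rw [map_smul]
  simp [pd]

lemma fderiv_clm_comp_apply {E F G : Type*} [NormedAddCommGroup E] [NormedSpace ℝ E]
    [NormedAddCommGroup F] [NormedSpace ℝ F] [NormedAddCommGroup G] [NormedSpace ℝ G]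
    (A : F →L[ℝ] G) {φ : E → F} {p : E} (hφ : DifferentiableAt ℝ φ p) (v : E) :
    fderiv ℝ (fun q => A (φ q)) p v = A (fderiv ℝ φ p v) := by
  rw [show (fun q => A (φ q)) = ⇑A ∘ φ from rfl,
    (A.hasFDerivAt.comp p hφ.hasFDerivAt).fderiv]
  rfl

lemma fderiv_comp_fst_apply {m' n' : ℕ} {F : (Fin m' → ℝ) → ℝ}
    (p : (Fin m' → ℝ) × (Fin n' → ℝ)) (hF : DifferentiableAt ℝ F p.1)
    (v : (Fin m' → ℝ) × (Fin n' → ℝ)) :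
    fderiv ℝ (fun q : (Fin m' → ℝ) × (Fin n' → ℝ) => F q.1) p v = fderiv ℝ F p.1 v.1 := by
  rw [show (fun q : (Fin m' → ℝ) × (Fin n' → ℝ) => F q.1) = F ∘ Prod.fst from rfl,
    (hF.hasFDerivAt.comp p hasFDerivAt_fst).fderiv]
  rfl

lemma fderiv_mul_apply {E : Type*} [NormedAddCommGroup E] [NormedSpace ℝ E]
    {f g : E → ℝ} {p : E} (hf : DifferentiableAt ℝ f p) (hg : DifferentiableAt ℝ g p)
    (v : E) :
    fderiv ℝ (fun q => f q * g q) p v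
      = fderiv ℝ f p v * g p + f p * fderiv ℝ g p v := by
  rw [fderiv_fun_mul hf hg]
  simp only [ContinuousLinearMap.add_apply, ContinuousLinearMap.smul_apply, smul_eq_mul]
  ring

end Tools

namespace Aff

variable {m n : ℕ}

/-- The vector field on `V*` associated to a section of the prolongation. -/
def Xv (L : CoordLieAlgebroid m (n+1)) (ξ : ASec m n) : VStar m n → VStar m n :=
  fun q => avec L q (ξ q)

lemma aD_def (L : CoordLieAlgebroid m (n+1)) (ξ : ASec m n) (F : VStar m n → ℝ)
    (p : VStar m n) : aD L ξ F p = fderiv ℝ F p (Xv L ξ p) := rfl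

lemma smooth_rho (L : CoordLieAlgebroid m (n+1)) (a : Fin (n+1)) (i : Fin m) :
    ContDiff ℝ (⊤ : ℕ∞) (fun q : VStar m n => L.ρ q.1 a i) :=
  (L.smooth_ρ a i).comp contDiff_fst

lemma smooth_cc (L : CoordLieAlgebroid m (n+1)) (a b g : Fin (n+1)) :
    ContDiff ℝ (⊤ : ℕ∞) (fun q : VStar m n => L.c q.1 a b g) :=
  (L.smooth_c a b g).comp contDiff_fst

lemma smooth_comp1 {ξ : ASec m n} (hξ : ContDiff ℝ (⊤ : ℕ∞) ξ) (a : Fin (n+1)) :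
    ContDiff ℝ (⊤ : ℕ∞) (fun q => (ξ q).1 a) := (contDiff_pi.1 (contDiff_fst.comp hξ)) a

lemma smooth_comp2 {ξ : ASec m n} (hξ : ContDiff ℝ (⊤ : ℕ∞) ξ) (g : Fin n) :
    ContDiff ℝ (⊤ : ℕ∞) (fun q => (ξ q).2 g) := (contDiff_pi.1 (contDiff_snd.comp hξ)) g

lemma smooth_Xv (L : CoordLieAlgebroid m (n+1)) {ξ : ASec m n} (hξ : ContDiff ℝ (⊤ : ℕ∞) ξ) :
    ContDiff ℝ (⊤ : ℕ∞) (Xv L ξ) := by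
  apply ContDiff.prodMk
  · exact contDiff_pi.2 fun i =>
      ContDiff.sum fun a _ => (smooth_comp1 hξ a).mul (smooth_rho L a i)
  · exact contDiff_snd.comp hξ

lemma smooth_aD (L : CoordLieAlgebroid m (n+1)) {ξ : ASec m n} {F : VStar m n → ℝ}
    (hξ : ContDiff ℝ (⊤ : ℕ∞) ξ) (hF : ContDiff ℝ (⊤ : ℕ∞) F) : ContDiff ℝ (⊤ : ℕ∞) (aD L ξ F) := by
  have h1 : ContDiff ℝ (⊤ : ℕ∞) (fderiv ℝ F) := hF.fderiv_right (by simp)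
  exact h1.clm_apply (smooth_Xv L hξ)

lemma fd1 {ξ : ASec m n} (hξ : ContDiff ℝ (⊤ : ℕ∞) ξ) (a : Fin (n+1)) (p v : VStar m n) :
    fderiv ℝ (fun q => (ξ q).1 a) p v = (fderiv ℝ ξ p v).1 a :=
  fderiv_clm_comp_apply
    ((ContinuousLinearMap.proj a).comp
      (ContinuousLinearMap.fst ℝ (Fin (n+1) → ℝ) (Fin n → ℝ)))
    ((hξ.differentiable (by simp)) p) v

lemma fd2 {ξ : ASec m n} (hξ : ContDiff ℝ (⊤ : ℕ∞) ξ) (g : Fin n) (p v : VStar m n) :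
    fderiv ℝ (fun q => (ξ q).2 g) p v = (fderiv ℝ ξ p v).2 g :=
  fderiv_clm_comp_apply
    ((ContinuousLinearMap.proj g).comp
      (ContinuousLinearMap.snd ℝ (Fin (n+1) → ℝ) (Fin n → ℝ)))
    ((hξ.differentiable (by simp)) p) v

end Aff

namespace Aff

variable {m n : ℕ}

lemma diffAt {E F : Type*} [NormedAddCommGroup E] [NormedSpace ℝ E]
    [NormedAddCommGroup F] [NormedSpace ℝ F] {f : E → F} (hf : ContDiff ℝ (⊤ : ℕ∞) f) (p : E) :
    DifferentiableAt ℝ f p := (hf.differentiable (by simp)) p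

lemma sum3_rot {α β γ : Type*} [Fintype α] [Fintype β] [Fintype γ] (f : α → β → γ → ℝ) :
    ∑ a, ∑ b, ∑ e, f a b e = ∑ b, ∑ e, ∑ a, f a b e := by
  rw [Finset.sum_comm]
  exact Finset.sum_congr rfl fun _ _ => Finset.sum_comm

lemma fdX1 (L : CoordLieAlgebroid m (n+1)) {ζ : ASec m n} (hζ : ContDiff ℝ (⊤ : ℕ∞) ζ)
    (p v : VStar m n) (i : Fin m) :
    fderiv ℝ (fun q => ∑ a, (ζ q).1 a * L.ρ q.1 a i) p v = (fderiv ℝ (Xv L ζ) p v).1 i :=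
  fderiv_clm_comp_apply
    ((ContinuousLinearMap.proj i).comp
      (ContinuousLinearMap.fst ℝ (Fin m → ℝ) (Fin n → ℝ)))
    (diffAt (smooth_Xv L hζ) p) v

lemma fdX2 (L : CoordLieAlgebroid m (n+1)) {ζ : ASec m n} (hζ : ContDiff ℝ (⊤ : ℕ∞) ζ)
    (p v : VStar m n) (g : Fin n) :
    fderiv ℝ (fun q => (ζ q).2 g) p v = (fderiv ℝ (Xv L ζ) p v).2 g :=
  fderiv_clm_comp_apply
    ((ContinuousLinearMap.proj g).comp
      (ContinuousLinearMap.snd ℝ (Fin m → ℝ) (Fin n → ℝ)))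
    (diffAt (smooth_Xv L hζ) p) v

lemma fderiv_Xv_fst (L : CoordLieAlgebroid m (n+1)) {ζ : ASec m n} (hζ : ContDiff ℝ (⊤ : ℕ∞) ζ)
    (p v : VStar m n) (i : Fin m) :
    (fderiv ℝ (Xv L ζ) p v).1 i
      = ∑ a, (fderiv ℝ (fun q => (ζ q).1 a) p v * L.ρ p.1 a i
          + (ζ p).1 a * fderiv ℝ (fun x => L.ρ x a i) p.1 v.1) := by
  rw [← fdX1 L hζ p v i]
  rw [fderiv_fun_sum (fun a _ =>
    diffAt ((smooth_comp1 hζ a).mul (smooth_rho L a i)) p)]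
  rw [ContinuousLinearMap.sum_apply]
  refine Finset.sum_congr rfl fun a _ => ?_
  rw [fderiv_mul_apply (diffAt (smooth_comp1 hζ a) p) (diffAt (smooth_rho L a i) p) v]
  rw [fderiv_comp_fst_apply p (diffAt (L.smooth_ρ a i) p.1) v]

lemma Xv_fst_apply (L : CoordLieAlgebroid m (n+1)) (σ : ASec m n) (p : VStar m n)
    (j : Fin m) : (Xv L σ p).1 j = ∑ b, (σ p).1 b * L.ρ p.1 b j := rfl

lemma Xv_bracket (L : CoordLieAlgebroid m (n+1)) {ξ ζ : ASec m n}
    (hξ : ContDiff ℝ (⊤ : ℕ∞) ξ) (hζ : ContDiff ℝ (⊤ : ℕ∞) ζ) (p : VStar m n) :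
    Xv L (aBracket L ξ ζ) p
      = fderiv ℝ (Xv L ζ) p (Xv L ξ p) - fderiv ℝ (Xv L ξ) p (Xv L ζ p) := by
  refine Prod.ext ?_ ?_
  · funext i
    have h1 : (Xv L (aBracket L ξ ζ) p).1 i
        = ∑ g, (aD L ξ (fun q => (ζ q).1 g) p - aD L ζ (fun q => (ξ q).1 g) p
            + ∑ a, ∑ b, L.c p.1 a b g * (ξ p).1 a * (ζ p).1 b) * L.ρ p.1 g i := rfl
    have h2 : (fderiv ℝ (Xv L ζ) p (Xv L ξ p) - fderiv ℝ (Xv L ξ) p (Xv L ζ p)).1 i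
        = (fderiv ℝ (Xv L ζ) p (Xv L ξ p)).1 i - (fderiv ℝ (Xv L ξ) p (Xv L ζ p)).1 i := rfl
    rw [h1, h2, fderiv_Xv_fst L hζ p _ i, fderiv_Xv_fst L hξ p _ i]
    simp only [aD_def]
    -- expand the ρ-derivative terms in coordinates
    have hexp : ∀ (σ : ASec m n) (a : Fin (n+1)),
        fderiv ℝ (fun x => L.ρ x a i) p.1 (Xv L σ p).1
          = ∑ j, (∑ b, (σ p).1 b * L.ρ p.1 b j) * pd j (fun x => L.ρ x a i) p.1 := by
      intro σ a
      rw [fderiv_pi_expand]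
      exact Finset.sum_congr rfl fun j _ => by rw [Xv_fst_apply]
    -- the structural identity coming from anchor compatibility
    have key : ∑ g, (∑ a, ∑ b, L.c p.1 a b g * (ξ p).1 a * (ζ p).1 b) * L.ρ p.1 g i
        = ∑ a, (ζ p).1 a * (∑ j, (∑ b, (ξ p).1 b * L.ρ p.1 b j)
              * pd j (fun x => L.ρ x a i) p.1)
          - ∑ a, (ξ p).1 a * (∑ j, (∑ b, (ζ p).1 b * L.ρ p.1 b j)
              * pd j (fun x => L.ρ x a i) p.1) := by
      have step1 : ∑ g, (∑ a, ∑ b, L.c p.1 a b g * (ξ p).1 a * (ζ p).1 b) * L.ρ p.1 g i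
          = ∑ a, ∑ b, (ξ p).1 a * (ζ p).1 b * (∑ g, L.c p.1 a b g * L.ρ p.1 g i) := by
        simp only [Finset.sum_mul, Finset.mul_sum]
        rw [Finset.sum_comm]
        refine Finset.sum_congr rfl fun a _ => ?_
        rw [Finset.sum_comm]
        exact Finset.sum_congr rfl fun b _ => Finset.sum_congr rfl fun g _ => by ring
      rw [step1]
      have step2 : ∀ a b, (∑ g, L.c p.1 a b g * L.ρ p.1 g i)
          = ∑ j, (L.ρ p.1 a j * pd j (fun x' => L.ρ x' b i) p.1
              - L.ρ p.1 b j * pd j (fun x' => L.ρ x' a i) p.1) := fun a b =>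
        (L.anchor_compat p.1 a b i).symm
      simp only [step2, mul_sub, Finset.mul_sum, Finset.sum_sub_distrib]
      congr 1
      · rw [sum3_rot fun a b j => (ξ p).1 a * (ζ p).1 b
            * (L.ρ p.1 a j * pd j (fun x' => L.ρ x' b i) p.1)]
        simp only [Finset.sum_mul, Finset.mul_sum]
        exact Finset.sum_congr rfl fun a _ => Finset.sum_congr rfl fun j _ =>
          Finset.sum_congr rfl fun b _ => by ring
      · refine Finset.sum_congr rfl fun a _ => ?_
        rw [Finset.sum_comm]
        simp only [Finset.sum_mul, Finset.mul_sum]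
        exact Finset.sum_congr rfl fun j _ => Finset.sum_congr rfl fun b _ => by ring
    simp only [hexp]
    simp only [add_mul, sub_mul, Finset.sum_add_distrib, Finset.sum_sub_distrib] at key ⊢
    linarith [key]
  · funext g
    have h1 : (Xv L (aBracket L ξ ζ) p).2 g
        = aD L ξ (fun q => (ζ q).2 g) p - aD L ζ (fun q => (ξ q).2 g) p := rfl
    have h2 : (fderiv ℝ (Xv L ζ) p (Xv L ξ p) - fderiv ℝ (Xv L ξ) p (Xv L ζ p)).2 g
        = (fderiv ℝ (Xv L ζ) p (Xv L ξ p)).2 g - (fderiv ℝ (Xv L ξ) p (Xv L ζ p)).2 g := rfl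
    rw [h1, h2, ← fdX2 L hζ p _ g, ← fdX2 L hξ p _ g]
    rfl

end Aff

namespace Aff

variable {m n : ℕ}

lemma fderiv_aD_apply (L : CoordLieAlgebroid m (n+1)) {ζ : ASec m n} {F : VStar m n → ℝ}
    (hζ : ContDiff ℝ (⊤ : ℕ∞) ζ) (hF : ContDiff ℝ (⊤ : ℕ∞) F) (p v : VStar m n) :
    fderiv ℝ (aD L ζ F) p v
      = fderiv ℝ (fderiv ℝ F) p v (Xv L ζ p) + fderiv ℝ F p (fderiv ℝ (Xv L ζ) p v) := by
  rw [show aD L ζ F = fun q => (fderiv ℝ F q) (Xv L ζ q) from rfl]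
  rw [fderiv_clm_apply (diffAt (hF.fderiv_right (by simp)) p) (diffAt (smooth_Xv L hζ) p)]
  simp only [ContinuousLinearMap.add_apply, ContinuousLinearMap.comp_apply,
    ContinuousLinearMap.flip_apply]
  ring

lemma symm2 {F : VStar m n → ℝ} (hF : ContDiff ℝ (⊤ : ℕ∞) F) (p v w : VStar m n) :
    fderiv ℝ (fderiv ℝ F) p v w = fderiv ℝ (fderiv ℝ F) p w v :=
  second_derivative_symmetric (fun y => (diffAt hF y).hasFDerivAt)
    (diffAt (hF.fderiv_right (by simp)) p).hasFDerivAt v w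

/-- Anchor compatibility for the prolongation: the key commutation formula. -/
lemma aD_bracket (L : CoordLieAlgebroid m (n+1)) {ξ ζ : ASec m n} {F : VStar m n → ℝ}
    (hξ : ContDiff ℝ (⊤ : ℕ∞) ξ) (hζ : ContDiff ℝ (⊤ : ℕ∞) ζ) (hF : ContDiff ℝ (⊤ : ℕ∞) F) (p : VStar m n) :
    aD L (aBracket L ξ ζ) F p = aD L ξ (aD L ζ F) p - aD L ζ (aD L ξ F) p := by
  rw [aD_def L (aBracket L ξ ζ) F p, Xv_bracket L hξ hζ p, map_sub]
  rw [aD_def L ξ (aD L ζ F) p, aD_def L ζ (aD L ξ F) p]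
  rw [fderiv_aD_apply L hζ hF p (Xv L ξ p), fderiv_aD_apply L hξ hF p (Xv L ζ p)]
  have h := symm2 hF p (Xv L ξ p) (Xv L ζ p)
  linarith

lemma smooth_aBracket (L : CoordLieAlgebroid m (n+1)) {ξ ζ : ASec m n}
    (hξ : ContDiff ℝ (⊤ : ℕ∞) ξ) (hζ : ContDiff ℝ (⊤ : ℕ∞) ζ) : ContDiff ℝ (⊤ : ℕ∞) (aBracket L ξ ζ) := by
  unfold aBracket
  refine ContDiff.prodMk (contDiff_pi.2 fun g => ?_) (contDiff_pi.2 fun g => ?_)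
  · exact ((smooth_aD L hξ (smooth_comp1 hζ g)).sub
      (smooth_aD L hζ (smooth_comp1 hξ g))).add
      (ContDiff.sum fun a _ => ContDiff.sum fun b _ =>
        ((smooth_cc L a b g).mul (smooth_comp1 hξ a)).mul (smooth_comp1 hζ b))
  · exact (smooth_aD L hξ (smooth_comp2 hζ g)).sub (smooth_aD L hζ (smooth_comp2 hξ g))

lemma aD_sub (L : CoordLieAlgebroid m (n+1)) (ξ : ASec m n) {F G : VStar m n → ℝ}
    {p : VStar m n} (hF : DifferentiableAt ℝ F p) (hG : DifferentiableAt ℝ G p) :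
    aD L ξ (fun q => F q - G q) p = aD L ξ F p - aD L ξ G p := by
  show fderiv ℝ (fun q => F q - G q) p _ = _
  rw [fderiv_fun_sub hF hG]; rfl

lemma aD_add (L : CoordLieAlgebroid m (n+1)) (ξ : ASec m n) {F G : VStar m n → ℝ}
    {p : VStar m n} (hF : DifferentiableAt ℝ F p) (hG : DifferentiableAt ℝ G p) :
    aD L ξ (fun q => F q + G q) p = aD L ξ F p + aD L ξ G p := by
  show fderiv ℝ (fun q => F q + G q) p _ = _
  rw [fderiv_fun_add hF hG]; rfl

lemma aD_neg (L : CoordLieAlgebroid m (n+1)) (ξ : ASec m n) (F : VStar m n → ℝ)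
    (p : VStar m n) : aD L ξ (fun q => -F q) p = -aD L ξ F p := by
  show fderiv ℝ (fun q => -F q) p _ = _
  rw [fderiv_fun_neg]; rfl

end Aff

namespace Aff

variable {m n : ℕ}

/-- The quadratic structure-function term of the prolongation bracket. -/
def S1 (L : CoordLieAlgebroid m (n+1)) (ξ ζ : ASec m n) (g : Fin (n+1)) :
    VStar m n → ℝ :=
  fun q => ∑ a, ∑ b, L.c q.1 a b g * (ξ q).1 a * (ζ q).1 b

lemma smooth_S1 (L : CoordLieAlgebroid m (n+1)) {ξ ζ : ASec m n}
    (hξ : ContDiff ℝ (⊤ : ℕ∞) ξ) (hζ : ContDiff ℝ (⊤ : ℕ∞) ζ) (g : Fin (n+1)) :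
    ContDiff ℝ (⊤ : ℕ∞) (S1 L ξ ζ g) :=
  ContDiff.sum fun a _ => ContDiff.sum fun b _ =>
    ((smooth_cc L a b g).mul (smooth_comp1 hξ a)).mul (smooth_comp1 hζ b)

lemma aBracket_fst (L : CoordLieAlgebroid m (n+1)) (ξ ζ : ASec m n) (g : Fin (n+1)) :
    (fun q => (aBracket L ξ ζ q).1 g)
      = fun q => aD L ξ (fun r => (ζ r).1 g) q - aD L ζ (fun r => (ξ r).1 g) q
          + S1 L ξ ζ g q := rfl

lemma aBracket_snd (L : CoordLieAlgebroid m (n+1)) (ξ ζ : ASec m n) (g : Fin n) :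
    (fun q => (aBracket L ξ ζ q).2 g)
      = fun q => aD L ξ (fun r => (ζ r).2 g) q - aD L ζ (fun r => (ξ r).2 g) q := rfl

lemma aD_base (L : CoordLieAlgebroid m (n+1)) (ξ : ASec m n) {F : (Fin m → ℝ) → ℝ}
    (p : VStar m n) (hF : DifferentiableAt ℝ F p.1) :
    aD L ξ (fun q => F q.1) p = ∑ e, (ξ p).1 e * ∑ i, L.ρ p.1 e i * pd i F p.1 := by
  show fderiv ℝ (fun q => F q.1) p (Xv L ξ p) = _
  rw [fderiv_comp_fst_apply p hF (Xv L ξ p), fderiv_pi_expand]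
  have : ∀ j, (Xv L ξ p).1 j = ∑ e, (ξ p).1 e * L.ρ p.1 e j := fun j => rfl
  simp only [this, Finset.sum_mul, Finset.mul_sum]
  rw [Finset.sum_comm]
  exact Finset.sum_congr rfl fun e _ => Finset.sum_congr rfl fun j _ => by ring

lemma aD_S1 (L : CoordLieAlgebroid m (n+1)) {ξ ζ : ASec m n} (χ : ASec m n)
    (hξ : ContDiff ℝ (⊤ : ℕ∞) ξ) (hζ : ContDiff ℝ (⊤ : ℕ∞) ζ) (g : Fin (n+1)) (p : VStar m n) :
    aD L χ (S1 L ξ ζ g) p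
      = ∑ a, ∑ b, (aD L χ (fun q => L.c q.1 a b g) p * (ξ p).1 a * (ζ p).1 b
          + L.c p.1 a b g * aD L χ (fun q => (ξ q).1 a) p * (ζ p).1 b
          + L.c p.1 a b g * (ξ p).1 a * aD L χ (fun q => (ζ q).1 b) p) := by
  simp only [aD_def]
  show fderiv ℝ (fun q => ∑ a, ∑ b, L.c q.1 a b g * (ξ q).1 a * (ζ q).1 b) p
      (Xv L χ p) = _
  rw [fderiv_fun_sum (fun a _ => diffAt (ContDiff.sum fun b _ =>
    ((smooth_cc L a b g).mul (smooth_comp1 hξ a)).mul (smooth_comp1 hζ b)) p)]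
  rw [ContinuousLinearMap.sum_apply]
  refine Finset.sum_congr rfl fun a _ => ?_
  rw [fderiv_fun_sum (fun b _ => diffAt
    (((smooth_cc L a b g).mul (smooth_comp1 hξ a)).mul (smooth_comp1 hζ b)) p)]
  rw [ContinuousLinearMap.sum_apply]
  refine Finset.sum_congr rfl fun b _ => ?_
  rw [fderiv_mul_apply (diffAt ((smooth_cc L a b g).mul (smooth_comp1 hξ a)) p)
    (diffAt (smooth_comp1 hζ b) p)]
  rw [fderiv_mul_apply (diffAt (smooth_cc L a b g) p) (diffAt (smooth_comp1 hξ a) p)]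
  ring

end Aff

namespace Aff

variable {m n : ℕ}

lemma sum3_rot' {α β γ : Type*} [Fintype α] [Fintype β] [Fintype γ] (f : α → β → γ → ℝ) :
    ∑ a, ∑ b, ∑ e, f a b e = ∑ e, ∑ a, ∑ b, f a b e :=
  (sum3_rot f).trans (sum3_rot fun b e a => f a b e)

lemma sum4_rot {α β γ δ : Type*} [Fintype α] [Fintype β] [Fintype γ] [Fintype δ]
    (f : α → β → γ → δ → ℝ) :
    ∑ a, ∑ b, ∑ c, ∑ d, f a b c d = ∑ b, ∑ c, ∑ d, ∑ a, f a b c d := by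
  rw [Finset.sum_comm]
  refine Finset.sum_congr rfl fun b _ => ?_
  rw [Finset.sum_comm]
  exact Finset.sum_congr rfl fun c _ => Finset.sum_comm

lemma phi_zero (L : CoordLieAlgebroid m (n+1)) (x : Fin m → ℝ) (g a b e : Fin (n+1)) :
    -((∑ i, L.ρ x a i * pd i (fun x' => L.c x' b e g) x)
        + (∑ i, L.ρ x b i * pd i (fun x' => L.c x' e a g) x)
        + (∑ i, L.ρ x e i * pd i (fun x' => L.c x' a b g) x))
      + ((∑ μ, L.c x μ e g * L.c x a b μ) + (∑ μ, L.c x μ a g * L.c x b e μ)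
        + (∑ μ, L.c x μ b g * L.c x e a μ)) = 0 := by
  have J := L.jacobi x a b e g
  have h1 : ∑ μ, L.c x μ e g * L.c x a b μ = -∑ μ, L.c x a b μ * L.c x e μ g := by
    rw [← Finset.sum_neg_distrib]
    exact Finset.sum_congr rfl fun μ _ => by rw [L.c_antisymm x μ e g]; ring
  have h2 : ∑ μ, L.c x μ a g * L.c x b e μ = -∑ μ, L.c x b e μ * L.c x a μ g := by
    rw [← Finset.sum_neg_distrib]
    exact Finset.sum_congr rfl fun μ _ => by rw [L.c_antisymm x μ a g]; ring
  have h3 : ∑ μ, L.c x μ b g * L.c x e a μ = -∑ μ, L.c x e a μ * L.c x b μ g := by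
    rw [← Finset.sum_neg_distrib]
    exact Finset.sum_congr rfl fun μ _ => by rw [L.c_antisymm x μ b g]; ring
  rw [h1, h2, h3]
  linarith

lemma alg_first (L : CoordLieAlgebroid m (n+1)) (x : Fin m → ℝ) (g : Fin (n+1))
    (u v w P Q R S T U : Fin (n+1) → ℝ) :
    (-(∑ a, ∑ b, L.c x a b g * T a * v b) - (∑ a, ∑ b, L.c x a b g * u a * S b)
      + ∑ a, ∑ b, L.c x a b g * (P a - Q a) * w b)
    + (-(∑ a, ∑ b, L.c x a b g * P a * w b) - (∑ a, ∑ b, L.c x a b g * v a * U b)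
      + ∑ a, ∑ b, L.c x a b g * (R a - S a) * u b)
    + (-(∑ a, ∑ b, L.c x a b g * R a * u b) - (∑ a, ∑ b, L.c x a b g * w a * Q b)
      + ∑ a, ∑ b, L.c x a b g * (T a - U a) * v b) = 0 := by
  have sw : ∀ (f h : Fin (n+1) → ℝ), ∑ a, ∑ b, L.c x a b g * f a * h b
      = -∑ a, ∑ b, L.c x a b g * h a * f b := by
    intro f h
    have key : ∀ a b : Fin (n+1), L.c x a b g * h a * f b
        = -(L.c x b a g * f b * h a) := fun a b => by rw [L.c_antisymm x a b g]; ring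
    simp only [key, Finset.sum_neg_distrib, neg_neg]
    exact Finset.sum_comm
  simp only [mul_sub, sub_mul, Finset.sum_sub_distrib]
  rw [sw u S, sw w Q, sw v U]
  ring

lemma alg_core (L : CoordLieAlgebroid m (n+1)) (x : Fin m → ℝ) (g : Fin (n+1))
    (u v w : Fin (n+1) → ℝ) :
    (-(∑ a, ∑ b, (∑ e, w e * ∑ i, L.ρ x e i * pd i (fun x' => L.c x' a b g) x) * u a * v b)
      + ∑ a, ∑ b, L.c x a b g * (∑ c', ∑ d, L.c x c' d a * u c' * v d) * w b)
    + (-(∑ a, ∑ b, (∑ e, u e * ∑ i, L.ρ x e i * pd i (fun x' => L.c x' a b g) x) * v a * w b)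
      + ∑ a, ∑ b, L.c x a b g * (∑ c', ∑ d, L.c x c' d a * v c' * w d) * u b)
    + (-(∑ a, ∑ b, (∑ e, v e * ∑ i, L.ρ x e i * pd i (fun x' => L.c x' a b g) x) * w a * u b)
      + ∑ a, ∑ b, L.c x a b g * (∑ c', ∑ d, L.c x c' d a * w c' * u d) * v b) = 0 := by
  -- derivative (Kf) canonicalisations
  have c1 : ∑ a, ∑ b, (∑ e, w e * ∑ i, L.ρ x e i * pd i (fun x' => L.c x' a b g) x) * u a * v b
      = ∑ a, ∑ b, ∑ e, u a * v b * w e * ∑ i, L.ρ x e i * pd i (fun x' => L.c x' a b g) x := by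
    refine Finset.sum_congr rfl fun a _ => Finset.sum_congr rfl fun b _ => ?_
    simp only [Finset.sum_mul]
    exact Finset.sum_congr rfl fun e _ => by ring
  have c2 : ∑ a, ∑ b, (∑ e, u e * ∑ i, L.ρ x e i * pd i (fun x' => L.c x' a b g) x) * v a * w b
      = ∑ a, ∑ b, ∑ e, u a * v b * w e * ∑ i, L.ρ x a i * pd i (fun x' => L.c x' b e g) x := by
    have flat : ∑ a, ∑ b, (∑ e, u e * ∑ i, L.ρ x e i * pd i (fun x' => L.c x' a b g) x) * v a * w b
        = ∑ a, ∑ b, ∑ e, (u e * v a * w b * ∑ i, L.ρ x e i * pd i (fun x' => L.c x' a b g) x) := by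
      refine Finset.sum_congr rfl fun a _ => Finset.sum_congr rfl fun b _ => ?_
      simp only [Finset.sum_mul]
      exact Finset.sum_congr rfl fun e _ => by ring
    rw [flat, sum3_rot' fun a b e => (u e * v a * w b * ∑ i, L.ρ x e i * pd i (fun x' => L.c x' a b g) x)]
  have c3 : ∑ a, ∑ b, (∑ e, v e * ∑ i, L.ρ x e i * pd i (fun x' => L.c x' a b g) x) * w a * u b
      = ∑ a, ∑ b, ∑ e, u a * v b * w e * ∑ i, L.ρ x b i * pd i (fun x' => L.c x' e a g) x := by
    have flat : ∑ a, ∑ b, (∑ e, v e * ∑ i, L.ρ x e i * pd i (fun x' => L.c x' a b g) x) * w a * u b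
        = ∑ a, ∑ b, ∑ e, (v e * w a * u b * ∑ i, L.ρ x e i * pd i (fun x' => L.c x' a b g) x) := by
      refine Finset.sum_congr rfl fun a _ => Finset.sum_congr rfl fun b _ => ?_
      simp only [Finset.sum_mul]
      exact Finset.sum_congr rfl fun e _ => by ring
    rw [flat, sum3_rot fun a b e => (v e * w a * u b * ∑ i, L.ρ x e i * pd i (fun x' => L.c x' a b g) x)]
    exact Finset.sum_congr rfl fun a _ => Finset.sum_congr rfl fun b _ =>
      Finset.sum_congr rfl fun e _ => by ring
  -- quadratic canonicalisations
  have q1 : ∑ a, ∑ b, L.c x a b g * (∑ c', ∑ d, L.c x c' d a * u c' * v d) * w b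
      = ∑ a, ∑ b, ∑ e, u a * v b * w e * ∑ μ, L.c x μ e g * L.c x a b μ := by
    have flat : ∑ a, ∑ b, L.c x a b g * (∑ c', ∑ d, L.c x c' d a * u c' * v d) * w b
        = ∑ μ, ∑ e, ∑ a, ∑ b, (u a * v b * w e * (L.c x μ e g * L.c x a b μ)) := by
      refine Finset.sum_congr rfl fun μ _ => Finset.sum_congr rfl fun e _ => ?_
      simp only [Finset.sum_mul, Finset.mul_sum]
      exact Finset.sum_congr rfl fun a _ => Finset.sum_congr rfl fun b _ => by ring
    rw [flat, sum4_rot fun μ e a b => (u a * v b * w e * (L.c x μ e g * L.c x a b μ)),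
      sum4_rot fun e a b μ => (u a * v b * w e * (L.c x μ e g * L.c x a b μ))]
    refine Finset.sum_congr rfl fun a _ => Finset.sum_congr rfl fun b _ => ?_
    rw [Finset.sum_comm]
    refine Finset.sum_congr rfl fun e _ => ?_
    rw [Finset.mul_sum]
  have q2 : ∑ a, ∑ b, L.c x a b g * (∑ c', ∑ d, L.c x c' d a * v c' * w d) * u b
      = ∑ a, ∑ b, ∑ e, u a * v b * w e * ∑ μ, L.c x μ a g * L.c x b e μ := by
    have flat : ∑ a, ∑ b, L.c x a b g * (∑ c', ∑ d, L.c x c' d a * v c' * w d) * u b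
        = ∑ μ, ∑ a, ∑ b, ∑ e, (u a * v b * w e * (L.c x μ a g * L.c x b e μ)) := by
      refine Finset.sum_congr rfl fun μ _ => Finset.sum_congr rfl fun a _ => ?_
      simp only [Finset.sum_mul, Finset.mul_sum]
      exact Finset.sum_congr rfl fun b _ => Finset.sum_congr rfl fun e _ => by ring
    rw [flat, sum4_rot fun μ a b e => (u a * v b * w e * (L.c x μ a g * L.c x b e μ))]
    refine Finset.sum_congr rfl fun a _ => Finset.sum_congr rfl fun b _ =>
      Finset.sum_congr rfl fun e _ => ?_
    rw [Finset.mul_sum]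
  have q3 : ∑ a, ∑ b, L.c x a b g * (∑ c', ∑ d, L.c x c' d a * w c' * u d) * v b
      = ∑ a, ∑ b, ∑ e, u a * v b * w e * ∑ μ, L.c x μ b g * L.c x e a μ := by
    have flat : ∑ a, ∑ b, L.c x a b g * (∑ c', ∑ d, L.c x c' d a * w c' * u d) * v b
        = ∑ μ, ∑ b, ∑ e, ∑ a, (u a * v b * w e * (L.c x μ b g * L.c x e a μ)) := by
      refine Finset.sum_congr rfl fun μ _ => Finset.sum_congr rfl fun b _ => ?_
      simp only [Finset.sum_mul, Finset.mul_sum]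
      exact Finset.sum_congr rfl fun e _ => Finset.sum_congr rfl fun a _ => by ring
    rw [flat, sum4_rot fun μ b e a => (u a * v b * w e * (L.c x μ b g * L.c x e a μ))]
    rw [sum3_rot' fun b e a => ∑ μ, (u a * v b * w e * (L.c x μ b g * L.c x e a μ))]
    refine Finset.sum_congr rfl fun a _ => Finset.sum_congr rfl fun b _ =>
      Finset.sum_congr rfl fun e _ => ?_
    rw [Finset.mul_sum]
  rw [c1, c2, c3, q1, q2, q3]
  simp only [← Finset.sum_neg_distrib, ← Finset.sum_add_distrib]
  refine Finset.sum_eq_zero fun a _ => Finset.sum_eq_zero fun b _ =>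
    Finset.sum_eq_zero fun e _ => ?_
  have := phi_zero L x g a b e
  linear_combination (u a * v b * w e) * this

end Aff

namespace Aff

variable {m n : ℕ}

lemma jacobi_sum (L : CoordLieAlgebroid m (n+1)) {ξ ζ χ : ASec m n}
    (hξ : ContDiff ℝ (⊤ : ℕ∞) ξ) (hζ : ContDiff ℝ (⊤ : ℕ∞) ζ) (hχ : ContDiff ℝ (⊤ : ℕ∞) χ) (p : VStar m n) :
    aBracket L (aBracket L ξ ζ) χ p + aBracket L (aBracket L ζ χ) ξ p
      + aBracket L (aBracket L χ ξ) ζ p = 0 := by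
  refine Prod.ext ?_ ?_ <;> funext g
  · -- first components
    simp only [Prod.fst_add, Pi.add_apply, Prod.fst_zero, Pi.zero_apply]
    have e1 : (aBracket L (aBracket L ξ ζ) χ p).1 g
        = aD L (aBracket L ξ ζ) (fun r => (χ r).1 g) p
          - aD L χ (fun r => (aBracket L ξ ζ r).1 g) p
          + S1 L (aBracket L ξ ζ) χ g p := rfl
    have e2 : (aBracket L (aBracket L ζ χ) ξ p).1 g
        = aD L (aBracket L ζ χ) (fun r => (ξ r).1 g) p
          - aD L ξ (fun r => (aBracket L ζ χ r).1 g) p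
          + S1 L (aBracket L ζ χ) ξ g p := rfl
    have e3 : (aBracket L (aBracket L χ ξ) ζ p).1 g
        = aD L (aBracket L χ ξ) (fun r => (ζ r).1 g) p
          - aD L ζ (fun r => (aBracket L χ ξ r).1 g) p
          + S1 L (aBracket L χ ξ) ζ g p := rfl
    rw [e1, e2, e3]
    rw [aD_bracket L hξ hζ (smooth_comp1 hχ g) p,
        aD_bracket L hζ hχ (smooth_comp1 hξ g) p,
        aD_bracket L hχ hξ (smooth_comp1 hζ g) p]
    -- middle terms
    have mid : ∀ (σ τ κ : ASec m n), ContDiff ℝ (⊤ : ℕ∞) σ → ContDiff ℝ (⊤ : ℕ∞) τ → ContDiff ℝ (⊤ : ℕ∞) κ →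
        aD L κ (fun r => (aBracket L σ τ r).1 g) p
          = aD L κ (aD L σ (fun r => (τ r).1 g)) p
            - aD L κ (aD L τ (fun r => (σ r).1 g)) p + aD L κ (S1 L σ τ g) p := by
      intro σ τ κ hσ hτ hκ
      rw [aBracket_fst L σ τ g]
      rw [aD_add L κ (diffAt ((smooth_aD L hσ (smooth_comp1 hτ g)).sub
            (smooth_aD L hτ (smooth_comp1 hσ g))) p) (diffAt (smooth_S1 L hσ hτ g) p)]
      rw [aD_sub L κ (diffAt (smooth_aD L hσ (smooth_comp1 hτ g)) p)
            (diffAt (smooth_aD L hτ (smooth_comp1 hσ g)) p)]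
    rw [mid ξ ζ χ hξ hζ hχ, mid ζ χ ξ hζ hχ hξ, mid χ ξ ζ hχ hξ hζ]
    -- expand the derivatives of the structure terms
    rw [aD_S1 L χ hξ hζ g p, aD_S1 L ξ hζ hχ g p, aD_S1 L ζ hχ hξ g p]
    have hDc : ∀ (σ : ASec m n) (a b : Fin (n+1)), aD L σ (fun q => L.c q.1 a b g) p
        = ∑ e, (σ p).1 e * ∑ i, L.ρ p.1 e i * pd i (fun x' => L.c x' a b g) p.1 :=
      fun σ a b => aD_base L σ p (diffAt (L.smooth_c a b g) p.1)
    simp only [hDc]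
    -- expand the structure terms of the iterated brackets
    have v : ∀ (σ τ κ : ASec m n), S1 L (aBracket L σ τ) κ g p
        = (∑ a, ∑ b, L.c p.1 a b g * (aD L σ (fun r => (τ r).1 a) p
              - aD L τ (fun r => (σ r).1 a) p) * (κ p).1 b)
          + ∑ a, ∑ b, L.c p.1 a b g
              * (∑ c', ∑ d, L.c p.1 c' d a * (σ p).1 c' * (τ p).1 d) * (κ p).1 b := by
      intro σ τ κ
      unfold S1
      rw [← Finset.sum_add_distrib]
      refine Finset.sum_congr rfl fun a _ => ?_
      rw [← Finset.sum_add_distrib]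
      refine Finset.sum_congr rfl fun b _ => ?_
      have hb : ((aBracket L σ τ) p).1 a
          = aD L σ (fun r => (τ r).1 a) p - aD L τ (fun r => (σ r).1 a) p
            + ∑ c', ∑ d, L.c p.1 c' d a * (σ p).1 c' * (τ p).1 d := rfl
      rw [hb]; ring
    rw [v ξ ζ χ, v ζ χ ξ, v χ ξ ζ]
    -- split the three-term sums produced by aD_S1
    simp only [Finset.sum_add_distrib]
    have AF := alg_first L p.1 g (fun a => (ξ p).1 a) (fun a => (ζ p).1 a)
      (fun a => (χ p).1 a)
      (fun a => aD L ξ (fun r => (ζ r).1 a) p) (fun a => aD L ζ (fun r => (ξ r).1 a) p)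
      (fun a => aD L ζ (fun r => (χ r).1 a) p) (fun a => aD L χ (fun r => (ζ r).1 a) p)
      (fun a => aD L χ (fun r => (ξ r).1 a) p) (fun a => aD L ξ (fun r => (χ r).1 a) p)
    have AC := alg_core L p.1 g (fun a => (ξ p).1 a) (fun a => (ζ p).1 a)
      (fun a => (χ p).1 a)
    beta_reduce at AF AC
    linarith [AF, AC]
  · -- second components
    simp only [Prod.snd_add, Pi.add_apply, Prod.snd_zero, Pi.zero_apply]
    have e1 : (aBracket L (aBracket L ξ ζ) χ p).2 g
        = aD L (aBracket L ξ ζ) (fun r => (χ r).2 g) p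
          - aD L χ (fun r => (aBracket L ξ ζ r).2 g) p := rfl
    have e2 : (aBracket L (aBracket L ζ χ) ξ p).2 g
        = aD L (aBracket L ζ χ) (fun r => (ξ r).2 g) p
          - aD L ξ (fun r => (aBracket L ζ χ r).2 g) p := rfl
    have e3 : (aBracket L (aBracket L χ ξ) ζ p).2 g
        = aD L (aBracket L χ ξ) (fun r => (ζ r).2 g) p
          - aD L ζ (fun r => (aBracket L χ ξ r).2 g) p := rfl
    rw [e1, e2, e3]
    rw [aD_bracket L hξ hζ (smooth_comp2 hχ g) p,
        aD_bracket L hζ hχ (smooth_comp2 hξ g) p,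
        aD_bracket L hχ hξ (smooth_comp2 hζ g) p]
    have mid : ∀ (σ τ κ : ASec m n), ContDiff ℝ (⊤ : ℕ∞) σ → ContDiff ℝ (⊤ : ℕ∞) τ → ContDiff ℝ (⊤ : ℕ∞) κ →
        aD L κ (fun r => (aBracket L σ τ r).2 g) p
          = aD L κ (aD L σ (fun r => (τ r).2 g)) p
            - aD L κ (aD L τ (fun r => (σ r).2 g)) p := by
      intro σ τ κ hσ hτ hκ
      rw [aBracket_snd L σ τ g]
      rw [aD_sub L κ (diffAt (smooth_aD L hσ (smooth_comp2 hτ g)) p)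
            (diffAt (smooth_aD L hτ (smooth_comp2 hσ g)) p)]
    rw [mid ξ ζ χ hξ hζ hχ, mid ζ χ ξ hζ hχ hξ, mid χ ξ ζ hχ hξ hζ]
    ring

end Aff

namespace Aff

variable {m n : ℕ}

lemma csum_swap (L : CoordLieAlgebroid m (n+1)) (x : Fin m → ℝ) (g : Fin (n+1))
    (f h : Fin (n+1) → ℝ) : ∑ a, ∑ b, L.c x a b g * f a * h b
      = -∑ a, ∑ b, L.c x a b g * h a * f b := by
  have key : ∀ a b : Fin (n+1), L.c x a b g * h a * f b
      = -(L.c x b a g * f b * h a) := fun a b => by rw [L.c_antisymm x a b g]; ring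
  simp only [key, Finset.sum_neg_distrib, neg_neg]
  exact Finset.sum_comm

lemma aD_const (L : CoordLieAlgebroid m (n+1)) (σ : ASec m n) (c : ℝ) (p : VStar m n) :
    aD L σ (fun _ => c) p = 0 := by
  show fderiv ℝ (fun _ => c) p _ = 0
  rw [fderiv_fun_const]
  rfl

lemma fderiv_snd_apply (β : Fin n) (p v : VStar m n) :
    fderiv ℝ (fun q : VStar m n => q.2 β) p v = v.2 β := by
  rw [show (fun q : VStar m n => q.2 β)
      = ⇑((ContinuousLinearMap.proj β).comp
          (ContinuousLinearMap.snd ℝ (Fin m → ℝ) (Fin n → ℝ))) from rfl,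
    ContinuousLinearMap.fderiv]
  rfl

lemma diff_snd_coord (β : Fin n) (p : VStar m n) :
    DifferentiableAt ℝ (fun q : VStar m n => q.2 β) p :=
  ((ContinuousLinearMap.proj β).comp
    (ContinuousLinearMap.snd ℝ (Fin m → ℝ) (Fin n → ℝ))).differentiableAt

lemma aBracket_antisymm (L : CoordLieAlgebroid m (n+1)) (ξ ζ : ASec m n) :
    aBracket L ξ ζ = fun p => -aBracket L ζ ξ p := by
  funext p
  refine Prod.ext ?_ ?_ <;> funext g
  · show aD L ξ (fun r => (ζ r).1 g) p - aD L ζ (fun r => (ξ r).1 g) p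
        + ∑ a, ∑ b, L.c p.1 a b g * (ξ p).1 a * (ζ p).1 b
      = -(aD L ζ (fun r => (ξ r).1 g) p - aD L ξ (fun r => (ζ r).1 g) p
        + ∑ a, ∑ b, L.c p.1 a b g * (ζ p).1 a * (ξ p).1 b)
    rw [csum_swap L p.1 g (fun a => (ξ p).1 a) (fun a => (ζ p).1 a)]
    ring
  · show aD L ξ (fun r => (ζ r).2 g) p - aD L ζ (fun r => (ξ r).2 g) p
      = -(aD L ζ (fun r => (ξ r).2 g) p - aD L ξ (fun r => (ζ r).2 g) p)
    ring

lemma avec_neg (L : CoordLieAlgebroid m (n+1)) (p : VStar m n) (w : AFib n) :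
    avec L p (-w) = -avec L p w := by
  refine Prod.ext ?_ ?_
  · funext i
    show ∑ a, (-w).1 a * L.ρ p.1 a i = -((fun i => ∑ a, w.1 a * L.ρ p.1 a i) i)
    have : ∀ a : Fin (n+1), (-w).1 a = -(w.1 a) := fun a => rfl
    simp only [this, neg_mul, Finset.sum_neg_distrib]
  · rfl

lemma aD_neg_sec (L : CoordLieAlgebroid m (n+1)) (σ : ASec m n) (F : VStar m n → ℝ)
    (p : VStar m n) : aD L (fun q => -σ q) F p = -aD L σ F p := by
  show fderiv ℝ F p (avec L p (-σ p)) = -fderiv ℝ F p (avec L p (σ p))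
  rw [avec_neg, map_neg]

lemma aBracket_neg_left (L : CoordLieAlgebroid m (n+1)) (σ τ : ASec m n) (p : VStar m n) :
    aBracket L (fun q => -σ q) τ p = -aBracket L σ τ p := by
  refine Prod.ext ?_ ?_ <;> funext g
  · show aD L (fun q => -σ q) (fun r => (τ r).1 g) p
        - aD L τ (fun r => (-σ r).1 g) p
        + ∑ a, ∑ b, L.c p.1 a b g * (-σ p).1 a * (τ p).1 b
      = -(aD L σ (fun r => (τ r).1 g) p - aD L τ (fun r => (σ r).1 g) p
        + ∑ a, ∑ b, L.c p.1 a b g * (σ p).1 a * (τ p).1 b)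
    rw [aD_neg_sec,
      show (fun r => (-σ r).1 g) = (fun r => -((σ r).1 g)) from rfl, aD_neg]
    have : ∀ a : Fin (n+1), (-σ p).1 a = -((σ p).1 a) := fun a => rfl
    simp only [this, neg_mul, mul_neg, Finset.sum_neg_distrib]
    ring
  · show aD L (fun q => -σ q) (fun r => (τ r).2 g) p
        - aD L τ (fun r => (-σ r).2 g) p
      = -(aD L σ (fun r => (τ r).2 g) p - aD L τ (fun r => (σ r).2 g) p)
    rw [aD_neg_sec,
      show (fun r => (-σ r).2 g) = (fun r => -((σ r).2 g)) from rfl, aD_neg]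
    ring

/-- Fibrewise value of `λ_h`. -/
def lamv (H : VStar m n → ℝ) (p : VStar m n) (w : AFib n) : ℝ :=
  -H p * w.1 0 + ∑ β, p.2 β * w.1 β.succ

lemma lambdah_lamv (H : VStar m n → ℝ) (σ : ASec m n) (p : VStar m n) :
    lambdah H σ p = lamv H p (σ p) := rfl

lemma lamv_add (H : VStar m n → ℝ) (p : VStar m n) (w w' : AFib n) :
    lamv H p (w + w') = lamv H p w + lamv H p w' := by
  unfold lamv
  have h0 : (w + w').1 0 = w.1 0 + w'.1 0 := rfl
  have hβ : ∀ β : Fin n, (w + w').1 β.succ = w.1 β.succ + w'.1 β.succ := fun β => rfl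
  simp only [h0, hβ, mul_add, Finset.sum_add_distrib]
  ring

lemma lamv_neg (H : VStar m n → ℝ) (p : VStar m n) (w : AFib n) :
    lamv H p (-w) = -lamv H p w := by
  unfold lamv
  have h0 : (-w).1 0 = -(w.1 0) := rfl
  have hβ : ∀ β : Fin n, (-w).1 β.succ = -(w.1 β.succ) := fun β => rfl
  simp only [h0, hβ, mul_neg, Finset.sum_neg_distrib]
  ring

lemma lamv_zero (H : VStar m n → ℝ) (p : VStar m n) : lamv H p 0 = 0 := by
  unfold lamv
  have h0 : (0 : AFib n).1 0 = 0 := rfl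
  have hβ : ∀ β : Fin n, (0 : AFib n).1 β.succ = 0 := fun β => rfl
  simp [h0, hβ]

lemma smooth_lambdah {H : VStar m n → ℝ} (hH : ContDiff ℝ (⊤ : ℕ∞) H) {σ : ASec m n}
    (hσ : ContDiff ℝ (⊤ : ℕ∞) σ) : ContDiff ℝ (⊤ : ℕ∞) (lambdah H σ) := by
  unfold lambdah
  exact ((hH.neg).mul (smooth_comp1 hσ 0)).add
    (ContDiff.sum fun β _ =>
      ((contDiff_pi.1 contDiff_snd β).mul (smooth_comp1 hσ β.succ)))

end Aff

namespace Aff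

variable {m n : ℕ}

lemma aD_Omegah (L : CoordLieAlgebroid m (n+1)) {H : VStar m n → ℝ}
    (hH : ContDiff ℝ (⊤ : ℕ∞) H) {ζ χ : ASec m n} (hζ : ContDiff ℝ (⊤ : ℕ∞) ζ) (hχ : ContDiff ℝ (⊤ : ℕ∞) χ)
    (ξ : ASec m n) (p : VStar m n) :
    aD L ξ (Omegah L H ζ χ) p
      = -(aD L ξ (aD L ζ (lambdah H χ)) p - aD L ξ (aD L χ (lambdah H ζ)) p
          - aD L ξ (lambdah H (aBracket L ζ χ)) p) := by
  have h1 : ContDiff ℝ (⊤ : ℕ∞) (aD L ζ (lambdah H χ)) := smooth_aD L hζ (smooth_lambdah hH hχ)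
  have h2 : ContDiff ℝ (⊤ : ℕ∞) (aD L χ (lambdah H ζ)) := smooth_aD L hχ (smooth_lambdah hH hζ)
  have h3 : ContDiff ℝ (⊤ : ℕ∞) (lambdah H (aBracket L ζ χ)) :=
    smooth_lambdah hH (smooth_aBracket L hζ hχ)
  rw [show Omegah L H ζ χ = fun q => -(aD L ζ (lambdah H χ) q - aD L χ (lambdah H ζ) q
      - lambdah H (aBracket L ζ χ) q) from rfl]
  rw [aD_neg]
  rw [aD_sub L ξ (diffAt (h1.sub h2) p) (diffAt h3 p)]
  rw [aD_sub L ξ (diffAt h1 p) (diffAt h2 p)]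

lemma OmegahPt_formula (L : CoordLieAlgebroid m (n+1)) (hc0 : ∀ x a b, L.c x a b 0 = 0)
    {H : VStar m n → ℝ} (hH : ContDiff ℝ (⊤ : ℕ∞) H) (p : VStar m n) (w w' : AFib n)
    (hw : w.1 0 = 0) (hw' : w'.1 0 = 0) :
    OmegahPt L H p w w'
      = -(∑ β, w.2 β * w'.1 β.succ) + (∑ β, w'.2 β * w.1 β.succ)
        + ∑ β, p.2 β * ∑ a, ∑ b, L.c p.1 a b β.succ * w.1 a * w'.1 b := by
  have key : ∀ u u' : AFib n, u'.1 0 = 0 → aD L (fun _ => u) (lambdah H (fun _ => u')) p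
      = ∑ β, u.2 β * u'.1 β.succ := by
    intro u u' hu'
    show fderiv ℝ (fun q => -H q * u'.1 0 + ∑ β, q.2 β * u'.1 β.succ) p (avec L p u) = _
    have d1 : DifferentiableAt ℝ (fun q : VStar m n => -H q * u'.1 0) p :=
      ((diffAt hH p).neg).mul_const _
    have d2 : DifferentiableAt ℝ (fun q : VStar m n => ∑ β, q.2 β * u'.1 β.succ) p :=
      DifferentiableAt.fun_sum fun β _ => (diff_snd_coord β p).mul_const _
    rw [fderiv_fun_add d1 d2, ContinuousLinearMap.add_apply]
    rw [fderiv_mul_const (c := fun q => -H q) ((diffAt hH p).neg)]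
    rw [fderiv_fun_sum (fun β _ => (diff_snd_coord β p).mul_const _)]
    simp only [ContinuousLinearMap.smul_apply, ContinuousLinearMap.sum_apply, smul_eq_mul]
    rw [hu']
    have hterm : ∀ β : Fin n,
        fderiv ℝ (fun q : VStar m n => q.2 β * u'.1 β.succ) p (avec L p u)
          = u.2 β * u'.1 β.succ := by
      intro β
      rw [fderiv_mul_const (diff_snd_coord β p)]
      simp only [ContinuousLinearMap.smul_apply, smul_eq_mul]
      rw [fderiv_snd_apply]
      show u'.1 β.succ * u.2 β = _
      ring
    simp only [hterm]
    simp
  have hbr : lambdah H (aBracket L (fun _ => w) (fun _ => w')) p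
      = ∑ β, p.2 β * ∑ a, ∑ b, L.c p.1 a b β.succ * w.1 a * w'.1 b := by
    have hb1 : ∀ g : Fin (n+1), (aBracket L (fun _ => w) (fun _ => w') p).1 g
        = ∑ a, ∑ b, L.c p.1 a b g * w.1 a * w'.1 b := by
      intro g
      show aD L (fun _ => w) (fun _ => w'.1 g) p - aD L (fun _ => w') (fun _ => w.1 g) p
          + ∑ a, ∑ b, L.c p.1 a b g * w.1 a * w'.1 b = _
      rw [aD_const, aD_const]
      ring
    show -H p * (aBracket L (fun _ => w) (fun _ => w') p).1 0
        + ∑ β, p.2 β * (aBracket L (fun _ => w) (fun _ => w') p).1 β.succ = _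
    simp only [hb1]
    simp [hc0]
  have main : OmegahPt L H p w w'
      = -(aD L (fun _ => w) (lambdah H (fun _ => w')) p
          - aD L (fun _ => w') (lambdah H (fun _ => w)) p
          - lambdah H (aBracket L (fun _ => w) (fun _ => w')) p) := rfl
  rw [main, key w w' hw', key w' w hw, hbr]
  ring

end Aff
/-- let `h : V* → A⁺` be a Hamiltonian section, locally
`h(x,y) = (x, −H(x,y), y)`, let `λ_h = (Th,h)^*(λ_Ã)`, `Ω_h = (Th,h)^*(Ω_Ã)` on the
prolongation `T^Ã V* → V*` and `η(ã,X) = 1_A(ã)`. Then `(Ω_h, η)` is a cosymplectic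
structure on `T^Ã V*`: `(η ∧ Ω_h^n)(α) ≠ 0` for all `α ∈ V*` (equivalently, since
`η = ẽ^0 ≠ 0` and `ker η` has even dimension `2n`, the restriction of `Ω_h` to
`ker η` is nondegenerate at each point), `d^{T^Ã V*} η = 0`, and `d^{T^Ã V*} Ω_h = 0`. -/
theorem cosymplectic_structure {m n : ℕ} (L : CoordLieAlgebroid m (n + 1))
    (hc0 : ∀ x a b, L.c x a b 0 = 0)
    (H : VStar m n → ℝ) (hH : ContDiff ℝ (⊤ : ℕ∞) H) :
    -- η ∧ Ω_h^n ≠ 0 everywhere: Ω_h is nondegenerate on ker η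
    (∀ p : VStar m n, ∀ w : AFib n, w.1 0 = 0 →
        (∀ w' : AFib n, w'.1 0 = 0 → OmegahPt L H p w w' = 0) → w = 0)
    -- d η = 0
    ∧ (∀ ξ ζ : ASec m n, ContDiff ℝ (⊤ : ℕ∞) ξ → ContDiff ℝ (⊤ : ℕ∞) ζ → ∀ p : VStar m n,
        aD L ξ (etaSec ζ) p - aD L ζ (etaSec ξ) p - etaSec (aBracket L ξ ζ) p = 0)
    -- d Ω_h = 0
    ∧ (∀ ξ ζ χ : ASec m n, ContDiff ℝ (⊤ : ℕ∞) ξ → ContDiff ℝ (⊤ : ℕ∞) ζ → ContDiff ℝ (⊤ : ℕ∞) χ →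
        ∀ p : VStar m n,
          aD L ξ (Omegah L H ζ χ) p - aD L ζ (Omegah L H ξ χ) p
            + aD L χ (Omegah L H ξ ζ) p
            - Omegah L H (aBracket L ξ ζ) χ p + Omegah L H (aBracket L ξ χ) ζ p
            - Omegah L H (aBracket L ζ χ) ξ p = 0) := by
  refine ⟨?_, ?_, ?_⟩
  · -- nondegeneracy of Ω_h on ker η
    intro p w hw0 hperp
    have h1 : ∀ γ : Fin n, w.1 γ.succ = 0 := by
      intro γ
      have h := hperp ((0 : Fin (n+1) → ℝ), Pi.single γ 1) rfl
      rw [OmegahPt_formula L hc0 hH p w _ hw0 rfl] at h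
      simpa [Pi.single_apply] using h
    have hw1 : w.1 = 0 := funext fun a => Fin.cases hw0 h1 a
    have h2 : ∀ γ : Fin n, w.2 γ = 0 := by
      intro γ
      have hz : (Pi.single γ.succ 1 : Fin (n+1) → ℝ) 0 = 0 := by
        simp [Pi.single_apply, (Fin.succ_ne_zero γ).symm]
      have h := hperp (Pi.single γ.succ 1, (0 : Fin n → ℝ)) hz
      rw [OmegahPt_formula L hc0 hH p w _ hw0 hz] at h
      simpa [hw1, Pi.single_apply, Fin.succ_inj] using h
    exact Prod.ext hw1 (funext h2)
  · -- d η = 0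
    intro ξ ζ hξ hζ p
    have hb : etaSec (aBracket L ξ ζ) p
        = aD L ξ (etaSec ζ) p - aD L ζ (etaSec ξ) p
          + ∑ a, ∑ b, L.c p.1 a b 0 * (ξ p).1 a * (ζ p).1 b := rfl
    rw [hb]
    simp [hc0]
  · -- d Ω_h = 0
    intro ξ ζ χ hξ hζ hχ p
    rw [aD_Omegah L hH hζ hχ ξ p, aD_Omegah L hH hξ hχ ζ p, aD_Omegah L hH hξ hζ χ p]
    rw [show Omegah L H (aBracket L ξ ζ) χ p
        = -(aD L (aBracket L ξ ζ) (lambdah H χ) p - aD L χ (lambdah H (aBracket L ξ ζ)) p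
            - lambdah H (aBracket L (aBracket L ξ ζ) χ) p) from rfl]
    rw [show Omegah L H (aBracket L ξ χ) ζ p
        = -(aD L (aBracket L ξ χ) (lambdah H ζ) p - aD L ζ (lambdah H (aBracket L ξ χ)) p
            - lambdah H (aBracket L (aBracket L ξ χ) ζ) p) from rfl]
    rw [show Omegah L H (aBracket L ζ χ) ξ p
        = -(aD L (aBracket L ζ χ) (lambdah H ξ) p - aD L ξ (lambdah H (aBracket L ζ χ)) p
            - lambdah H (aBracket L (aBracket L ζ χ) ξ) p) from rfl]
    rw [aD_bracket L hξ hζ (smooth_lambdah hH hχ) p,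
        aD_bracket L hξ hχ (smooth_lambdah hH hζ) p,
        aD_bracket L hζ hχ (smooth_lambdah hH hξ) p]
    have anti : lambdah H (aBracket L (aBracket L ξ χ) ζ) p
        = -lambdah H (aBracket L (aBracket L χ ξ) ζ) p := by
      rw [aBracket_antisymm L ξ χ]
      calc lamv H p (aBracket L (fun q => -aBracket L χ ξ q) ζ p)
          = lamv H p (-aBracket L (aBracket L χ ξ) ζ p) := by rw [aBracket_neg_left]
        _ = -lamv H p (aBracket L (aBracket L χ ξ) ζ p) := lamv_neg H p _
    have hsum : lambdah H (aBracket L (aBracket L ξ ζ) χ) p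
        + lambdah H (aBracket L (aBracket L ζ χ) ξ) p
        + lambdah H (aBracket L (aBracket L χ ξ) ζ) p = 0 := by
      rw [lambdah_lamv, lambdah_lamv, lambdah_lamv, ← lamv_add, ← lamv_add,
        jacobi_sum L hξ hζ hχ p, lamv_zero]
    linarith [anti, hsum]
end
end
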